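/- arXiv:math/0509372 — 8 statements merged into one kernel-verified Lean document; each statement's English description precedes it below -/
import Mathlib

section
/- Let n ≥ 2 be an integer, R > 0 and φ₀ ∈ ℝ. Then the initial value problem φ'(r) = (1+φ(r)²)(1 − (n−1)φ(r)/r) for r ≥ R with φ(R) = φ₀ has a unique C^∞ solution φ defined on the whole interval [R,∞). -/
noncomputable section
open Set Filter

def fR (c r x : ℝ) : ℝ := (1 + x ^ 2) * (1 - c * x / r)
def FC (c : ℝ) (z w : ℂ) : ℂ := (1 + w ^ 2) * (1 - (c : ℂ) * w / z)
def KK (c R M : ℝ) : ℝ := 2 * M + c / R * (1 + 3 * M ^ 2)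
def CB (c R M : ℝ) : ℝ := (1 + M ^ 2) * (1 + c * M / R)

lemma ofReal_fR (c r x : ℝ) : ((fR c r x : ℝ) : ℂ) = FC c (r : ℂ) (x : ℂ) := by
  unfold fR FC; push_cast; ring

lemma KK_nonneg {c R M : ℝ} (hc : 0 ≤ c) (hR : 0 < R) (hM : 0 ≤ M) : 0 ≤ KK c R M := by
  unfold KK; positivity

lemma CB_nonneg {c R M : ℝ} (hc : 0 ≤ c) (hR : 0 < R) (hM : 0 ≤ M) : 0 ≤ CB c R M := by
  unfold CB; positivity

lemma norm_FC_sub_le {c R₀ M : ℝ} (hc : 0 ≤ c) (hR : 0 < R₀) (hM : 0 ≤ M) {z w w' : ℂ}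
    (hz : R₀ ≤ ‖z‖) (hw : ‖w‖ ≤ M) (hw' : ‖w'‖ ≤ M) :
    ‖FC c z w - FC c z w'‖ ≤ KK c R₀ M * ‖w - w'‖ := by
  have hz0 : z ≠ 0 := by
    intro h; rw [h, norm_zero] at hz; linarith
  have key : FC c z w - FC c z w' =
      (w - w') * ((w + w') - ((c : ℂ) / z) * (1 + (w ^ 2 + w * w' + w' ^ 2))) := by
    unfold FC; field_simp; ring
  rw [key, norm_mul, mul_comm]
  gcongr
  have h1 : ‖(w + w') - ((c : ℂ) / z) * (1 + (w ^ 2 + w * w' + w' ^ 2))‖ ≤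
      ‖w + w'‖ + ‖(c : ℂ) / z‖ * ‖1 + (w ^ 2 + w * w' + w' ^ 2)‖ := by
    refine (norm_sub_le _ _).trans ?_
    rw [norm_mul]
  have h2 : ‖w + w'‖ ≤ 2 * M := (norm_add_le _ _).trans (by linarith)
  have h3 : ‖(c : ℂ) / z‖ ≤ c / R₀ := by
    rw [norm_div, Complex.norm_real, Real.norm_eq_abs, abs_of_nonneg hc]
    gcongr
  have hww' : ‖w * w'‖ ≤ M ^ 2 := by
    rw [norm_mul]; nlinarith [norm_nonneg w, norm_nonneg w']
  have hw2 : ‖w ^ 2‖ ≤ M ^ 2 := by rw [norm_pow]; nlinarith [norm_nonneg w]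
  have hw'2 : ‖w' ^ 2‖ ≤ M ^ 2 := by rw [norm_pow]; nlinarith [norm_nonneg w']
  have h4 : ‖1 + (w ^ 2 + w * w' + w' ^ 2)‖ ≤ 1 + 3 * M ^ 2 := by
    calc ‖1 + (w ^ 2 + w * w' + w' ^ 2)‖ ≤ ‖(1 : ℂ)‖ + (‖w ^ 2‖ + ‖w * w'‖ + ‖w' ^ 2‖) := by
          refine (norm_add_le _ _).trans ?_
          gcongr
          exact (norm_add_le _ _).trans (by gcongr; exact norm_add_le _ _)
      _ ≤ 1 + 3 * M ^ 2 := by rw [norm_one]; linarith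
  refine h1.trans ?_
  have h5 : ‖(c : ℂ) / z‖ * ‖1 + (w ^ 2 + w * w' + w' ^ 2)‖ ≤ (c / R₀) * (1 + 3 * M ^ 2) :=
    mul_le_mul h3 h4 (norm_nonneg _) (by positivity)
  unfold KK; linarith

lemma norm_FC_le {c R₀ M : ℝ} (hc : 0 ≤ c) (hR : 0 < R₀) (hM : 0 ≤ M) {z w : ℂ}
    (hz : R₀ ≤ ‖z‖) (hw : ‖w‖ ≤ M) : ‖FC c z w‖ ≤ CB c R₀ M := by
  unfold FC CB
  rw [norm_mul]
  have h1 : ‖1 + w ^ 2‖ ≤ 1 + M ^ 2 := by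
    refine (norm_add_le _ _).trans ?_
    rw [norm_one, norm_pow]
    nlinarith [norm_nonneg w]
  have h2 : ‖1 - (c : ℂ) * w / z‖ ≤ 1 + c * M / R₀ := by
    refine (norm_sub_le _ _).trans ?_
    rw [norm_one]
    have hz0 : 0 < ‖z‖ := lt_of_lt_of_le hR hz
    have hb : ‖(c : ℂ) * w / z‖ ≤ c * M / R₀ := by
      rw [norm_div, norm_mul, Complex.norm_real, Real.norm_eq_abs, abs_of_nonneg hc]
      gcongr
    linarith
  exact mul_le_mul h1 h2 (norm_nonneg _) (by positivity)

lemma FC_lipschitzOnWith {c R M : ℝ} (hc : 0 ≤ c) (hR : 0 < R) (hM : 0 ≤ M) {z : ℂ}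
    (hz : R ≤ ‖z‖) :
    LipschitzOnWith (Real.toNNReal (KK c R M)) (FC c z) (Metric.closedBall (0 : ℂ) M) := by
  apply LipschitzOnWith.of_dist_le_mul
  intro w hw w' hw'
  rw [Metric.mem_closedBall, dist_zero_right] at hw hw'
  rw [dist_eq_norm, dist_eq_norm, Real.coe_toNNReal _ (KK_nonneg hc hR hM)]
  exact norm_FC_sub_le hc hR hM hz hw hw'

/-- Barrier lemma: if `g a ≤ C` and the derivative is nonpositive whenever `g t ≥ C`,
then `g ≤ C` on `[a, b]`. -/
lemma barrier_upper {g G : ℝ → ℝ} {a b C : ℝ}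
    (hderiv : ∀ t ∈ Icc a b, HasDerivWithinAt g (G t) (Icc a b) t)
    (hsign : ∀ t ∈ Icc a b, C ≤ g t → G t ≤ 0)
    (hga : g a ≤ C) : ∀ t ∈ Icc a b, g t ≤ C := by
  intro t₁ ht₁
  by_contra hgt
  push_neg at hgt
  have hcont : ContinuousOn g (Icc a b) := fun t ht => (hderiv t ht).continuousWithinAt
  set S := {t : ℝ | t ∈ Icc a t₁ ∧ g t ≤ C} with hS
  have haS : a ∈ S := ⟨⟨le_rfl, ht₁.1⟩, hga⟩
  have hSne : S.Nonempty := ⟨a, haS⟩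
  have hSbdd : BddAbove S := ⟨t₁, fun t ht => ht.1.2⟩
  have hsub : Icc a t₁ ⊆ Icc a b := Icc_subset_Icc_right ht₁.2
  have hSclosed : IsClosed S := by
    have : S = Icc a t₁ ∩ g ⁻¹' (Iic C) := by
      ext t; simp [hS, and_comm]
    rw [this]
    exact (hcont.mono hsub).preimage_isClosed_of_isClosed isClosed_Icc isClosed_Iic
  set s := sSup S with hs
  have hsS : s ∈ S := hSclosed.csSup_mem hSne hSbdd
  have hsa : a ≤ s := le_csSup hSbdd haS
  have hst₁ : s ≤ t₁ := csSup_le hSne fun t ht => ht.1.2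
  have hslt : s < t₁ := by
    rcases lt_or_eq_of_le hst₁ with h | h
    · exact h
    · exfalso; rw [h] at hsS; exact absurd hsS.2 (not_le.2 hgt)
  have hgtC : ∀ t ∈ Ioc s t₁, C < g t := by
    intro t ht
    by_contra h
    push_neg at h
    have : t ∈ S := ⟨⟨hsa.trans ht.1.le, ht.2⟩, h⟩
    exact absurd (le_csSup hSbdd this) (not_le.2 ht.1)
  have hanti : AntitoneOn g (Icc s t₁) := by
    apply antitoneOn_of_deriv_nonpos (convex_Icc s t₁)
      (hcont.mono (Icc_subset_Icc hsa (ht₁.2)))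
    · intro t ht
      rw [interior_Icc] at ht
      have htab : t ∈ Ioo a b := ⟨lt_of_le_of_lt hsa ht.1, lt_of_lt_of_le ht.2 ht₁.2⟩
      have : HasDerivAt g (G t) t :=
        (hderiv t (Ioo_subset_Icc_self htab)).hasDerivAt (Icc_mem_nhds htab.1 htab.2)
      exact this.differentiableAt.differentiableWithinAt
    · intro t ht
      rw [interior_Icc] at ht
      have htab : t ∈ Ioo a b := ⟨lt_of_le_of_lt hsa ht.1, lt_of_lt_of_le ht.2 ht₁.2⟩
      have hder : HasDerivAt g (G t) t :=
        (hderiv t (Ioo_subset_Icc_self htab)).hasDerivAt (Icc_mem_nhds htab.1 htab.2)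
      rw [hder.deriv]
      exact hsign t (Ioo_subset_Icc_self htab) (hgtC t (Ioo_subset_Ioc_self ht)).le
  have hfin := hanti (left_mem_Icc.2 hslt.le) (right_mem_Icc.2 hslt.le) hslt.le
  exact absurd (hfin.trans hsS.2) (not_le.2 hgt)

lemma barrier_lower {g G : ℝ → ℝ} {a b C : ℝ}
    (hderiv : ∀ t ∈ Icc a b, HasDerivWithinAt g (G t) (Icc a b) t)
    (hsign : ∀ t ∈ Icc a b, g t ≤ C → 0 ≤ G t)
    (hga : C ≤ g a) : ∀ t ∈ Icc a b, C ≤ g t := by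
  have key := barrier_upper (g := fun t => -g t) (G := fun t => -G t) (C := -C)
    (fun t ht => (hderiv t ht).neg)
    (fun t ht h => by
      have h' : g t ≤ C := by simpa [neg_le_neg_iff] using h
      simpa using hsign t ht h')
    (by simpa using hga)
  intro t ht
  have h2 := key t ht
  simp only [neg_le_neg_iff] at h2
  linarith [h2]

/-- A priori bounds for any solution of the translator ODE on `[R, T]`. -/
lemma sol_bounds {c R T x₀ : ℝ} (hc : 1 ≤ c) (hR : 0 < R) {x : ℝ → ℝ}
    (hx : ∀ t ∈ Icc R T, HasDerivWithinAt x (fR c t (x t)) (Icc R T) t) (h0 : x R = x₀) :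
    ∀ t ∈ Icc R T, min x₀ 0 ≤ x t ∧ x t ≤ max x₀ T := by
  intro t ht
  constructor
  · refine barrier_lower hx (fun t' ht' h => ?_) (by rw [h0]; exact min_le_left _ _) t ht
    have ht0 : 0 < t' := lt_of_lt_of_le hR ht'.1
    have hx0 : x t' ≤ 0 := h.trans (min_le_right _ _)
    unfold fR
    have h1 : c * x t' / t' ≤ 0 :=
      div_nonpos_iff.2 (Or.inr ⟨mul_nonpos_of_nonneg_of_nonpos (by linarith) hx0, ht0.le⟩)
    nlinarith [sq_nonneg (x t')]
  · refine barrier_upper hx (fun t' ht' h => ?_) (by rw [h0]; exact le_max_left _ _) t ht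
    have ht0 : 0 < t' := lt_of_lt_of_le hR ht'.1
    have hxT : t' ≤ x t' := le_trans ht'.2 (le_trans (le_max_right x₀ T) h)
    unfold fR
    have h1 : 1 ≤ c * x t' / t' := by
      rw [le_div_iff₀ ht0]
      nlinarith
    nlinarith [sq_nonneg (x t')]

lemma ofReal_hasDerivWithinAt {x : ℝ → ℝ} {d : ℝ} {s : Set ℝ} {t : ℝ}
    (h : HasDerivWithinAt x d s t) :
    HasDerivWithinAt (fun u => ((x u : ℂ))) ((d : ℝ) : ℂ) s t := by
  exact h.ofReal_comp

/-- Uniqueness for the translator ODE on `[R, T]`. -/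
lemma uniq_on_Icc {c R T : ℝ} (hc : 1 ≤ c) (hR : 0 < R) {x y : ℝ → ℝ}
    (hx : ∀ t ∈ Icc R T, HasDerivWithinAt x (fR c t (x t)) (Icc R T) t)
    (hy : ∀ t ∈ Icc R T, HasDerivWithinAt y (fR c t (y t)) (Icc R T) t)
    (hxy : x R = y R) : EqOn x y (Icc R T) := by
  rcases le_or_gt T R with hTR | hRT
  · intro t ht
    have : t = R := le_antisymm (ht.2.trans hTR) ht.1
    rw [this, hxy]
  have hc0 : (0:ℝ) ≤ c := le_trans zero_le_one hc
  set M : ℝ := max (max (x R) T) (-(min (x R) 0)) with hM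
  have hM0 : 0 ≤ M := le_trans (le_trans hR.le hRT.le) (le_trans (le_max_right _ _) (le_max_left _ _))
  have habs : ∀ {w : ℝ → ℝ}, (∀ t ∈ Icc R T, HasDerivWithinAt w (fR c t (w t)) (Icc R T) t) →
      w R = x R → ∀ t ∈ Icc R T, |w t| ≤ M := by
    intro w hw hw0 t ht
    have := sol_bounds hc hR hw hw0 t ht
    rw [abs_le]
    refine ⟨?_, this.2.trans (le_max_left _ _)⟩
    have h2 : -(min (x R) 0) ≤ M := le_max_right _ _
    linarith [this.1]
  have huniq := ODE_solution_unique_of_mem_Icc_right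
    (v := fun t w => FC c ((max t R : ℝ) : ℂ) w)
    (s := fun _ => Metric.closedBall (0 : ℂ) M)
    (K := (KK c R M).toNNReal)
    (f := fun t => ((x t : ℝ) : ℂ)) (g := fun t => ((y t : ℝ) : ℂ)) (a := R) (b := T)
    (fun t _ => by
      apply FC_lipschitzOnWith hc0 hR hM0
      rw [Complex.norm_real, Real.norm_eq_abs,
        abs_of_pos (lt_of_lt_of_le hR (le_max_right t R))]
      exact le_max_right t R)
    (Complex.continuous_ofReal.comp_continuousOn (fun t ht => (hx t ht).continuousWithinAt))
    ?_ ?_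
    (Complex.continuous_ofReal.comp_continuousOn (fun t ht => (hy t ht).continuousWithinAt))
    ?_ ?_ (by simp [hxy])
  · intro t ht
    have h5 := huniq ht
    simp only at h5
    exact_mod_cast h5
  · intro t ht
    have h2 : HasDerivWithinAt x (fR c t (x t)) (Ici t) t :=
      (((hx t (Ico_subset_Icc_self ht)).mono (Icc_subset_Icc_left ht.1)).mono_of_mem_nhdsWithin
        (Icc_mem_nhdsGE_of_mem ⟨le_rfl, ht.2⟩))
    have h3 := ofReal_hasDerivWithinAt h2
    have heq : ((fR c t (x t) : ℝ) : ℂ) = FC c ((max t R : ℝ) : ℂ) ((x t : ℝ) : ℂ) := by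
      rw [max_eq_left ht.1, ofReal_fR]
    rwa [heq] at h3
  · intro t ht
    rw [mem_closedBall_zero_iff, Complex.norm_real, Real.norm_eq_abs]
    exact habs hx rfl t (Ico_subset_Icc_self ht)
  · intro t ht
    have h2 : HasDerivWithinAt y (fR c t (y t)) (Ici t) t :=
      (((hy t (Ico_subset_Icc_self ht)).mono (Icc_subset_Icc_left ht.1)).mono_of_mem_nhdsWithin
        (Icc_mem_nhdsGE_of_mem ⟨le_rfl, ht.2⟩))
    have h3 := ofReal_hasDerivWithinAt h2
    have heq : ((fR c t (y t) : ℝ) : ℂ) = FC c ((max t R : ℝ) : ℂ) ((y t : ℝ) : ℂ) := by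
      rw [max_eq_left ht.1, ofReal_fR]
    rwa [heq] at h3
  · intro t ht
    rw [mem_closedBall_zero_iff, Complex.norm_real, Real.norm_eq_abs]
    exact habs hy hxy.symm t (Ico_subset_Icc_self ht)

lemma abs_min_sub_min_le (a b c : ℝ) : |min a c - min b c| ≤ |a - b| := by
  rcases le_total a c with h1 | h1 <;> rcases le_total b c with h2 | h2 <;>
    simp only [min_eq_left h1, min_eq_right h1, min_eq_left h2, min_eq_right h2] <;>
    (rcases abs_cases (a - b) with ⟨h3, h4⟩ | ⟨h3, h4⟩ <;> rw [abs_le] <;> constructor <;> linarith)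

/-- real Lipschitz bound -/
lemma fR_sub_le {c R M : ℝ} (hc : 0 ≤ c) (hR : 0 < R) (hM : 0 ≤ M) {t a b : ℝ}
    (ht : R ≤ t) (ha : |a| ≤ M) (hb : |b| ≤ M) :
    |fR c t a - fR c t b| ≤ KK c R M * |a - b| := by
  have h1 : |fR c t a - fR c t b| = ‖((fR c t a : ℝ) : ℂ) - ((fR c t b : ℝ) : ℂ)‖ := by
    rw [← Complex.ofReal_sub, Complex.norm_real, Real.norm_eq_abs]
  have h2 : |a - b| = ‖((a : ℝ) : ℂ) - ((b : ℝ) : ℂ)‖ := by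
    rw [← Complex.ofReal_sub, Complex.norm_real, Real.norm_eq_abs]
  rw [h1, h2, ofReal_fR, ofReal_fR]
  apply norm_FC_sub_le hc hR hM
  · rw [Complex.norm_real, Real.norm_eq_abs, abs_of_pos (lt_of_lt_of_le hR ht)]; exact ht
  · rwa [Complex.norm_real, Real.norm_eq_abs]
  · rwa [Complex.norm_real, Real.norm_eq_abs]

lemma fR_le {c R M : ℝ} (hc : 0 ≤ c) (hR : 0 < R) (hM : 0 ≤ M) {t a : ℝ}
    (ht : R ≤ t) (ha : |a| ≤ M) : |fR c t a| ≤ CB c R M := by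
  have h1 : |fR c t a| = ‖((fR c t a : ℝ) : ℂ)‖ := by rw [Complex.norm_real, Real.norm_eq_abs]
  rw [h1, ofReal_fR]
  apply norm_FC_le hc hR hM
  · rw [Complex.norm_real, Real.norm_eq_abs, abs_of_pos (lt_of_lt_of_le hR ht)]; exact ht
  · rwa [Complex.norm_real, Real.norm_eq_abs]

/-- Existence of a solution of the translator ODE on `[R, T]`. -/
lemma exists_sol_Icc (c R T x₀ : ℝ) (hc : 1 ≤ c) (hR : 0 < R) (hRT : R ≤ T) :
    ∃ x : ℝ → ℝ, x R = x₀ ∧ ∀ t ∈ Icc R T, HasDerivWithinAt x (fR c t (x t)) (Icc R T) t := by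
  have hc0 : (0:ℝ) ≤ c := le_trans zero_le_one hc
  set L : ℝ := min x₀ 0 with hLdef
  set U : ℝ := max x₀ T with hUdef
  have hL0 : L ≤ 0 := min_le_right _ _
  have hTU : T ≤ U := le_max_right _ _
  have hLU : L ≤ U := le_trans hL0 (le_trans hR.le (hRT.trans hTU))
  set M : ℝ := max U (-L) with hMdef
  have hM0 : 0 ≤ M := le_trans (by linarith) (le_max_right U (-L))
  have hprojmem : ∀ v : ℝ, L ≤ max (min v U) L ∧ max (min v U) L ≤ U := by
    intro v
    exact ⟨le_max_right _ _, max_le (min_le_right _ _) hLU⟩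
  have habsproj : ∀ v : ℝ, |max (min v U) L| ≤ M := by
    intro v
    rcases hprojmem v with ⟨h1, h2⟩
    rw [abs_le]
    constructor
    · have : -L ≤ M := le_max_right _ _
      linarith
    · exact h2.trans (le_max_left _ _)
  set proj : ℝ → ℝ := fun v => max (min v U) L with hproj
  set ft : ℝ → ℝ → ℝ := fun t v => fR c t (proj v) with hft
  have hPL : IsPicardLindelof ft (tmin := R) (tmax := T) ⟨R, le_rfl, hRT⟩ x₀
      (Real.toNNReal (CB c R M * (T - R))) 0 (Real.toNNReal (CB c R M))
      (Real.toNNReal (KK c R M)) := by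
    constructor
    · intro t ht
      apply LipschitzOnWith.of_dist_le_mul
      intro v _ w _
      rw [Real.dist_eq, Real.dist_eq, Real.coe_toNNReal _ (KK_nonneg hc0 hR hM0)]
      have h1 : |fR c t (proj v) - fR c t (proj w)| ≤ KK c R M * |proj v - proj w| :=
        fR_sub_le hc0 hR hM0 ht.1 (habsproj v) (habsproj w)
      have h2 : |proj v - proj w| ≤ |v - w| := by
        refine (abs_max_sub_max_le_abs _ _ _).trans ?_
        exact abs_min_sub_min_le v w U
      calc |ft t v - ft t w| ≤ KK c R M * |proj v - proj w| := h1
        _ ≤ KK c R M * |v - w| := by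
            exact mul_le_mul_of_nonneg_left h2 (KK_nonneg hc0 hR hM0)
    · intro v _
      have hdiv : ContinuousOn (fun t : ℝ => c * proj v / t) (Icc R T) :=
        continuousOn_const.div continuousOn_id
          (fun t ht => ne_of_gt (lt_of_lt_of_le hR ht.1))
      have : ContinuousOn (fun t : ℝ => (1 + proj v ^ 2) * (1 - c * proj v / t)) (Icc R T) :=
        continuousOn_const.mul (continuousOn_const.sub hdiv)
      exact this
    · intro t ht v _
      rw [Real.norm_eq_abs, Real.coe_toNNReal _ (CB_nonneg hc0 hR hM0)]
      exact fR_le hc0 hR hM0 ht.1 (habsproj v)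
    · have hCB := CB_nonneg hc0 hR hM0
      have hTR : 0 ≤ T - R := by linarith
      have : (T - R) ⊔ (R - R) = T - R := by
        rw [sub_self]; exact max_eq_left hTR
      simp only [this, NNReal.coe_zero, sub_zero, Real.coe_toNNReal _ hCB,
        Real.coe_toNNReal _ (mul_nonneg hCB hTR), le_refl]
  obtain ⟨α, hα0, hαd⟩ : ∃ α : ℝ → ℝ, α R = x₀ ∧
      ∀ t ∈ Icc R T, HasDerivWithinAt α (ft t (α t)) (Icc R T) t :=
    hPL.exists_eq_forall_mem_Icc_hasDerivWithinAt₀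
  -- invariance: α stays in [L, U]
  have hub : ∀ t ∈ Icc R T, α t ≤ U := by
    apply barrier_upper (G := fun t => ft t (α t)) hαd
    · intro t ht hU
      have ht0 : 0 < t := lt_of_lt_of_le hR ht.1
      have hprojU : proj (α t) = U := by
        rw [hproj]
        simp only
        rw [min_eq_right hU, max_eq_left hLU]
      rw [hft]
      simp only
      rw [hprojU]
      unfold fR
      have hU0 : (0:ℝ) ≤ U := le_trans hR.le (hRT.trans hTU)
      have h1 : 1 ≤ c * U / t := by
        rw [le_div_iff₀ ht0]
        have h2 : 1 * U ≤ c * U := mul_le_mul_of_nonneg_right hc hU0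
        have h3 : t ≤ U := ht.2.trans hTU
        linarith
      nlinarith [sq_nonneg U]
    · rw [hα0]; exact le_max_left _ _
  have hlb : ∀ t ∈ Icc R T, L ≤ α t := by
    apply barrier_lower (G := fun t => ft t (α t)) hαd
    · intro t ht hL
      have ht0 : 0 < t := lt_of_lt_of_le hR ht.1
      have hprojL : proj (α t) = L := by
        rw [hproj]
        simp only
        rw [min_eq_left (hL.trans hLU), max_eq_right hL]
      rw [hft]
      simp only
      rw [hprojL]
      unfold fR
      have h1 : c * L / t ≤ 0 :=
        div_nonpos_iff.2 (Or.inr ⟨mul_nonpos_of_nonneg_of_nonpos hc0 hL0, ht0.le⟩)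
      nlinarith [sq_nonneg L]
    · rw [hα0]; exact min_le_left _ _
  refine ⟨α, hα0, fun t ht => ?_⟩
  have hproja : proj (α t) = α t := by
    rw [hproj]
    simp only
    rw [min_eq_left (hub t ht), max_eq_left (hlb t ht)]
  have := hαd t ht
  rw [hft] at this
  simp only at this
  rwa [hproja] at this

/-- Global existence on `Ici R`. -/
lemma exists_global (c R x₀ : ℝ) (hc : 1 ≤ c) (hR : 0 < R) :
    ∃ φ : ℝ → ℝ, φ R = x₀ ∧ ∀ r ∈ Ici R, HasDerivWithinAt φ (fR c r (φ r)) (Ici R) r := by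
  set T : ℕ → ℝ := fun k => R + k + 1 with hT
  have hRT : ∀ k : ℕ, R ≤ T k := by
    intro k
    have : (0:ℝ) ≤ k := Nat.cast_nonneg k
    simp only [hT]
    linarith
  have hsol : ∀ k : ℕ, ∃ x : ℝ → ℝ, x R = x₀ ∧
      ∀ t ∈ Icc R (T k), HasDerivWithinAt x (fR c t (x t)) (Icc R (T k)) t :=
    fun k => exists_sol_Icc c R (T k) x₀ hc hR (hRT k)
  choose sol hsol0 hsold using hsol
  have compat : ∀ j k : ℕ, j ≤ k → EqOn (sol j) (sol k) (Icc R (T j)) := by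
    intro j k hjk
    have hTjk : T j ≤ T k := by
      simp only [hT]
      have : (j:ℝ) ≤ k := Nat.cast_le.2 hjk
      linarith
    apply uniq_on_Icc hc hR (hsold j)
    · intro t ht
      exact (hsold k t (Icc_subset_Icc_right hTjk ht)).mono (Icc_subset_Icc_right hTjk)
    · rw [hsol0 j, hsol0 k]
  set K : ℝ → ℕ := fun r => ⌈r - R⌉₊ with hK
  have hrK : ∀ r : ℝ, r < T (K r) := by
    intro r
    have h1 : r - R ≤ ⌈r - R⌉₊ := Nat.le_ceil _
    simp only [hT, hK]
    linarith
  set φ : ℝ → ℝ := fun r => sol (K r) r with hφ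
  have φeq : ∀ k : ℕ, ∀ r ∈ Icc R (T k), φ r = sol k r := by
    intro k r hr
    rcases le_total (K r) k with h | h
    · exact compat (K r) k h ⟨hr.1, (hrK r).le⟩
    · exact (compat k (K r) h hr).symm
  refine ⟨φ, ?_, ?_⟩
  · rw [φeq (K R) R ⟨le_rfl, (hrK R).le⟩]
    exact hsol0 _
  · intro r hr
    set k := K r with hk
    have hrmem : r ∈ Icc R (T k) := ⟨hr, (hrK r).le⟩
    have hd : HasDerivWithinAt (sol k) (fR c r (sol k r)) (Icc R (T k)) r := hsold k r hrmem
    have hmem : Icc R (T k) ∈ nhdsWithin r (Ici R) := by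
      rw [mem_nhdsWithin]
      exact ⟨Iio (T k), isOpen_Iio, hrK r, fun s hs => ⟨hs.2, hs.1.le⟩⟩
    have hd2 : HasDerivWithinAt (sol k) (fR c r (sol k r)) (Ici R) r :=
      hd.mono_of_mem_nhdsWithin hmem
    have heqv : φ =ᶠ[nhdsWithin r (Ici R)] sol k :=
      Filter.eventually_of_mem hmem (fun s hs => φeq k s hs)
    have hd3 : HasDerivWithinAt φ (fR c r (sol k r)) (Ici R) r :=
      hd2.congr_of_eventuallyEq heqv (φeq k r hrmem)
    rwa [← φeq k r hrmem] at hd3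


open Metric intervalIntegral MeasureTheory

lemma hasDerivAt_picard {g : ℂ → ℂ} {t₀ : ℂ} {ε : ℝ}
    (hg : DifferentiableOn ℂ g (ball t₀ ε)) {z : ℂ} (hz : z ∈ ball t₀ ε) :
    HasDerivAt (fun w => ∫ s in (0:ℝ)..1, (w - t₀) * g (t₀ + (s : ℂ) * (w - t₀))) (g z) z := by
  have hgc : ContinuousOn g (ball t₀ ε) := hg.continuousOn
  have hganalytic : AnalyticOnNhd ℂ g (ball t₀ ε) := hg.analyticOnNhd isOpen_ball
  have hg'd : DifferentiableOn ℂ (deriv g) (ball t₀ ε) := hganalytic.deriv.differentiableOn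
  have hg'c : ContinuousOn (deriv g) (ball t₀ ε) := hg'd.continuousOn
  set r : ℝ := (ε - dist z t₀) / 2 with hr
  have hzd : dist z t₀ < ε := mem_ball.1 hz
  have hrpos : 0 < r := by simp only [hr]; linarith
  set ε₁ : ℝ := dist z t₀ + r with hε₁
  have hε₁nonneg : 0 ≤ ε₁ := by positivity
  have hε₁lt : ε₁ < ε := by simp only [hε₁, hr]; linarith
  have hK₁sub : closedBall t₀ ε₁ ⊆ ball t₀ ε := closedBall_subset_ball hε₁lt
  have hballz : ball z r ⊆ closedBall t₀ ε₁ := by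
    intro w hw
    rw [mem_closedBall]
    calc dist w t₀ ≤ dist w z + dist z t₀ := dist_triangle _ _ _
      _ ≤ r + dist z t₀ := by have := mem_ball.1 hw; linarith
      _ = ε₁ := by simp only [hε₁]; ring
  have hseg : ∀ w ∈ closedBall t₀ ε₁, ∀ s : ℝ, |s| ≤ 1 →
      t₀ + (s : ℂ) * (w - t₀) ∈ closedBall t₀ ε₁ := by
    intro w hw s hs
    rw [mem_closedBall, dist_eq_norm]
    have : t₀ + (s : ℂ) * (w - t₀) - t₀ = (s : ℂ) * (w - t₀) := by ring
    rw [this, norm_mul, Complex.norm_real, Real.norm_eq_abs]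
    have h2 : ‖w - t₀‖ ≤ ε₁ := by rwa [← dist_eq_norm, ← mem_closedBall]
    nlinarith [norm_nonneg (w - t₀), abs_nonneg s]
  obtain ⟨C₁, hC₁⟩ := (isCompact_closedBall t₀ ε₁).exists_bound_of_continuousOn (hgc.mono hK₁sub)
  obtain ⟨C₂, hC₂⟩ := (isCompact_closedBall t₀ ε₁).exists_bound_of_continuousOn (hg'c.mono hK₁sub)
  have ht₀K : t₀ ∈ closedBall t₀ ε₁ := mem_closedBall_self hε₁nonneg
  have hC₁0 : 0 ≤ C₁ := le_trans (norm_nonneg _) (hC₁ t₀ ht₀K)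
  have hC₂0 : 0 ≤ C₂ := le_trans (norm_nonneg _) (hC₂ t₀ ht₀K)
  -- inner path continuity
  have hγcont : ∀ w : ℂ, Continuous (fun s : ℝ => t₀ + (s : ℂ) * (w - t₀)) := by
    intro w
    exact continuous_const.add (Complex.continuous_ofReal.mul continuous_const)
  have hmapsIcc : ∀ w ∈ closedBall t₀ ε₁, MapsTo (fun s : ℝ => t₀ + (s : ℂ) * (w - t₀))
      (Icc (0:ℝ) 1) (closedBall t₀ ε₁) := by
    intro w hw s hs
    exact hseg w hw s (by rw [abs_le]; exact ⟨by linarith [hs.1], hs.2⟩)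
  have hcontF : ∀ w ∈ closedBall t₀ ε₁, ContinuousOn
      (fun s : ℝ => (w - t₀) * g (t₀ + (s : ℂ) * (w - t₀))) (Icc (0:ℝ) 1) := by
    intro w hw
    apply continuousOn_const.mul
    exact (hgc.mono hK₁sub).comp (hγcont w).continuousOn (hmapsIcc w hw)
  have hcontF' : ContinuousOn
      (fun s : ℝ => g (t₀ + (s : ℂ) * (z - t₀)) +
        (z - t₀) * (deriv g (t₀ + (s : ℂ) * (z - t₀)) * (s : ℂ))) (Icc (0:ℝ) 1) := by
    have hzK : z ∈ closedBall t₀ ε₁ := by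
      rw [mem_closedBall]; simp only [hε₁]; linarith
    apply ContinuousOn.add
    · exact (hgc.mono hK₁sub).comp (hγcont z).continuousOn (hmapsIcc z hzK)
    · apply continuousOn_const.mul
      apply ContinuousOn.mul
      · exact (hg'c.mono hK₁sub).comp (hγcont z).continuousOn (hmapsIcc z hzK)
      · exact Complex.continuous_ofReal.continuousOn
  have huIoc : Set.uIoc (0:ℝ) 1 ⊆ Icc (0:ℝ) 1 := by
    rw [uIoc_of_le (by norm_num : (0:ℝ) ≤ 1)]
    exact Ioc_subset_Icc_self
  have hzball : z ∈ closedBall t₀ ε₁ := by rw [mem_closedBall]; simp only [hε₁]; linarith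
  have key := intervalIntegral.hasDerivAt_integral_of_dominated_loc_of_deriv_le
    (𝕜 := ℂ) (μ := volume) (a := 0) (b := 1)
    (F := fun w s => (w - t₀) * g (t₀ + (s : ℂ) * (w - t₀)))
    (F' := fun w s => g (t₀ + (s : ℂ) * (w - t₀)) +
      (w - t₀) * (deriv g (t₀ + (s : ℂ) * (w - t₀)) * (s : ℂ)))
    (x₀ := z) (bound := fun _ => C₁ + ε₁ * C₂) (ball_mem_nhds z hrpos)
    ?_ ?_ ?_ ?_ ?_ ?_
  · -- use the result; compute the integral of F' z
    obtain ⟨hint, hder⟩ := key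
    have hIval : (∫ s in (0:ℝ)..1, (g (t₀ + (s : ℂ) * (z - t₀)) +
        (z - t₀) * (deriv g (t₀ + (s : ℂ) * (z - t₀)) * (s : ℂ)))) = g z := by
      have hH : ∀ s ∈ uIcc (0:ℝ) 1, HasDerivAt
          (fun s : ℝ => (s : ℂ) * g (t₀ + (s : ℂ) * (z - t₀)))
          (g (t₀ + (s : ℂ) * (z - t₀)) +
            (z - t₀) * (deriv g (t₀ + (s : ℂ) * (z - t₀)) * (s : ℂ))) s := by
        intro s hs
        rw [uIcc_of_le (by norm_num : (0:ℝ) ≤ 1)] at hs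
        set γ : ℂ := t₀ + (s : ℂ) * (z - t₀) with hγdef
        have hγmem : γ ∈ ball t₀ ε :=
          hK₁sub (hseg z hzball s (by rw [abs_le]; exact ⟨by linarith [hs.1], hs.2⟩))
        have h1 : HasDerivAt (fun s : ℝ => ((s : ℝ) : ℂ)) 1 s := by
          simpa using (hasDerivAt_id s).ofReal_comp
        have hinner2 : HasDerivAt (fun s : ℝ => t₀ + (s : ℂ) * (z - t₀)) (z - t₀) s := by
          simpa using (h1.mul_const (z - t₀)).const_add t₀
        have hg2 : HasDerivAt g (deriv g γ) γ :=
          (hg.differentiableAt (isOpen_ball.mem_nhds hγmem)).hasDerivAt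
        have hcomp2 : HasDerivAt (fun s : ℝ => g (t₀ + (s : ℂ) * (z - t₀)))
            ((z - t₀) • deriv g γ) s := HasDerivAt.scomp s hg2 hinner2
        have hprod := h1.fun_mul hcomp2
        exact hprod.congr_deriv (by simp only [smul_eq_mul, hγdef]; ring)
      have hintH : IntervalIntegrable (fun s : ℝ => g (t₀ + (s : ℂ) * (z - t₀)) +
          (z - t₀) * (deriv g (t₀ + (s : ℂ) * (z - t₀)) * (s : ℂ))) volume 0 1 := by
        apply ContinuousOn.intervalIntegrable
        rwa [uIcc_of_le (by norm_num : (0:ℝ) ≤ 1)]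
      have := intervalIntegral.integral_eq_sub_of_hasDerivAt hH hintH
      rw [this]
      have e1 : t₀ + ((1:ℝ) : ℂ) * (z - t₀) = z := by push_cast; ring
      simp [e1]
    rw [hIval] at hder
    exact hder
  · -- hF_meas
    filter_upwards [isOpen_ball.mem_nhds (mem_ball_self hrpos)] with w hw
    exact ((hcontF w (hballz hw)).mono huIoc).aestronglyMeasurable measurableSet_uIoc
  · -- hF_int
    apply ContinuousOn.intervalIntegrable
    rw [uIcc_of_le (by norm_num : (0:ℝ) ≤ 1)]
    exact hcontF z hzball
  · -- hF'_meas
    exact (hcontF'.mono huIoc).aestronglyMeasurable measurableSet_uIoc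
  · -- h_bound
    apply Filter.Eventually.of_forall
    intro s hs w hw
    have hsIcc : s ∈ Icc (0:ℝ) 1 := huIoc hs
    have hwK : w ∈ closedBall t₀ ε₁ := hballz hw
    have hγK : t₀ + (s : ℂ) * (w - t₀) ∈ closedBall t₀ ε₁ := hmapsIcc w hwK hsIcc
    refine (norm_add_le _ _).trans ?_
    have h1 : ‖g (t₀ + (s : ℂ) * (w - t₀))‖ ≤ C₁ := hC₁ _ hγK
    have h2 : ‖(w - t₀) * (deriv g (t₀ + (s : ℂ) * (w - t₀)) * (s : ℂ))‖ ≤ ε₁ * C₂ := by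
      rw [norm_mul, norm_mul, Complex.norm_real, Real.norm_eq_abs]
      have e1 : ‖w - t₀‖ ≤ ε₁ := by rwa [← dist_eq_norm, ← mem_closedBall]
      have e2 : ‖deriv g (t₀ + (s : ℂ) * (w - t₀))‖ ≤ C₂ := hC₂ _ hγK
      have e3 : |s| ≤ 1 := by rw [abs_le]; exact ⟨by linarith [hsIcc.1], hsIcc.2⟩
      have e4 : 0 ≤ ‖deriv g (t₀ + (s : ℂ) * (w - t₀))‖ := norm_nonneg _
      have e5 : ‖deriv g (t₀ + (s : ℂ) * (w - t₀))‖ * |s| ≤ C₂ := by nlinarith [abs_nonneg s]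
      exact mul_le_mul e1 e5 (by positivity) hε₁nonneg
    show _ ≤ C₁ + ε₁ * C₂
    exact add_le_add h1 h2
  · exact intervalIntegrable_const
  · -- h_diff
    apply Filter.Eventually.of_forall
    intro s hs w hw
    have hsIcc : s ∈ Icc (0:ℝ) 1 := huIoc hs
    set γ : ℂ := t₀ + (s : ℂ) * (w - t₀) with hγdef
    have hγmem : γ ∈ ball t₀ ε := hK₁sub (hmapsIcc w (hballz hw) hsIcc)
    have hinner : HasDerivAt (fun w : ℂ => t₀ + (s : ℂ) * (w - t₀)) ((s : ℂ)) w := by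
      simpa using (((hasDerivAt_id w).sub_const t₀).const_mul ((s : ℝ) : ℂ)).const_add t₀
    have hgd : HasDerivAt g (deriv g γ) γ :=
      (hg.differentiableAt (isOpen_ball.mem_nhds hγmem)).hasDerivAt
    have hcomp : HasDerivAt (fun w : ℂ => g (t₀ + (s : ℂ) * (w - t₀)))
        (deriv g γ * (s : ℂ)) w := hgd.comp w hinner
    have hfinal := ((hasDerivAt_id w).sub_const t₀).fun_mul hcomp
    exact hfinal.congr_deriv (by simp only [hγdef, id_eq]; ring)

/-- Local existence of an analytic (holomorphic) solution. -/
lemma local_analytic (c : ℝ) (hc : 0 ≤ c) (t₀ x₀ : ℝ) (ht₀ : 0 < t₀) :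
    ∃ ε : ℝ, 0 < ε ∧ ∃ u : ℂ → ℂ,
      u ((t₀ : ℝ) : ℂ) = ((x₀ : ℝ) : ℂ) ∧
      (∀ z ∈ ball ((t₀ : ℝ) : ℂ) ε, ‖u z - ((x₀ : ℝ) : ℂ)‖ ≤ 1) ∧
      DifferentiableOn ℂ u (ball ((t₀ : ℝ) : ℂ) ε) ∧
      ∀ z ∈ ball ((t₀ : ℝ) : ℂ) ε, HasDerivAt u (FC c z (u z)) z := by
  set B : ℝ := |x₀| + 1 with hB
  have hB0 : 0 ≤ B := by positivity
  set R₀ : ℝ := t₀ / 2 with hR₀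
  have hR₀0 : 0 < R₀ := by positivity
  set Cb : ℝ := CB c R₀ B with hCb
  set Kp : ℝ := KK c R₀ B with hKp
  have hCb0 : 0 ≤ Cb := CB_nonneg hc hR₀0 hB0
  have hKp0 : 0 ≤ Kp := KK_nonneg hc hR₀0 hB0
  set ε : ℝ := min (t₀ / 2) (min (1 / (2 * Cb + 1)) (1 / (2 * Kp + 1))) with hε
  have hε0 : 0 < ε := by
    apply lt_min (by positivity)
    exact lt_min (by positivity) (by positivity)
  have hεt₀ : ε ≤ t₀ / 2 := min_le_left _ _
  have hεCb : ε * Cb ≤ 1 / 2 := by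
    have h1 : ε ≤ 1 / (2 * Cb + 1) := le_trans (min_le_right _ _) (min_le_left _ _)
    have h2 : 0 < 2 * Cb + 1 := by positivity
    have h3 : ε * Cb ≤ (1 / (2 * Cb + 1)) * Cb := mul_le_mul_of_nonneg_right h1 hCb0
    have h4 : (1 / (2 * Cb + 1)) * Cb ≤ 1 / 2 := by
      rw [div_mul_eq_mul_div, one_mul, div_le_iff₀ h2]
      linarith
    linarith
  have hεKp : ε * Kp ≤ 1 / 2 := by
    have h1 : ε ≤ 1 / (2 * Kp + 1) := le_trans (min_le_right _ _) (min_le_right _ _)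
    have h2 : 0 < 2 * Kp + 1 := by positivity
    have h3 : ε * Kp ≤ (1 / (2 * Kp + 1)) * Kp := mul_le_mul_of_nonneg_right h1 hKp0
    have h4 : (1 / (2 * Kp + 1)) * Kp ≤ 1 / 2 := by
      rw [div_mul_eq_mul_div, one_mul, div_le_iff₀ h2]
      linarith
    linarith
  set zc : ℂ := ((t₀ : ℝ) : ℂ) with hzc
  set xc : ℂ := ((x₀ : ℝ) : ℂ) with hxc
  have hznorm : ∀ z ∈ ball zc ε, R₀ ≤ ‖z‖ := by
    intro z hz
    have h1 : ‖zc - z‖ < ε := by rwa [← dist_eq_norm, dist_comm, ← mem_ball]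
    have h2 : ‖zc‖ - ‖zc - z‖ ≤ ‖z‖ := by
      have := norm_sub_norm_le zc z
      have h3 : ‖zc‖ - ‖z‖ ≤ ‖zc - z‖ := this
      linarith
    have h4 : ‖zc‖ = t₀ := by
      rw [hzc, Complex.norm_real, Real.norm_eq_abs, abs_of_pos ht₀]
    rw [hR₀]
    linarith
  have hzne : ∀ z ∈ ball zc ε, z ≠ 0 := by
    intro z hz h0
    have := hznorm z hz
    rw [h0, norm_zero] at this
    linarith
  have hγmem : ∀ z ∈ ball zc ε, ∀ s : ℝ, s ∈ Icc (0:ℝ) 1 →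
      zc + (s : ℂ) * (z - zc) ∈ ball zc ε := by
    intro z hz s hs
    rw [mem_ball, dist_eq_norm]
    have e0 : zc + (s : ℂ) * (z - zc) - zc = (s : ℂ) * (z - zc) := by ring
    rw [e0, norm_mul, Complex.norm_real, Real.norm_eq_abs, abs_of_nonneg hs.1]
    have h1 : ‖z - zc‖ < ε := by rwa [← dist_eq_norm, ← mem_ball]
    nlinarith [norm_nonneg (z - zc), hs.2]
  -- admissible functions
  set Adm : (ℂ → ℂ) → Prop :=
    fun g => DifferentiableOn ℂ g (ball zc ε) ∧ ∀ z ∈ ball zc ε, ‖g z - xc‖ ≤ 1 with hAdm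
  have hgB : ∀ g, Adm g → ∀ z ∈ ball zc ε, ‖g z‖ ≤ B := by
    intro g hg z hz
    have h1 := hg.2 z hz
    have h2 : ‖xc‖ = |x₀| := by rw [hxc, Complex.norm_real, Real.norm_eq_abs]
    calc ‖g z‖ = ‖(g z - xc) + xc‖ := by ring_nf
      _ ≤ ‖g z - xc‖ + ‖xc‖ := norm_add_le _ _
      _ ≤ 1 + |x₀| := by rw [h2]; linarith
      _ = B := by rw [hB]; ring
  have hFFd : ∀ g, Adm g → DifferentiableOn ℂ (fun w => FC c w (g w)) (ball zc ε) := by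
    intro g hg
    have h1 : DifferentiableOn ℂ (fun w : ℂ => (1 : ℂ) + g w ^ 2) (ball zc ε) :=
      (differentiableOn_const _).add (hg.1.pow 2)
    have h2 : DifferentiableOn ℂ (fun w : ℂ => ((c : ℝ) : ℂ) * g w / w) (ball zc ε) :=
      ((differentiableOn_const _).mul hg.1).div differentiableOn_id (hzne)
    exact h1.mul ((differentiableOn_const _).sub h2)
  have hFFb : ∀ g, Adm g → ∀ z ∈ ball zc ε, ‖FC c z (g z)‖ ≤ Cb := by
    intro g hg z hz
    exact norm_FC_le hc hR₀0 hB0 (hznorm z hz) (hgB g hg z hz)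
  -- the Picard operator
  set P : (ℂ → ℂ) → ℂ → ℂ :=
    fun g z => xc + ∫ s in (0:ℝ)..1, (z - zc) * (FC c (zc + (s : ℂ) * (z - zc))
      (g (zc + (s : ℂ) * (z - zc)))) with hP
  have hPd : ∀ g, Adm g → ∀ z ∈ ball zc ε, HasDerivAt (P g) (FC c z (g z)) z := by
    intro g hg z hz
    exact (hasDerivAt_picard (hFFd g hg) hz).const_add xc
  have hP0 : ∀ g, P g zc = xc := by
    intro g
    rw [hP]
    simp
  have hIntg : ∀ g, Adm g → ∀ z ∈ ball zc ε, IntervalIntegrable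
      (fun s : ℝ => (z - zc) * (FC c (zc + (s : ℂ) * (z - zc)) (g (zc + (s : ℂ) * (z - zc)))))
      volume 0 1 := by
    intro g hg z hz
    apply ContinuousOn.intervalIntegrable
    rw [uIcc_of_le (by norm_num : (0:ℝ) ≤ 1)]
    apply continuousOn_const.mul
    have hγc : Continuous (fun s : ℝ => zc + (s : ℂ) * (z - zc)) :=
      continuous_const.add (Complex.continuous_ofReal.mul continuous_const)
    exact ((hFFd g hg).continuousOn).comp hγc.continuousOn (fun s hs => hγmem z hz s hs)
  have hPb : ∀ g, Adm g → ∀ z ∈ ball zc ε, ‖P g z - xc‖ ≤ ε * Cb := by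
    intro g hg z hz
    rw [hP]
    simp only [add_sub_cancel_left]
    have h1 : ∀ s ∈ Set.uIoc (0:ℝ) 1, ‖(z - zc) * (FC c (zc + (s : ℂ) * (z - zc))
        (g (zc + (s : ℂ) * (z - zc))))‖ ≤ ε * Cb := by
      intro s hs
      rw [uIoc_of_le (by norm_num : (0:ℝ) ≤ 1)] at hs
      have hsIcc : s ∈ Icc (0:ℝ) 1 := ⟨hs.1.le, hs.2⟩
      rw [norm_mul]
      have h2 : ‖z - zc‖ ≤ ε := by
        have : ‖z - zc‖ < ε := by rwa [← dist_eq_norm, ← mem_ball]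
        linarith
      have h3 := hFFb g hg _ (hγmem z hz s hsIcc)
      exact mul_le_mul h2 h3 (norm_nonneg _) hε0.le
    have := intervalIntegral.norm_integral_le_of_norm_le_const h1
    simpa using this
  have hPadm : ∀ g, Adm g → Adm (P g) := by
    intro g hg
    constructor
    · intro z hz
      exact ((hPd g hg z hz).differentiableAt).differentiableWithinAt
    · intro z hz
      exact (hPb g hg z hz).trans (by linarith)
  have hPcontr : ∀ g₁ g₂, Adm g₁ → Adm g₂ → ∀ d : ℝ, 0 ≤ d →
      (∀ z ∈ ball zc ε, ‖g₁ z - g₂ z‖ ≤ d) →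
      ∀ z ∈ ball zc ε, ‖P g₁ z - P g₂ z‖ ≤ ε * Kp * d := by
    intro g₁ g₂ hg₁ hg₂ d hd hdist z hz
    rw [hP]
    simp only [add_sub_add_left_eq_sub]
    rw [← intervalIntegral.integral_sub (hIntg g₁ hg₁ z hz) (hIntg g₂ hg₂ z hz)]
    have h1 : ∀ s ∈ Set.uIoc (0:ℝ) 1, ‖(z - zc) * (FC c (zc + (s : ℂ) * (z - zc))
          (g₁ (zc + (s : ℂ) * (z - zc)))) -
        (z - zc) * (FC c (zc + (s : ℂ) * (z - zc)) (g₂ (zc + (s : ℂ) * (z - zc))))‖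
        ≤ ε * Kp * d := by
      intro s hs
      rw [uIoc_of_le (by norm_num : (0:ℝ) ≤ 1)] at hs
      have hsIcc : s ∈ Icc (0:ℝ) 1 := ⟨hs.1.le, hs.2⟩
      have hγ := hγmem z hz s hsIcc
      rw [← mul_sub, norm_mul]
      have h2 : ‖z - zc‖ ≤ ε := by
        have : ‖z - zc‖ < ε := by rwa [← dist_eq_norm, ← mem_ball]
        linarith
      have h3 : ‖FC c (zc + (s : ℂ) * (z - zc)) (g₁ (zc + (s : ℂ) * (z - zc))) -
          FC c (zc + (s : ℂ) * (z - zc)) (g₂ (zc + (s : ℂ) * (z - zc)))‖ ≤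
          Kp * ‖g₁ (zc + (s : ℂ) * (z - zc)) - g₂ (zc + (s : ℂ) * (z - zc))‖ :=
        norm_FC_sub_le hc hR₀0 hB0 (hznorm _ hγ) (hgB g₁ hg₁ _ hγ) (hgB g₂ hg₂ _ hγ)
      have h4 : ‖g₁ (zc + (s : ℂ) * (z - zc)) - g₂ (zc + (s : ℂ) * (z - zc))‖ ≤ d :=
        hdist _ hγ
      calc ‖z - zc‖ * ‖FC c (zc + (s : ℂ) * (z - zc)) (g₁ (zc + (s : ℂ) * (z - zc))) -
            FC c (zc + (s : ℂ) * (z - zc)) (g₂ (zc + (s : ℂ) * (z - zc)))‖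
          ≤ ε * (Kp * d) := by
            apply mul_le_mul h2 (h3.trans (mul_le_mul_of_nonneg_left h4 hKp0))
              (norm_nonneg _) hε0.le
        _ = ε * Kp * d := by ring
    have := intervalIntegral.norm_integral_le_of_norm_le_const h1
    simpa using this
  -- iterates
  set v : ℕ → ℂ → ℂ := fun n => Nat.rec (fun _ => xc) (fun _ vn => P vn) n with hv
  have hv0 : v 0 = fun _ => xc := rfl
  have hvs : ∀ n, v (n + 1) = P (v n) := fun n => rfl
  have hadm : ∀ n, Adm (v n) := by
    intro n
    induction n with
    | zero =>
        constructor
        · exact differentiableOn_const _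
        · intro z hz; simp [hv0]
    | succ n ih => rw [hvs]; exact hPadm (v n) ih
  have hcontr : ∀ n, ∀ z ∈ ball zc ε, ‖v (n + 1) z - v n z‖ ≤ (1/2 : ℝ)^(n+1) := by
    intro n
    induction n with
    | zero =>
        intro z hz
        rw [hvs 0]
        have hx : v 0 z = xc := rfl
        rw [hx]
        calc ‖P (v 0) z - xc‖ ≤ ε * Cb := hPb (v 0) (hadm 0) z hz
          _ ≤ (1/2 : ℝ)^(0+1) := by rw [pow_one]; exact hεCb
    | succ n ih =>
        intro z hz
        rw [hvs (n+1), hvs n]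
        calc ‖P (v (n+1)) z - P (v n) z‖ ≤ ε * Kp * (1/2 : ℝ)^(n+1) :=
              hPcontr (v (n+1)) (v n) (hadm (n+1)) (hadm n) _ (by positivity)
                (fun w hw => by
                  have := ih w hw
                  rwa [hvs n] at this ⊢) z hz
          _ ≤ (1/2) * (1/2 : ℝ)^(n+1) :=
              mul_le_mul_of_nonneg_right hεKp (by positivity)
          _ = (1/2 : ℝ)^(n+1+1) := by ring
  -- Cauchy sequence and uniform limit
  have hdistvv : ∀ z ∈ ball zc ε, ∀ n : ℕ, dist (v n z) (v (n+1) z) ≤ (1/2) * (1/2 : ℝ)^n := by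
    intro z hz n
    rw [dist_eq_norm, norm_sub_rev]
    have := hcontr n z hz
    calc ‖v (n+1) z - v n z‖ ≤ (1/2 : ℝ)^(n+1) := this
      _ = (1/2) * (1/2 : ℝ)^n := by rw [pow_succ]; ring
  have hcauchy : ∀ z ∈ ball zc ε, CauchySeq (fun n => v n z) := by
    intro z hz
    exact cauchySeq_of_le_geometric (1/2) (1/2) (by norm_num) (hdistvv z hz)
  set u : ℂ → ℂ := fun z => limUnder atTop (fun n => v n z) with hu
  have htend : ∀ z ∈ ball zc ε, Tendsto (fun n => v n z) atTop (nhds (u z)) :=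
    fun z hz => (hcauchy z hz).tendsto_limUnder
  have hdistu : ∀ z ∈ ball zc ε, ∀ n : ℕ, dist (v n z) (u z) ≤ (1/2 : ℝ)^n := by
    intro z hz n
    have := dist_le_of_le_geometric_of_tendsto (1/2) (1/2) (by norm_num)
      (hdistvv z hz) (htend z hz) n
    calc dist (v n z) (u z) ≤ 1/2 * (1/2:ℝ)^n / (1 - 1/2) := this
      _ = (1/2 : ℝ)^n := by ring
  have hunif : TendstoUniformlyOn (fun n z => v n z) u atTop (ball zc ε) := by
    rw [Metric.tendstoUniformlyOn_iff]
    intro δ hδ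
    obtain ⟨N, hN⟩ := exists_pow_lt_of_lt_one hδ (by norm_num : (1/2 : ℝ) < 1)
    filter_upwards [eventually_ge_atTop N] with n hn z hz
    have h1 : (1/2 : ℝ)^n ≤ (1/2 : ℝ)^N :=
      pow_le_pow_of_le_one (by norm_num) (by norm_num) hn
    calc dist (u z) (v n z) = dist (v n z) (u z) := dist_comm _ _
      _ ≤ (1/2 : ℝ)^n := hdistu z hz n
      _ ≤ (1/2 : ℝ)^N := h1
      _ < δ := hN
  have hudiff : DifferentiableOn ℂ u (ball zc ε) :=
    (hunif.tendstoLocallyUniformlyOn).differentiableOn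
      (Filter.Eventually.of_forall (fun n => (hadm n).1)) isOpen_ball
  have hub : ∀ z ∈ ball zc ε, ‖u z - xc‖ ≤ 1 := by
    intro z hz
    have h1 : Tendsto (fun n => ‖v n z - xc‖) atTop (nhds ‖u z - xc‖) :=
      ((htend z hz).sub_const xc).norm
    exact le_of_tendsto h1 (Filter.Eventually.of_forall (fun n => (hadm n).2 z hz))
  have hderiv : ∀ z ∈ ball zc ε, HasDerivAt u (FC c z (u z)) z := by
    intro z hz
    have huda : DifferentiableAt ℂ u z := hudiff.differentiableAt (isOpen_ball.mem_nhds hz)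
    have hconv := (hunif.tendstoLocallyUniformlyOn).deriv
      (Filter.Eventually.of_forall (fun n => (hadm n).1)) isOpen_ball
    have h1 : Tendsto (fun n => deriv (v n) z) atTop (nhds (deriv u z)) :=
      hconv.tendsto_at hz
    have h2 : Tendsto (fun n => deriv (v (n+1)) z) atTop (nhds (deriv u z)) :=
      h1.comp (tendsto_add_atTop_nat 1)
    have h3 : ∀ n, deriv (v (n+1)) z = FC c z (v n z) := by
      intro n
      have := hPd (v n) (hadm n) z hz
      rw [← hvs n] at this
      exact this.deriv
    have h4 : Tendsto (fun n => FC c z (v n z)) atTop (nhds (deriv u z)) := by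
      have : (fun n => FC c z (v n z)) = fun n => deriv (v (n+1)) z := by
        funext n; rw [h3 n]
      rw [this]
      exact h2
    have h5 : Tendsto (fun n => FC c z (v n z)) atTop (nhds (FC c z (u z))) := by
      rw [tendsto_iff_dist_tendsto_zero]
      have hb : ∀ n, dist (FC c z (v n z)) (FC c z (u z)) ≤ Kp * (1/2 : ℝ)^n := by
        intro n
        rw [dist_eq_norm]
        have := norm_FC_sub_le hc hR₀0 hB0 (hznorm z hz) (hgB (v n) (hadm n) z hz)
          (hgB u ⟨hudiff, hub⟩ z hz)
        refine this.trans ?_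
        have := hdistu z hz n
        rw [dist_eq_norm] at this
        exact mul_le_mul_of_nonneg_left this hKp0
      have h6 : Tendsto (fun n => Kp * (1/2 : ℝ)^n) atTop (nhds 0) := by
        have := tendsto_pow_atTop_nhds_zero_of_lt_one (by norm_num : (0:ℝ) ≤ 1/2)
          (by norm_num : (1/2 : ℝ) < 1)
        simpa using this.const_mul Kp
      exact squeeze_zero (fun n => dist_nonneg) hb h6
    have h7 : deriv u z = FC c z (u z) := tendsto_nhds_unique h4 h5
    have := huda.hasDerivAt
    rwa [h7] at this
  have hu0 : u zc = xc := by
    have hvz : ∀ n, v n zc = xc := by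
      intro n
      induction n with
      | zero => rfl
      | succ n ih => rw [hvs n, hP0]
    have h1 : Tendsto (fun n => v n zc) atTop (nhds xc) := by
      have : (fun n => v n zc) = fun _ => xc := funext hvz
      rw [this]
      exact tendsto_const_nhds
    exact tendsto_nhds_unique (htend zc (mem_ball_self hε0)) h1
  exact ⟨ε, hε0, u, hu0, hub, hudiff, hderiv⟩

/-- The solution is analytic (within `Ici R`) at every point. -/
lemma analyticWithinAt_sol {c R : ℝ} (hc : 1 ≤ c) (hR : 0 < R) {φ : ℝ → ℝ}
    (hφ : ∀ r ∈ Ici R, HasDerivWithinAt φ (fR c r (φ r)) (Ici R) r) {t₀ : ℝ}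
    (ht₀ : t₀ ∈ Ici R) : AnalyticWithinAt ℝ φ (Ici R) t₀ := by
  have hc0 : (0:ℝ) ≤ c := le_trans zero_le_one hc
  have ht₀0 : 0 < t₀ := lt_of_lt_of_le hR ht₀
  set x₀ : ℝ := φ t₀ with hx₀
  obtain ⟨ε, hε0, u, hu0, hub, hudiff, huderiv⟩ := local_analytic c hc0 t₀ x₀ ht₀0
  set M : ℝ := |x₀| + 1 with hM
  have hM0 : 0 ≤ M := by positivity
  have hcw : ContinuousWithinAt φ (Ici R) t₀ := (hφ t₀ ht₀).continuousWithinAt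
  rcases Metric.continuousWithinAt_iff.1 hcw 1 one_pos with ⟨δ₁, hδ₁0, hδ₁⟩
  set δ : ℝ := min δ₁ ε / 2 with hδ
  have hδ0 : 0 < δ := by positivity
  have hδδ₁ : δ < δ₁ := by
    have : min δ₁ ε ≤ δ₁ := min_le_left _ _
    simp only [hδ]; linarith
  have hδε : δ < ε := by
    have : min δ₁ ε ≤ ε := min_le_right _ _
    simp only [hδ]; linarith
  set a : ℝ := max R (t₀ - δ) with ha
  set b : ℝ := t₀ + δ with hb
  have haR : R ≤ a := le_max_left _ _
  have hat₀ : a ≤ t₀ := max_le ht₀ (by linarith)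
  have hbt₀ : t₀ < b := by simp only [hb]; linarith
  have hab : a ≤ b := hat₀.trans hbt₀.le
  have hIccsub : Icc a b ⊆ Ici R := fun t ht => le_trans haR ht.1
  have hdistab : ∀ t ∈ Icc a b, |t - t₀| ≤ δ := by
    intro t ht
    rw [abs_le]
    constructor
    · have : t₀ - δ ≤ a := le_max_right _ _
      linarith [ht.1]
    · simp only [hb] at ht; linarith [ht.2]
  have hmemball : ∀ t ∈ Icc a b, ((t : ℝ) : ℂ) ∈ Metric.ball ((t₀ : ℝ) : ℂ) ε := by
    intro t ht
    rw [Metric.mem_ball, dist_eq_norm, ← Complex.ofReal_sub, Complex.norm_real,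
      Real.norm_eq_abs]
    exact lt_of_le_of_lt (hdistab t ht) hδε
  have hφM : ∀ t ∈ Icc a b, |φ t| ≤ M := by
    intro t ht
    have h1 : dist t t₀ < δ₁ := by
      rw [Real.dist_eq]
      exact lt_of_le_of_lt (hdistab t ht) hδδ₁
    have h2 := hδ₁ (hIccsub ht) h1
    rw [Real.dist_eq] at h2
    rw [hM]
    have := abs_sub_abs_le_abs_sub (φ t) (φ t₀)
    rw [← hx₀] at h2
    linarith [abs_abs_sub_abs_le_abs_sub (φ t) x₀]
  have huM : ∀ t ∈ Icc a b, ‖u ((t : ℝ) : ℂ)‖ ≤ M := by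
    intro t ht
    have h1 := hub _ (hmemball t ht)
    have h2 : ‖((x₀ : ℝ) : ℂ)‖ = |x₀| := by rw [Complex.norm_real, Real.norm_eq_abs]
    calc ‖u ((t : ℝ) : ℂ)‖ = ‖(u ((t : ℝ) : ℂ) - ((x₀ : ℝ) : ℂ)) + ((x₀ : ℝ) : ℂ)‖ := by
          ring_nf
      _ ≤ ‖u ((t : ℝ) : ℂ) - ((x₀ : ℝ) : ℂ)‖ + ‖((x₀ : ℝ) : ℂ)‖ := norm_add_le _ _
      _ ≤ 1 + |x₀| := by rw [h2]; linarith
      _ = M := by rw [hM]; ring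
  have huRd : ∀ t ∈ Icc a b, HasDerivAt (fun s : ℝ => u ((s : ℝ) : ℂ))
      (FC c ((t : ℝ) : ℂ) (u ((t : ℝ) : ℂ))) t :=
    fun t ht => (huderiv _ (hmemball t ht)).comp_ofReal
  have hucont : ContinuousOn (fun s : ℝ => u ((s : ℝ) : ℂ)) (Icc a b) :=
    fun t ht => ((huRd t ht).continuousAt).continuousWithinAt
  have hφcont : ContinuousOn (fun t => ((φ t : ℝ) : ℂ)) (Icc a b) :=
    Complex.continuous_ofReal.comp_continuousOn
      (fun t ht => ((hφ t (hIccsub ht)).continuousWithinAt).mono hIccsub)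
  have hlip : ∀ t : ℝ, LipschitzOnWith (Real.toNNReal (KK c R M))
      (fun w => FC c (((max t R : ℝ)) : ℂ) w) (Metric.closedBall (0 : ℂ) M) := by
    intro t
    apply FC_lipschitzOnWith hc0 hR hM0
    rw [Complex.norm_real, Real.norm_eq_abs, abs_of_pos (lt_of_lt_of_le hR (le_max_right t R))]
    exact le_max_right t R
  have keyR : EqOn (fun t => ((φ t : ℝ) : ℂ)) (fun s : ℝ => u ((s : ℝ) : ℂ)) (Icc t₀ b) := by
    apply ODE_solution_unique_of_mem_Icc_right (fun t _ => hlip t)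
      (hφcont.mono (Icc_subset_Icc_left hat₀))
    · intro t ht
      have htR : R ≤ t := ht₀.trans ht.1
      have h1 : HasDerivWithinAt φ (fR c t (φ t)) (Ici t) t :=
        (hφ t htR).mono (Ici_subset_Ici.2 htR)
      have h2 := ofReal_hasDerivWithinAt h1
      have heq : ((fR c t (φ t) : ℝ) : ℂ) = FC c (((max t R : ℝ)) : ℂ) ((φ t : ℝ) : ℂ) := by
        rw [max_eq_left htR, ofReal_fR]
      rwa [heq] at h2
    · intro t ht
      rw [mem_closedBall_zero_iff, Complex.norm_real, Real.norm_eq_abs]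
      exact hφM t ⟨hat₀.trans ht.1, ht.2.le⟩
    · exact hucont.mono (Icc_subset_Icc_left hat₀)
    · intro t ht
      have htR : R ≤ t := ht₀.trans ht.1
      have h1 := (huRd t ⟨hat₀.trans ht.1, ht.2.le⟩).hasDerivWithinAt (s := Ici t)
      have heq : FC c ((t : ℝ) : ℂ) (u ((t : ℝ) : ℂ)) =
          FC c (((max t R : ℝ)) : ℂ) (u ((t : ℝ) : ℂ)) := by rw [max_eq_left htR]
      rwa [heq] at h1
    · intro t ht
      rw [mem_closedBall_zero_iff]
      exact huM t ⟨hat₀.trans ht.1, ht.2.le⟩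
    · show ((φ t₀ : ℝ) : ℂ) = u ((t₀ : ℝ) : ℂ)
      rw [hu0]
  have keyL : EqOn (fun t => ((φ t : ℝ) : ℂ)) (fun s : ℝ => u ((s : ℝ) : ℂ)) (Icc a t₀) := by
    apply ODE_solution_unique_of_mem_Icc_left (fun t _ => hlip t)
      (hφcont.mono (Icc_subset_Icc_right hbt₀.le))
    · intro t ht
      have htR : R < t := lt_of_le_of_lt haR ht.1
      have h1 : HasDerivAt φ (fR c t (φ t)) t :=
        (hφ t htR.le).hasDerivAt (Ici_mem_nhds htR)
      have h2 := ofReal_hasDerivWithinAt (h1.hasDerivWithinAt (s := Iic t))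
      have heq : ((fR c t (φ t) : ℝ) : ℂ) = FC c (((max t R : ℝ)) : ℂ) ((φ t : ℝ) : ℂ) := by
        rw [max_eq_left htR.le, ofReal_fR]
      rwa [heq] at h2
    · intro t ht
      rw [mem_closedBall_zero_iff, Complex.norm_real, Real.norm_eq_abs]
      exact hφM t ⟨ht.1.le, ht.2.trans hbt₀.le⟩
    · exact hucont.mono (Icc_subset_Icc_right hbt₀.le)
    · intro t ht
      have htR : R ≤ t := haR.trans ht.1.le
      have h1 := (huRd t ⟨ht.1.le, ht.2.trans hbt₀.le⟩).hasDerivWithinAt (s := Iic t)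
      have heq : FC c ((t : ℝ) : ℂ) (u ((t : ℝ) : ℂ)) =
          FC c (((max t R : ℝ)) : ℂ) (u ((t : ℝ) : ℂ)) := by rw [max_eq_left htR]
      rwa [heq] at h1
    · intro t ht
      rw [mem_closedBall_zero_iff]
      exact huM t ⟨ht.1.le, ht.2.trans hbt₀.le⟩
    · show ((φ t₀ : ℝ) : ℂ) = u ((t₀ : ℝ) : ℂ)
      rw [hu0]
  have heqall : ∀ t ∈ Icc a b, ((φ t : ℝ) : ℂ) = u ((t : ℝ) : ℂ) := by
    intro t ht
    rcases le_total t t₀ with h | h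
    · exact keyL ⟨ht.1, h⟩
    · exact keyR ⟨h, ht.2⟩
  -- analyticity of the complex solution restricted to the reals
  have hu_c : AnalyticAt ℂ u ((t₀ : ℝ) : ℂ) :=
    hudiff.analyticAt (isOpen_ball.mem_nhds (Metric.mem_ball_self hε0))
  have hu_r : AnalyticAt ℝ u ((t₀ : ℝ) : ℂ) := hu_c.restrictScalars
  have hofReal : AnalyticAt ℝ (fun t : ℝ => ((t : ℝ) : ℂ)) t₀ :=
    Complex.ofRealCLM.analyticAt t₀
  have hcomp : AnalyticAt ℝ (fun t : ℝ => u ((t : ℝ) : ℂ)) t₀ := hu_r.comp hofReal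
  have hre : AnalyticAt ℝ (fun t : ℝ => (u ((t : ℝ) : ℂ)).re) t₀ :=
    (Complex.reCLM.analyticAt _).comp hcomp
  have hmemnhds : Ici R ∩ Ioo (t₀ - δ) b ∈ nhdsWithin t₀ (Ici R) := by
    rw [mem_nhdsWithin]
    exact ⟨Ioo (t₀ - δ) b, isOpen_Ioo, ⟨by linarith, hbt₀⟩, fun s hs => ⟨hs.2, hs.1⟩⟩
  have hev : φ =ᶠ[nhdsWithin t₀ (Ici R)] (fun t : ℝ => (u ((t : ℝ) : ℂ)).re) := by
    apply Filter.eventually_of_mem hmemnhds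
    intro t ht
    have htab : t ∈ Icc a b := ⟨max_le ht.1 ht.2.1.le, ht.2.2.le⟩
    have := heqall t htab
    have h2 : (((φ t : ℝ) : ℂ)).re = (u ((t : ℝ) : ℂ)).re := by rw [this]
    simpa using h2
  apply hre.analyticWithinAt.congr_of_eventuallyEq hev
  have h3 := heqall t₀ ⟨hat₀, hbt₀.le⟩
  have h4 : (((φ t₀ : ℝ) : ℂ)).re = (u ((t₀ : ℝ) : ℂ)).re := by rw [h3]
  simpa using h4

theorem translator_ode_existence_uniqueness {n : ℕ} (hn : 2 ≤ n) (R : ℝ) (hR : 0 < R)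
    (φ₀ : ℝ) :
    ∃ φ : ℝ → ℝ, ContDiffOn ℝ (⊤ : ℕ∞) φ (Ici R) ∧ φ R = φ₀ ∧
      (∀ r ∈ Ici R,
        HasDerivWithinAt φ ((1 + φ r ^ 2) * (1 - ((n : ℝ) - 1) * φ r / r)) (Ici R) r) ∧
      ∀ ψ : ℝ → ℝ, ψ R = φ₀ →
        (∀ r ∈ Ici R,
          HasDerivWithinAt ψ ((1 + ψ r ^ 2) * (1 - ((n : ℝ) - 1) * ψ r / r)) (Ici R) r) →
        EqOn ψ φ (Ici R) := by
  have hc : (1:ℝ) ≤ (n : ℝ) - 1 := by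
    have : (2:ℝ) ≤ (n : ℝ) := by exact_mod_cast hn
    linarith
  obtain ⟨φ, hφ0, hφd⟩ := exists_global ((n : ℝ) - 1) R φ₀ hc hR
  have hφd' : ∀ r ∈ Ici R,
      HasDerivWithinAt φ ((1 + φ r ^ 2) * (1 - ((n : ℝ) - 1) * φ r / r)) (Ici R) r := by
    intro r hr
    have := hφd r hr
    rwa [fR] at this
  refine ⟨φ, ?_, hφ0, hφd', ?_⟩
  · have han : AnalyticOn ℝ φ (Ici R) :=
      fun t₀ ht₀ => analyticWithinAt_sol hc hR hφd ht₀
    exact han.contDiffOn (uniqueDiffOn_Ici R)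
  · intro ψ hψ0 hψd r hr
    have hψd2 : ∀ t ∈ Icc R r, HasDerivWithinAt ψ (fR ((n : ℝ) - 1) t (ψ t)) (Icc R r) t := by
      intro t ht
      have := hψd t ht.1
      rw [← fR] at this
      exact this.mono (fun s hs => hs.1)
    have hφd2 : ∀ t ∈ Icc R r, HasDerivWithinAt φ (fR ((n : ℝ) - 1) t (φ t)) (Icc R r) t := by
      intro t ht
      exact (hφd t ht.1).mono (fun s hs => hs.1)
    exact uniq_on_Icc hc hR hψd2 hφd2 (by rw [hψ0, hφ0]) ⟨hr, le_rfl⟩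
end
end

section
/- Let n ≥ 2 be an integer, R > 0, and let φ : [R,∞) → ℝ be a solution of φ'(r) = (1+φ(r)²)(1 − (n−1)φ(r)/r). Then there exist constants C > 0 and r₀ ≥ R such that |φ(r) − r/(n−1) + 1/r| ≤ C/r² for all r ≥ r₀; that is, φ(r) = r/(n−1) − 1/r + O(r⁻²) as r → ∞. -/
/-! Write `N = n - 1`. Every estimate is a barrier argument: if `g' ≥ c / r` wherever `g ≤ 0`,
then `g` cannot stay negative (it would grow like `c log r`) and, once nonnegative, can never
cross zero again. This is applied in turn to `r / N - φ`, `φ - ε r`, `K / r - (r / N - φ)` and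
finally to `1 / r² ∓ (φ - r / N + 1 / r)`, each time feeding the bounds already obtained into
the right-hand side `(1 + φ²)(1 - N φ / r)`. -/

open Set Filter Topology Real

theorem hasDerivAt_const_div_pow (K : ℝ) (m : ℕ) {x : ℝ} (hx : x ≠ 0) :
    HasDerivAt (fun r => K / r ^ m) (-(m * K) / x ^ (m + 1)) x := by
  refine ((hasDerivAt_const x K).div (hasDerivAt_pow m x) (pow_ne_zero m hx)).congr_deriv ?_
  rcases m with _ | m
  · simp
  · simp only [Nat.add_sub_cancel]
    field_simp
    ring

theorem eventually_div_sq_add_div_pow_three_le (a b : ℝ) {c : ℝ} (hc : 0 < c) :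
    ∀ᶠ x in atTop, a / x ^ 2 + b / x ^ 3 ≤ c / x := by
  have hlim : Tendsto (fun x : ℝ => a / x + b / x ^ 2) atTop (𝓝 0) := by
    have hb : Tendsto (fun x : ℝ => b / x ^ 2) atTop (𝓝 0) :=
      tendsto_const_nhds.div_atTop (tendsto_pow_atTop two_ne_zero)
    simpa using (tendsto_const_nhds.div_atTop tendsto_id).add hb
  filter_upwards [hlim.eventually (ge_mem_nhds hc), eventually_gt_atTop 0] with x hx hx0
  calc a / x ^ 2 + b / x ^ 3 = (a / x + b / x ^ 2) / x := by field_simp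
    _ ≤ c / x := by gcongr

theorem eventually_nonneg_of_div_le_deriv_of_nonpos {g g' : ℝ → ℝ} {c : ℝ} (hc : 0 < c)
    (hg : ∀ᶠ x in atTop, HasDerivAt g (g' x) x)
    (hbad : ∀ᶠ x in atTop, g x ≤ 0 → c / x ≤ g' x) : ∀ᶠ x in atTop, 0 ≤ g x := by
  obtain ⟨a, ha⟩ := eventually_atTop.1 ((hg.and hbad).and (eventually_gt_atTop 0))
  have hcont : ∀ y b, a ≤ y → ContinuousOn g (Icc y b) := fun y b hy z hz =>
    (ha z (hy.trans hz.1)).1.1.continuousAt.continuousWithinAt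
  obtain ⟨b, hab, hb⟩ : ∃ b ≥ a, 0 ≤ g b := by
    by_contra! hneg
    obtain ⟨x, hxa, hx⟩ := ((eventually_ge_atTop a).and
      ((tendsto_log_atTop.const_mul_atTop hc).eventually_ge_atTop (c * log a - g a))).exists
    have hlog : g a + (c * log x - c * log a) ≤ g x := by
      refine image_le_of_deriv_right_le_deriv_boundary
        (f := fun y => g a + (c * log y - c * log a)) (f' := fun y => c / y) (B' := g')
        ?_ ?_ (by simp) (hcont a x le_rfl) ?_ ?_ ⟨hxa, le_rfl⟩
      · exact fun y hy => (((continuousAt_log (ha y hy.1).2.ne').const_mul c).sub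
          continuousAt_const |>.const_add _).continuousWithinAt
      · intro y hy
        simpa [div_eq_mul_inv] using (((hasDerivAt_log (ha y hy.1).2.ne').const_mul c).sub_const
          (c * log a) |>.const_add (g a)).hasDerivWithinAt
      · exact fun y hy => (ha y hy.1).1.1.hasDerivWithinAt
      · exact fun y hy => (ha y hy.1).1.2 (hneg y hy.1).le
    linarith [hneg x hxa]
  filter_upwards [eventually_ge_atTop b] with x hx
  have hneg_le : -g x ≤ 0 := by
    refine image_le_of_deriv_right_lt_deriv_boundary (f := fun y => -g y) (f' := fun y => -g' y)
      (B := 0) (B' := 0) (hcont b x hab).neg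
      (fun y hy => (ha y (hab.trans hy.1)).1.1.neg.hasDerivWithinAt) (by simpa using hb)
      (fun _ => hasDerivAt_const _ _) ?_ ⟨hx, le_rfl⟩
    intro y hy hgy
    obtain ⟨⟨-, hbad_y⟩, hy0⟩ := ha y (hab.trans hy.1)
    have hgy' : g y = 0 := neg_eq_zero.1 hgy
    have : c / y ≤ g' y := hbad_y hgy'.le
    have : 0 < c / y := div_pos hc hy0
    simp only [Pi.zero_apply]
    linarith
  linarith

section

variable {N : ℝ} {φ : ℝ → ℝ}

theorem eventually_le_div (hN : 0 < N)
    (hφ : ∀ᶠ r in atTop, HasDerivAt φ ((1 + φ r ^ 2) * (1 - N * φ r / r)) r) :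
    ∀ᶠ r in atTop, φ r ≤ r / N := by
  have key := eventually_nonneg_of_div_le_deriv_of_nonpos (g := fun r => r / N - φ r)
    (one_div_pos.2 hN) (hφ.mono fun r h => ((hasDerivAt_id' r).div_const N).sub h) ?_
  · exact key.mono fun r h => sub_nonneg.1 h
  filter_upwards [eventually_ge_atTop 1] with x hx hbad
  have hslope : 1 - N * φ x / x ≤ 0 := by
    rw [sub_nonpos, le_div_iff₀ (by linarith), one_mul, ← div_le_iff₀' hN]
    linarith
  have hφ' : (1 + φ x ^ 2) * (1 - N * φ x / x) ≤ 0 :=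
    mul_nonpos_of_nonneg_of_nonpos (by positivity) hslope
  have : 1 / N / x ≤ 1 / N := div_le_self (by positivity) hx
  linarith

theorem eventually_mul_le (hN : 0 < N)
    (hφ : ∀ᶠ r in atTop, HasDerivAt φ ((1 + φ r ^ 2) * (1 - N * φ r / r)) r)
    {ε : ℝ} (hε : 0 < ε) (hεN : (N + 1) * ε < 1) :
    ∀ᶠ r in atTop, ε * r ≤ φ r := by
  have key := eventually_nonneg_of_div_le_deriv_of_nonpos (g := fun r => φ r - ε * r)
    (c := 1 - (N + 1) * ε) (by linarith)
    (hφ.mono fun r h => h.sub ((hasDerivAt_id' r).const_mul ε)) ?_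
  · exact key.mono fun r h => sub_nonneg.1 h
  filter_upwards [eventually_ge_atTop 1] with x hx hbad
  have hslope : 1 - N * ε ≤ 1 - N * φ x / x := by
    rw [sub_le_sub_iff_left, div_le_iff₀ (by linarith)]
    nlinarith
  have hφ' : 1 - N * φ x / x ≤ (1 + φ x ^ 2) * (1 - N * φ x / x) :=
    le_mul_of_one_le_left (by nlinarith) (by nlinarith)
  have : (1 - (N + 1) * ε) / x ≤ 1 - (N + 1) * ε := div_le_self (by linarith) hx
  linarith

theorem exists_eventually_div_sub_le (hN : 0 < N)
    (hφ : ∀ᶠ r in atTop, HasDerivAt φ ((1 + φ r ^ 2) * (1 - N * φ r / r)) r) :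
    ∃ K, ∀ᶠ r in atTop, r / N - φ r ≤ K / r := by
  set ε := 1 / (N + 2)
  have hε : 0 < ε := by positivity
  have hεN : (N + 1) * ε < 1 := by
    rw [← mul_div_assoc, mul_one, div_lt_one (by linarith)]; linarith
  set K := (2 + 1 / N) / (ε ^ 2 * N) with hK_def
  have hK : 0 < K := by positivity
  have hεK : ε ^ 2 * N * K = 2 + 1 / N := by rw [hK_def]; field_simp
  refine ⟨K, ?_⟩
  have key := eventually_nonneg_of_div_le_deriv_of_nonpos (g := fun r => K / r - (r / N - φ r))
    (g' := fun r => -K / r ^ 2 - (1 / N - (1 + φ r ^ 2) * (1 - N * φ r / r))) one_pos ?_ ?_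
  · exact key.mono fun r h => sub_nonneg.1 h
  · filter_upwards [hφ, eventually_ne_atTop 0] with r h hr
    have hK' : HasDerivAt (fun r => K / r) (-K / r ^ 2) r := by
      simpa using hasDerivAt_const_div_pow K 1 hr
    exact hK'.sub (((hasDerivAt_id' r).div_const N).sub h)
  filter_upwards [eventually_mul_le hN hφ hε hεN, eventually_ge_atTop (max 1 K)]
    with x hlow hx hbad
  have hx1 : 1 ≤ x := le_of_max_le_left hx
  have hx0 : 0 < x := by linarith
  have hslope : N * K / x ^ 2 ≤ 1 - N * φ x / x := by
    have : K / x ≤ x / N - φ x := sub_nonpos.1 hbad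
    calc N * K / x ^ 2 = N / x * (K / x) := by ring
      _ ≤ N / x * (x / N - φ x) := by gcongr
      _ = 1 - N * φ x / x := by field_simp
  have hsq : ε ^ 2 * x ^ 2 ≤ 1 + φ x ^ 2 := by nlinarith [mul_pos hε hx0]
  have hφ' : 2 + 1 / N ≤ (1 + φ x ^ 2) * (1 - N * φ x / x) := by
    calc 2 + 1 / N = ε ^ 2 * x ^ 2 * (N * K / x ^ 2) := by rw [← hεK]; field_simp
      _ ≤ _ := mul_le_mul hsq hslope (by positivity) (by positivity)
  have hKx : K / x ^ 2 ≤ 1 := by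
    rw [div_le_one (by positivity)]; nlinarith [le_of_max_le_right hx]
  have : 1 / x ≤ 1 := div_le_one_of_le₀ hx1 hx0.le
  rw [neg_div]
  linarith

theorem eventually_sub_div_add_inv_le (hN : 0 < N)
    (hφ : ∀ᶠ r in atTop, HasDerivAt φ ((1 + φ r ^ 2) * (1 - N * φ r / r)) r) :
    ∀ᶠ r in atTop, φ r - r / N + 1 / r ≤ 1 / r ^ 2 := by
  have key := eventually_nonneg_of_div_le_deriv_of_nonpos
    (g := fun r => 1 / r ^ 2 - (φ r - r / N + 1 / r))
    (g' := fun r => -2 / r ^ 3 - ((1 + φ r ^ 2) * (1 - N * φ r / r) - 1 / N + -1 / r ^ 2))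
    (c := 1 / (2 * N)) (by positivity) ?_ ?_
  · exact key.mono fun r h => sub_nonneg.1 h
  · filter_upwards [hφ, eventually_ne_atTop 0] with r h hr
    have h1 : HasDerivAt (fun r => 1 / r) (-1 / r ^ 2) r := by
      simpa using hasDerivAt_const_div_pow 1 1 hr
    have h2 : HasDerivAt (fun r => 1 / r ^ 2) (-2 / r ^ 3) r := by
      simpa using hasDerivAt_const_div_pow 1 2 hr
    exact h2.sub ((h.sub ((hasDerivAt_id' r).div_const N)).add h1)
  filter_upwards [eventually_le_div hN hφ, eventually_ge_atTop (max N 1),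
    eventually_div_sq_add_div_pow_three_le (N - 1) (2 - N) (c := 1 / (2 * N)) (by positivity)]
    with x hA hx hsmall hbad
  have hxN : N ≤ x := le_of_max_le_left hx
  have hx1 : 1 ≤ x := le_of_max_le_right hx
  have hx0 : 0 < x := by linarith
  have hbad' : x / N - φ x ≤ 1 / x - 1 / x ^ 2 := by linarith
  have hfactor : 1 - N * φ x / x = N / x * (x / N - φ x) := by field_simp
  have hw0 : 0 ≤ 1 - N * φ x / x := by
    rw [hfactor]; exact mul_nonneg (by positivity) (by linarith)
  have hw : 1 - N * φ x / x ≤ N / x * (1 / x - 1 / x ^ 2) := by rw [hfactor]; gcongr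
  have hφ0 : 0 ≤ φ x := by
    have : 1 ≤ x / N := (one_le_div hN).2 hxN
    have : 1 / x ≤ 1 := div_le_one_of_le₀ hx1 hx0.le
    have : 0 ≤ 1 / x ^ 2 := by positivity
    linarith
  have hsq : 1 + φ x ^ 2 ≤ 1 + (x / N) ^ 2 := by gcongr
  have hφ' : (1 + φ x ^ 2) * (1 - N * φ x / x) ≤
      (1 + (x / N) ^ 2) * (N / x * (1 / x - 1 / x ^ 2)) :=
    mul_le_mul hsq hw hw0 (by positivity)
  have hexpand : (1 + (x / N) ^ 2) * (N / x * (1 / x - 1 / x ^ 2)) =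
      1 / N - 1 / N / x + N / x ^ 2 - N / x ^ 3 := by
    field_simp; ring
  rw [hexpand] at hφ'
  linear_combination hφ' + hsmall

theorem eventually_neg_inv_sq_le (hN : 0 < N)
    (hφ : ∀ᶠ r in atTop, HasDerivAt φ ((1 + φ r ^ 2) * (1 - N * φ r / r)) r) :
    ∀ᶠ r in atTop, -(1 / r ^ 2) ≤ φ r - r / N + 1 / r := by
  obtain ⟨K, hK⟩ := exists_eventually_div_sub_le hN hφ
  have key := eventually_nonneg_of_div_le_deriv_of_nonpos
    (g := fun r => φ r - r / N + 1 / r + 1 / r ^ 2)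
    (g' := fun r => (1 + φ r ^ 2) * (1 - N * φ r / r) - 1 / N + -1 / r ^ 2 + -2 / r ^ 3)
    (c := 1 / (2 * N)) (by positivity) ?_ ?_
  · exact key.mono fun r h => by linarith
  · filter_upwards [hφ, eventually_ne_atTop 0] with r h hr
    have h1 : HasDerivAt (fun r => 1 / r) (-1 / r ^ 2) r := by
      simpa using hasDerivAt_const_div_pow 1 1 hr
    have h2 : HasDerivAt (fun r => 1 / r ^ 2) (-2 / r ^ 3) r := by
      simpa using hasDerivAt_const_div_pow 1 2 hr
    exact ((h.sub ((hasDerivAt_id' r).div_const N)).add h1).add h2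
  filter_upwards [hK, eventually_gt_atTop 0,
    eventually_div_sq_add_div_pow_three_le (2 * K + 1 - N) (2 * K + 2 - N) (c := 1 / (2 * N))
      (by positivity)] with x hC hx0 hsmall hbad
  have hbad' : 1 / x + 1 / x ^ 2 ≤ x / N - φ x := by linarith
  have hfactor : 1 - N * φ x / x = N / x * (x / N - φ x) := by field_simp
  have hw : N / x * (1 / x + 1 / x ^ 2) ≤ 1 - N * φ x / x := by rw [hfactor]; gcongr
  have hsq : 1 + (x / N) ^ 2 - 2 * K / N ≤ 1 + φ x ^ 2 := by
    have : 2 * K / N = 2 * (x / N) * (K / x) := by field_simp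
    nlinarith [sq_nonneg (φ x - x / N), mul_le_mul_of_nonneg_left hC (by positivity : 0 ≤ x / N)]
  have hφ' : (1 + (x / N) ^ 2 - 2 * K / N) * (N / x * (1 / x + 1 / x ^ 2)) ≤
      (1 + φ x ^ 2) * (1 - N * φ x / x) :=
    mul_le_mul hsq hw (by positivity) (by positivity)
  have hexpand : (1 + (x / N) ^ 2 - 2 * K / N) * (N / x * (1 / x + 1 / x ^ 2)) =
      1 / N + 1 / N / x + (N - 2 * K) / x ^ 2 + (N - 2 * K) / x ^ 3 := by
    field_simp; ring
  rw [hexpand] at hφ'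
  linear_combination hφ' + hsmall

end

theorem translator_ode_asymptotics_general {n : ℕ} (hn : 2 ≤ n) (R : ℝ)
    (φ : ℝ → ℝ)
    (hφ : ∀ r ∈ Ici R,
      HasDerivWithinAt φ ((1 + φ r ^ 2) * (1 - ((n : ℝ) - 1) * φ r / r)) (Ici R) r) :
    ∃ C > (0 : ℝ), ∃ r₀ ≥ R, ∀ r ≥ r₀,
      |φ r - r / ((n : ℝ) - 1) + 1 / r| ≤ C / r ^ 2 := by
  have hN : (0 : ℝ) < n - 1 := by
    have : (2 : ℝ) ≤ n := by exact_mod_cast hn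
    linarith
  have hφ' : ∀ᶠ r in atTop,
      HasDerivAt φ ((1 + φ r ^ 2) * (1 - ((n : ℝ) - 1) * φ r / r)) r :=
    (eventually_gt_atTop R).mono fun r hr => (hφ r (le_of_lt hr)).hasDerivAt (Ici_mem_nhds hr)
  obtain ⟨r₀, hr₀⟩ := eventually_atTop.1
    ((eventually_neg_inv_sq_le hN hφ').and (eventually_sub_div_add_inv_le hN hφ'))
  exact ⟨1, one_pos, max r₀ R, le_max_right _ _, fun r hr =>
    abs_le.2 (hr₀ r (le_of_max_le_left hr))⟩

theorem translator_ode_asymptotics {n : ℕ} (hn : 2 ≤ n) (R : ℝ) (hR : 0 < R)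
    (φ : ℝ → ℝ)
    (hφ : ∀ r ∈ Ici R,
      HasDerivWithinAt φ ((1 + φ r ^ 2) * (1 - ((n : ℝ) - 1) * φ r / r)) (Ici R) r) :
    ∃ C > (0 : ℝ), ∃ r₀ ≥ R, ∀ r ≥ r₀,
      |φ r - r / ((n : ℝ) - 1) + 1 / r| ≤ C / r ^ 2 :=
  translator_ode_asymptotics_general hn R φ hφ
end

section
/- Let n ≥ 2 be an integer, R > 0, and let φ : [R,∞) → ℝ be a solution of φ'(r) = (1+φ(r)²)(1 − (n−1)φ(r)/r). Then at every r where φ(r) > r/(n−1) one has φ'(r) < 0, and there exists r̃ ≥ R such that φ(r) < r/(n−1) (and hence φ'(r) > 0) for all r > r̃. -/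
/-!
Write `c = n - 1`. The right-hand side of the ODE has the sign of `r / c - φ r`, so `φ`
decreases above the line `r ↦ r / c` and increases below it. The solution cannot stay above the
line forever: it would be nonincreasing while the line grows without bound. Once below the line
it stays strictly below, since at a contact point `φ' = 0` while the line has slope `1 / c > 0`.
-/

noncomputable section
open Set Filter Topology

theorem image_lt_of_deriv_lt_deriv_boundary_Ici {f f' B B' : ℝ → ℝ} {a : ℝ}
    (hf : ∀ x ∈ Ici a, HasDerivWithinAt f (f' x) (Ici a) x) (hB : ∀ x, HasDerivAt B (B' x) x)
    (ha : f a < B a) (bound : ∀ x ∈ Ici a, f x = B x → f' x < B' x) :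
    ∀ x ∈ Ici a, f x < B x := by
  intro x hx
  have fence : ∀ y ∈ Icc a x, f y ≤ B y :=
    image_le_of_deriv_right_lt_deriv_boundary
      (fun y hy => (hf y hy.1).continuousWithinAt.mono Icc_subset_Ici_self)
      (fun y hy => (hf y hy.1).mono (Ici_subset_Ici.2 hy.1)) ha.le hB
      (fun y hy => bound y hy.1)
  rcases (mem_Ici.1 hx).eq_or_lt with rfl | hax
  · exact ha
  refine (fence x ⟨hax.le, le_rfl⟩).lt_of_ne fun hfx => ?_
  -- `B - f` vanishes at `x` with positive derivative, so it is negative just left of `x`.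
  have hderiv : HasDerivWithinAt (fun y => B y - f y) (B' x - f' x) (Ioo a x) x :=
    ((hB x).hasDerivWithinAt.sub (hf x hx)).mono fun y hy => mem_Ici.2 hy.1.le
  have hslope : Tendsto (slope (fun y => B y - f y) x) (𝓝[<] x) (𝓝 (B' x - f' x)) := by
    rw [← nhdsWithin_Ioo_eq_nhdsLT hax]
    exact (hasDerivWithinAt_iff_tendsto_slope' fun h => lt_irrefl x h.2).1 hderiv
  obtain ⟨y, hy_slope, hay, hyx⟩ :=
    ((hslope.eventually (eventually_gt_nhds (sub_pos.2 (bound x hx hfx)))).and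
      (Ioo_mem_nhdsLT hax)).exists
  have hneg := neg_of_slope_pos hyx hy_slope (sub_eq_zero.2 hfx.symm)
  linarith [fence y ⟨hay.le, hyx.le⟩]

def translatorRHS (c r p : ℝ) : ℝ := (1 + p ^ 2) * (1 - c * p / r)

section translatorRHS

variable {c r p : ℝ}

theorem translatorRHS_neg (hc : 0 < c) (hr : 0 < r) (h : r / c < p) : translatorRHS c r p < 0 := by
  have : 1 < c * p / r := by rw [lt_div_iff₀ hr]; rw [div_lt_iff₀ hc] at h; linarith
  exact mul_neg_of_pos_of_neg (by positivity) (by linarith)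

theorem translatorRHS_nonpos (hc : 0 < c) (hr : 0 < r) (h : r / c ≤ p) :
    translatorRHS c r p ≤ 0 := by
  have : 1 ≤ c * p / r := by rw [le_div_iff₀ hr]; rw [div_le_iff₀ hc] at h; linarith
  exact mul_nonpos_of_nonneg_of_nonpos (by positivity) (by linarith)

theorem translatorRHS_pos (hc : 0 < c) (hr : 0 < r) (h : p < r / c) : 0 < translatorRHS c r p := by
  have : c * p / r < 1 := by rw [div_lt_iff₀ hr]; rw [lt_div_iff₀ hc] at h; linarith
  exact mul_pos (by positivity) (by linarith)

end translatorRHS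

section translatorSolution

variable {c R : ℝ} {φ : ℝ → ℝ}

theorem exists_lt_div_of_translator (hc : 0 < c) (hR : 0 < R)
    (hφ : ∀ r ∈ Ici R, HasDerivWithinAt φ (translatorRHS c r (φ r)) (Ici R) r) :
    ∃ s ∈ Ici R, φ s < s / c := by
  by_contra! habove
  have hanti : AntitoneOn φ (Ici R) :=
    antitoneOn_of_hasDerivWithinAt_nonpos (convex_Ici R)
      (fun r hr => (hφ r hr).continuousWithinAt)
      (fun r hr => (hφ r (interior_subset hr)).mono interior_subset)
      (fun r hr => translatorRHS_nonpos hc (hR.trans_le (interior_subset hr))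
        (habove r (interior_subset hr)))
  -- At `r = c φ R + 1` the line lies above `φ R`, which bounds `φ r` by antitonicity.
  have hφR : R ≤ c * φ R := (div_le_iff₀' hc).1 (habove R self_mem_Ici)
  have hr : c * φ R + 1 ∈ Ici R := by rw [mem_Ici]; linarith
  have hline : (c * φ R + 1) / c ≤ φ R :=
    (habove _ hr).trans (hanti self_mem_Ici hr hr)
  rw [div_le_iff₀ hc] at hline
  linarith

theorem lt_div_of_translator (hc : 0 < c) (hR : 0 < R)
    (hφ : ∀ r ∈ Ici R, HasDerivWithinAt φ (translatorRHS c r (φ r)) (Ici R) r)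
    {s : ℝ} (hs : s ∈ Ici R) (hφs : φ s < s / c) : ∀ r ∈ Ici s, φ r < r / c :=
  image_lt_of_deriv_lt_deriv_boundary_Ici
    (fun r hr => (hφ r (Ici_subset_Ici.2 hs hr)).mono (Ici_subset_Ici.2 hs))
    (fun r => (hasDerivAt_id r).div_const c) hφs
    (fun r hr hφr => (translatorRHS_nonpos hc (hR.trans_le ((mem_Ici.1 hs).trans hr))
      hφr.ge).trans_lt (by simpa using hc))

end translatorSolution

theorem translator_ode_sign {n : ℕ} (hn : 2 ≤ n) (R : ℝ) (hR : 0 < R)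
    (φ : ℝ → ℝ)
    (hφ : ∀ r ∈ Ici R,
      HasDerivWithinAt φ ((1 + φ r ^ 2) * (1 - ((n : ℝ) - 1) * φ r / r)) (Ici R) r) :
    (∀ r ∈ Ici R, r / ((n : ℝ) - 1) < φ r → derivWithin φ (Ici R) r < 0) ∧
    ∃ rt ≥ R, ∀ r > rt, φ r < r / ((n : ℝ) - 1) ∧ 0 < derivWithin φ (Ici R) r := by
  have hc : (0 : ℝ) < (n : ℝ) - 1 := by
    have : (2 : ℝ) ≤ n := by exact_mod_cast hn
    linarith
  have hderiv :
      ∀ r ∈ Ici R, derivWithin φ (Ici R) r = translatorRHS ((n : ℝ) - 1) r (φ r) :=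
    fun r hr => (hφ r hr).derivWithin (uniqueDiffOn_Ici R r hr)
  have hpos : ∀ r ∈ Ici R, 0 < r := fun r hr => hR.trans_le hr
  refine ⟨fun r hr h => hderiv r hr ▸ translatorRHS_neg hc (hpos r hr) h, ?_⟩
  obtain ⟨s, hs, hφs⟩ := exists_lt_div_of_translator hc hR hφ
  refine ⟨s, hs, fun r hr => ?_⟩
  have hrR : r ∈ Ici R := (mem_Ici.1 hs).trans hr.le
  have hbelow := lt_div_of_translator hc hR hφ hs hφs r hr.le
  exact ⟨hbelow, hderiv r hrR ▸ translatorRHS_pos hc (hpos r hrR) hbelow⟩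
end
end

section
/- Let n ≥ 2 be an integer, R > 0, and let φ : [R,∞) → ℝ be a solution of φ'(r) = (1+φ(r)²)(1 − (n−1)φ(r)/r). Then for every ε ∈ (0,1) there exists r₁ ≥ R such that (1−ε)·r/(n−1) ≤ φ(r) ≤ r/(n−1) for all r ≥ r₁; in particular φ(r)/r → 1/(n−1) as r → ∞, i.e. φ(r) = r/(n−1) + o(r). -/
/-!
Write `c = n - 1`. The line `φ = r / c` is a barrier from above: on it `φ' = 0 < 1 / c`, and as
long as `φ` lies above it `φ` is nonincreasing, so `φ` must cross it and then stays below. For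
`0 < ε < 1` the line `φ = (1 - ε) r / c` is a barrier from below once `2 ε r > 1`, because there
`φ' = (1 + φ²) ε ≥ 2 ε φ`. Below that line `arctan φ`, whose derivative is `1 - c φ / r`, grows at
rate at least `ε`; as `arctan` is bounded by `π / 2`, `φ` cannot stay below it on an interval of
length `π / ε`.
-/

noncomputable section
open Set Filter Topology Real

def translatorField (c r p : ℝ) : ℝ := (1 + p ^ 2) * (1 - c * p / r)

def IsTranslatorSolution (c R : ℝ) (φ : ℝ → ℝ) : Prop :=
  ∀ r ∈ Ici R, HasDerivWithinAt φ (translatorField c r (φ r)) (Ici R) r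

namespace IsTranslatorSolution

variable {c R ε : ℝ} {φ : ℝ → ℝ}

theorem continuousOn (hφ : IsTranslatorSolution c R φ) : ContinuousOn φ (Ici R) :=
  fun r hr => (hφ r hr).continuousWithinAt

theorem hasDerivWithinAt_Ici (hφ : IsTranslatorSolution c R φ) {x : ℝ} (hx : R ≤ x) :
    HasDerivWithinAt φ (translatorField c x (φ x)) (Ici x) x :=
  (hφ x hx).mono (Ici_subset_Ici.2 hx)

theorem hasDerivWithinAt_arctan (hφ : IsTranslatorSolution c R φ) {x : ℝ} (hx : R ≤ x) :
    HasDerivWithinAt (fun r => arctan (φ r)) (1 - c * φ x / x) (Ici x) x := by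
  refine ((hasDerivAt_arctan (φ x)).comp_hasDerivWithinAt x
    (hφ.hasDerivWithinAt_Ici hx)).congr_deriv ?_
  unfold translatorField
  field_simp

theorem exists_le_div (hc : 0 < c) (hR : 0 < R) (hφ : IsTranslatorSolution c R φ) :
    ∃ r ≥ R, φ r ≤ r / c := by
  by_contra! habove
  set b := max R (c * (φ R + 1))
  have hφb : φ b ≤ φ R := by
    refine image_le_of_deriv_right_le_deriv_boundary (B := fun _ => φ R)
      (hφ.continuousOn.mono Icc_subset_Ici_self)
      (fun x hx => hφ.hasDerivWithinAt_Ici hx.1) le_rfl continuousOn_const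
      (fun x _ => hasDerivWithinAt_const x _ (φ R)) (fun x hx => ?_) ⟨le_max_left _ _, le_rfl⟩
    have hx0 : 0 < x := hR.trans_le hx.1
    have : x < φ x * c := (div_lt_iff₀ hc).1 (habove x hx.1)
    refine mul_nonpos_of_nonneg_of_nonpos (by positivity) (sub_nonpos.2 ?_)
    rw [le_div_iff₀ hx0]
    linarith
  have hb : b / c < φ b := habove b (le_max_left _ _)
  have : φ R + 1 ≤ b / c := (le_div_iff₀ hc).2 (by linarith [le_max_right R (c * (φ R + 1))])
  linarith

theorem le_div_of_le_div (hc : 0 < c) (hR : 0 < R) (hφ : IsTranslatorSolution c R φ) {a : ℝ}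
    (ha : R ≤ a) (hφa : φ a ≤ a / c) {r : ℝ} (hr : a ≤ r) : φ r ≤ r / c := by
  refine image_le_of_deriv_right_lt_deriv_boundary
    (hφ.continuousOn.mono ((Icc_subset_Ici_iff hr).2 ha))
    (fun x hx => hφ.hasDerivWithinAt_Ici (ha.trans hx.1)) hφa
    (fun x => (hasDerivAt_id' x).div_const c) (fun x hx hφx => ?_) ⟨hr, le_rfl⟩
  have hx0 : 0 < x := hR.trans_le (ha.trans hx.1)
  have : translatorField c x (φ x) = 0 := by
    rw [translatorField, hφx]
    field_simp
    ring
  rw [this]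
  positivity

theorem eventually_le_div (hc : 0 < c) (hR : 0 < R) (hφ : IsTranslatorSolution c R φ) :
    ∀ᶠ r in atTop, φ r ≤ r / c := by
  obtain ⟨a, ha, hφa⟩ := hφ.exists_le_div hc hR
  exact eventually_atTop.2 ⟨a, fun r => hφ.le_div_of_le_div hc hR ha hφa⟩

theorem exists_mul_div_le (hc : 0 < c) (hR : 0 < R) (hφ : IsTranslatorSolution c R φ)
    (hε : 0 < ε) {a : ℝ} (ha : R ≤ a) : ∃ r ≥ a, (1 - ε) * r / c ≤ φ r := by
  by_contra! hbelow
  have hab : a ≤ a + π / ε := le_add_of_nonneg_right (by positivity)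
  have hgrowth : arctan (φ a) + ε * (a + π / ε - a) ≤ arctan (φ (a + π / ε)) := by
    refine image_le_of_deriv_right_le_deriv_boundary
      (by fun_prop)
      (fun x _ => ((((hasDerivAt_id x).sub_const a).const_mul ε).const_add _).hasDerivWithinAt)
      (by simp)
      (continuous_arctan.comp_continuousOn (hφ.continuousOn.mono ((Icc_subset_Ici_iff hab).2 ha)))
      (fun x hx => hφ.hasDerivWithinAt_arctan (ha.trans hx.1)) (fun x hx => ?_) ⟨hab, le_rfl⟩
    have hx0 : 0 < x := hR.trans_le (ha.trans hx.1)
    have : c * φ x < (1 - ε) * x := by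
      have := (lt_div_iff₀ hc).1 (hbelow x hx.1)
      linarith
    have : c * φ x / x < 1 - ε := (div_lt_iff₀ hx0).2 this
    simp only [mul_one]
    linarith
  have : ε * (a + π / ε - a) = π := by field_simp; ring
  linarith [arctan_lt_pi_div_two (φ (a + π / ε)), neg_pi_div_two_lt_arctan (φ a)]

theorem mul_div_le_of_mul_div_le (hc : 0 < c) (hR : 0 < R) (hφ : IsTranslatorSolution c R φ)
    (hε1 : ε < 1) {a : ℝ} (ha : R ≤ a) (haε : 1 < 2 * ε * a) (hφa : (1 - ε) * a / c ≤ φ a)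
    {r : ℝ} (hr : a ≤ r) : (1 - ε) * r / c ≤ φ r := by
  refine image_le_of_deriv_right_lt_deriv_boundary' (f := fun x => (1 - ε) * x / c)
    ((continuous_const.mul continuous_id).div_const c).continuousOn
    (fun x _ => (((hasDerivAt_id' x).const_mul (1 - ε)).div_const c).hasDerivWithinAt) hφa
    (hφ.continuousOn.mono ((Icc_subset_Ici_iff hr).2 ha))
    (fun x hx => hφ.hasDerivWithinAt_Ici (ha.trans hx.1)) (fun x hx hφx => ?_) ⟨hr, le_rfl⟩
  have hx0 : 0 < x := hR.trans_le (ha.trans hx.1)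
  have hε : 0 < ε := by nlinarith
  have hline : 1 - c * φ x / x = ε := by
    rw [← hφx]
    field_simp
    ring
  calc (1 - ε) * 1 / c < (2 * ε * x) * ((1 - ε) / c) := by
        rw [mul_one]
        exact lt_mul_of_one_lt_left (div_pos (by linarith) hc) (by nlinarith [hx.1])
    _ = 2 * φ x * ε := by rw [← hφx]; ring
    _ ≤ (1 + φ x ^ 2) * ε := by nlinarith [sq_nonneg (φ x - 1)]
    _ = translatorField c x (φ x) := by rw [translatorField, hline]

theorem eventually_mul_div_le (hc : 0 < c) (hR : 0 < R) (hφ : IsTranslatorSolution c R φ)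
    (hε : 0 < ε) (hε1 : ε < 1) : ∀ᶠ r in atTop, (1 - ε) * r / c ≤ φ r := by
  obtain ⟨a, ha, hφa⟩ := hφ.exists_mul_div_le hc hR hε (le_max_left R (1 / ε))
  have haε : 1 < 2 * ε * a := by
    have : 1 / ε ≤ a := (le_max_right R (1 / ε)).trans ha
    rw [div_le_iff₀ hε] at this
    nlinarith
  exact eventually_atTop.2
    ⟨a, fun r => hφ.mul_div_le_of_mul_div_le hc hR hε1 ((le_max_left _ _).trans ha) haε hφa⟩

theorem tendsto_div (hc : 0 < c) (hR : 0 < R) (hφ : IsTranslatorSolution c R φ) :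
    Tendsto (fun r => φ r / r) atTop (𝓝 (1 / c)) := by
  refine tendsto_order.2 ⟨fun a ha => ?_, fun a ha => ?_⟩
  · set ε := min (1 / 2) ((1 - a * c) / 2)
    have hac : a * c < 1 := (lt_div_iff₀ hc).1 ha
    have hε : 0 < ε := lt_min (by norm_num) (by linarith)
    have hε1 : ε < 1 := (min_le_left _ _).trans_lt (by norm_num)
    have haε : a < (1 - ε) / c :=
      (lt_div_iff₀ hc).2 (by linarith [min_le_right (1 / 2) ((1 - a * c) / 2)])
    filter_upwards [hφ.eventually_mul_div_le hc hR hε hε1, eventually_gt_atTop 0] with r hr hr0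
    refine haε.trans_le ((le_div_iff₀ hr0).2 ?_)
    rwa [div_mul_eq_mul_div]
  · filter_upwards [hφ.eventually_le_div hc hR, eventually_gt_atTop 0] with r hr hr0
    refine lt_of_le_of_lt ((div_le_iff₀ hr0).2 ?_) ha
    rwa [one_div_mul_eq_div]

end IsTranslatorSolution

theorem translator_ode_sublinear {n : ℕ} (hn : 2 ≤ n) (R : ℝ) (hR : 0 < R)
    (φ : ℝ → ℝ)
    (hφ : ∀ r ∈ Ici R,
      HasDerivWithinAt φ ((1 + φ r ^ 2) * (1 - ((n : ℝ) - 1) * φ r / r)) (Ici R) r) :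
    (∀ ε : ℝ, 0 < ε → ε < 1 → ∃ r₁ ≥ R, ∀ r ≥ r₁,
      (1 - ε) * r / ((n : ℝ) - 1) ≤ φ r ∧ φ r ≤ r / ((n : ℝ) - 1)) ∧
    Tendsto (fun r => φ r / r) atTop (nhds (1 / ((n : ℝ) - 1))) := by
  have hc : (0 : ℝ) < n - 1 := by
    have : (2 : ℝ) ≤ n := by exact_mod_cast hn
    linarith
  have hsol : IsTranslatorSolution ((n : ℝ) - 1) R φ := hφ
  refine ⟨fun ε hε hε1 => ?_, hsol.tendsto_div hc hR⟩
  obtain ⟨r₁, hr₁⟩ := eventually_atTop.1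
    ((hsol.eventually_mul_div_le hc hR hε hε1).and (hsol.eventually_le_div hc hR))
  exact ⟨max r₁ R, le_max_right _ _, fun r hr => hr₁ r (le_of_max_le_left hr)⟩
end
end

section
/- Let n ≥ 2 be an integer, R > 0, and let φ : [R,∞) → ℝ be a solution of φ'(r) = (1+φ(r)²)(1 − (n−1)φ(r)/r). Then φ(r) − r/(n−1) → 0 as r → ∞. -/
noncomputable section
open Set Filter

/-- Generic monotonicity helper on a half line. -/
lemma mono_aux {g g' : ℝ → ℝ} {a : ℝ} (hg : ContinuousOn g (Ici a))
    (hg' : ∀ x, a < x → HasDerivAt g (g' x) x) (h0 : ∀ x, a < x → 0 ≤ g' x) :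
    ∀ r, a ≤ r → g a ≤ g r := by
  intro r hr
  have hmono : MonotoneOn g (Ici a) := by
    apply monotoneOn_of_hasDerivWithinAt_nonneg (f' := g') (convex_Ici a) hg
    · intro x hx
      rw [interior_Ici] at hx
      exact (hg' x hx).hasDerivWithinAt
    · intro x hx
      rw [interior_Ici] at hx
      exact h0 x hx
  exact hmono self_mem_Ici hr hr

/-- Upper barrier lemma for the translator ODE. -/
lemma barrier_up {R k : ℝ} {φ : ℝ → ℝ} (hR : 0 < R)
    (hφ : ∀ r ∈ Ici R, HasDerivWithinAt φ ((1 + φ r ^ 2) * (1 - k * φ r / r)) (Ici R) r)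
    {a c d : ℝ} (ha : R ≤ a) (h0 : φ a ≤ c * a + d)
    (hb : ∀ x, a ≤ x → φ x = c * x + d → (1 + φ x ^ 2) * (1 - k * φ x / x) < c) :
    ∀ r, a ≤ r → φ r ≤ c * r + d := by
  intro r hr
  have hcont : ContinuousOn φ (Icc a r) := fun x hx =>
    ((hφ x (le_trans ha hx.1)).continuousWithinAt).mono
      (fun y hy => le_trans ha hy.1)
  have hder : ∀ x ∈ Ico a r, HasDerivWithinAt φ
      ((fun x => (1 + φ x ^ 2) * (1 - k * φ x / x)) x) (Ici x) x := fun x hx =>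
    (hφ x (le_trans ha hx.1)).mono (Ici_subset_Ici.2 (le_trans ha hx.1))
  have hB : ∀ x : ℝ, HasDerivAt (fun x => c * x + d) ((fun _ : ℝ => c) x) x := fun x => by
    simpa using ((hasDerivAt_id x).const_mul c).add_const d
  have := image_le_of_deriv_right_lt_deriv_boundary hcont hder h0 hB
    (fun x hx hxe => hb x hx.1 hxe)
  exact this ⟨hr, le_rfl⟩

/-- Lower barrier lemma for the translator ODE. -/
lemma barrier_low {R k : ℝ} {φ : ℝ → ℝ} (hR : 0 < R)
    (hφ : ∀ r ∈ Ici R, HasDerivWithinAt φ ((1 + φ r ^ 2) * (1 - k * φ r / r)) (Ici R) r)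
    {a c d : ℝ} (ha : R ≤ a) (h0 : c * a + d ≤ φ a)
    (hb : ∀ x, a ≤ x → φ x = c * x + d → c < (1 + φ x ^ 2) * (1 - k * φ x / x)) :
    ∀ r, a ≤ r → c * r + d ≤ φ r := by
  intro r hr
  have hcont : ContinuousOn (fun x => -φ x) (Icc a r) := by
    apply ContinuousOn.neg
    exact fun x hx => ((hφ x (le_trans ha hx.1)).continuousWithinAt).mono
      (fun y hy => le_trans ha hy.1)
  have hder : ∀ x ∈ Ico a r, HasDerivWithinAt (fun x => -φ x)
      ((fun x => -((1 + φ x ^ 2) * (1 - k * φ x / x))) x) (Ici x) x := fun x hx =>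
    ((hφ x (le_trans ha hx.1)).mono (Ici_subset_Ici.2 (le_trans ha hx.1))).neg
  have hB : ∀ x : ℝ, HasDerivAt (fun x => -c * x + -d) ((fun _ : ℝ => -c) x) x := fun x => by
    simpa using ((hasDerivAt_id x).const_mul (-c)).add_const (-d)
  have h0' : -φ a ≤ -c * a + -d := by linarith
  have hbound : ∀ x ∈ Ico a r, -φ x = -c * x + -d →
      (fun x => -((1 + φ x ^ 2) * (1 - k * φ x / x))) x < -c := by
    intro x hx hxe
    have := hb x hx.1 (by linarith)
    simpa using neg_lt_neg this
  have := image_le_of_deriv_right_lt_deriv_boundary hcont hder h0' hB hbound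
  have := this ⟨hr, le_rfl⟩
  linarith

set_option maxHeartbeats 1000000 in
theorem translator_ode_first_order {n : ℕ} (hn : 2 ≤ n) (R : ℝ) (hR : 0 < R)
    (φ : ℝ → ℝ)
    (hφ : ∀ r ∈ Ici R,
      HasDerivWithinAt φ ((1 + φ r ^ 2) * (1 - ((n : ℝ) - 1) * φ r / r)) (Ici R) r) :
    Tendsto (fun r => φ r - r / ((n : ℝ) - 1)) atTop (nhds 0) := by
  have hk1 : (1:ℝ) ≤ (n:ℝ) - 1 := by
    have : (2:ℝ) ≤ (n:ℝ) := by exact_mod_cast hn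
    linarith
  set k : ℝ := (n:ℝ) - 1 with hkdef
  have hk0 : (0:ℝ) < k := by linarith
  have hcont : ContinuousOn φ (Ici R) := fun x hx => (hφ x hx).continuousWithinAt
  have hDA : ∀ x, R < x → HasDerivAt φ ((1 + φ x ^ 2) * (1 - k * φ x / x)) x :=
    fun x hx => (hφ x hx.le).hasDerivAt (Ici_mem_nhds hx)
  rw [Metric.tendsto_atTop]
  intro ε0 hε0
  set ε := min ε0 1 / 2 with hεdef
  have hεpos : 0 < ε := by
    have := lt_min hε0 one_pos
    rw [hεdef]; linarith
  have hε1 : ε ≤ 1 := by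
    have := min_le_right ε0 1
    rw [hεdef]; linarith
  have hεlt : ε < ε0 := by
    have := min_le_left ε0 1
    rw [hεdef]; linarith
  set r₂ : ℝ := max R (max (8/ε) (2*k)) with hr2def
  have hr2R : R ≤ r₂ := le_max_left _ _
  have hr2a : 8/ε ≤ r₂ := le_trans (le_max_left _ _) (le_max_right _ _)
  have hr2b : 2*k ≤ r₂ := le_trans (le_max_right _ _) (le_max_right _ _)
  have hr2pos : 0 < r₂ := lt_of_lt_of_le hR hr2R
  have hr2e : 8 ≤ r₂ * ε := by
    rw [div_le_iff₀ hεpos] at hr2a; linarith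
  -- touching the upper barrier x/k + ε : derivative is negative
  have keyTouchUp : ∀ x, R ≤ x → φ x = (1/k) * x + ε →
      (1 + φ x ^ 2) * (1 - k * φ x / x) < 1/k := by
    intro x hx hpx
    have hx0 : 0 < x := lt_of_lt_of_le hR hx
    have hkp : k * φ x = x + k * ε := by
      rw [hpx]; field_simp
    have h2 : k * φ x / x = 1 + k * ε / x := by
      rw [hkp, add_div, div_self hx0.ne']
    have h3 : 0 < k * ε / x := by positivity
    have hneg : 1 - k * φ x / x < 0 := by rw [h2]; linarith
    have h1 : (1 + φ x ^ 2) * (1 - k * φ x / x) ≤ 0 :=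
      mul_nonpos_of_nonneg_of_nonpos (by positivity) hneg.le
    have h4 : (0:ℝ) < 1/k := by positivity
    linarith
  -- strictly above the upper barrier at x ≥ r₂ : strong decay
  have keyU : ∀ x, r₂ ≤ x → (1/k) * x + ε < φ x →
      (1 + φ x ^ 2) * (1 - k * φ x / x) ≤ -(r₂ * ε / k) := by
    intro x hx hpx
    have hx0 : 0 < x := lt_of_lt_of_le hr2pos hx
    have h1 : (1/k) * x = x/k := one_div_mul_eq_div k x
    have hkp : x + k * ε < k * φ x := by
      have h2 : x / k < φ x - ε := by rw [← h1]; linarith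
      rw [div_lt_iff₀ hk0] at h2
      nlinarith
    have hpge : x / k ≤ φ x := by
      rw [div_le_iff₀ hk0]; nlinarith
    have e1 : 1 - k * φ x / x ≤ -(k * ε / x) := by
      have h := (div_le_div_iff_of_pos_right hx0).2 hkp.le
      rw [add_div, div_self hx0.ne'] at h
      linarith
    have e2 : x^2 / k^2 ≤ 1 + φ x ^ 2 := by
      have h1' : (x/k)^2 ≤ φ x ^ 2 := pow_le_pow_left₀ (by positivity) hpge 2
      rw [div_pow] at h1'
      linarith
    have c1 : (1 + φ x ^ 2) * (1 - k * φ x / x) ≤ (1 + φ x ^ 2) * (-(k * ε / x)) :=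
      mul_le_mul_of_nonneg_left e1 (by positivity)
    have c2 : (1 + φ x ^ 2) * (-(k * ε / x)) ≤ (x^2 / k^2) * (-(k * ε / x)) := by
      apply mul_le_mul_of_nonpos_right e2
      have : 0 ≤ k * ε / x := by positivity
      linarith
    have c3 : (x^2 / k^2) * (-(k * ε / x)) = -(x * ε / k) := by
      field_simp
    have c4 : -(x * ε / k) ≤ -(r₂ * ε / k) := by
      apply neg_le_neg
      gcongr
    linarith
  -- enter the upper region
  obtain ⟨aU, haU2, haUle⟩ : ∃ a, r₂ ≤ a ∧ φ a ≤ (1/k) * a + ε := by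
    by_contra hcon
    push_neg at hcon
    set c : ℝ := r₂ * ε / k with hcdef
    have hc0 : 0 < c := by rw [hcdef]; positivity
    have hg : ∀ r, r₂ ≤ r → -φ r₂ - c * r₂ ≤ -φ r - c * r := by
      apply mono_aux (g := fun x => -φ x - c * x)
        (g' := fun x => -((1 + φ x ^ 2) * (1 - k * φ x / x)) - c)
      · apply ContinuousOn.sub
        · exact (hcont.mono (Ici_subset_Ici.2 hr2R)).neg
        · exact (continuous_const.mul continuous_id).continuousOn
      · intro x hx
        have h1 := (hDA x (lt_of_le_of_lt hr2R hx)).neg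
        have h2 : HasDerivAt (fun y : ℝ => c * y) c x := by
          simpa using (hasDerivAt_id x).const_mul c
        exact h1.sub h2
      · intro x hx
        have := keyU x hx.le (hcon x hx.le)
        rw [hcdef]
        linarith
    set b : ℝ := r₂ + (|φ r₂| + 1)/c with hbdef
    have hb2 : r₂ ≤ b := by
      have : 0 ≤ (|φ r₂| + 1)/c := by positivity
      rw [hbdef]; linarith
    have hgb := hg b hb2
    have hcb : c * b - c * r₂ = |φ r₂| + 1 := by
      rw [hbdef]; field_simp; ring
    have hφb : φ b ≤ φ r₂ - (|φ r₂| + 1) := by linarith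
    have hb0 : 0 < b := lt_of_lt_of_le hr2pos hb2
    have hbc := hcon b hb2
    have hp1 : 0 < (1/k) * b + ε := by positivity
    have hp2 := le_abs_self (φ r₂)
    linarith
  -- the upper region is invariant
  have trapU : ∀ r, aU ≤ r → φ r ≤ (1/k) * r + ε :=
    barrier_up hR hφ (le_trans hr2R haU2) haUle
      (fun x hx hxe => keyTouchUp x (le_trans hr2R (le_trans haU2 hx)) hxe)
  -- touching the lower barrier x/k - ε at x ≥ r₂ : strong upward push
  have keyTouchLow : ∀ x, r₂ ≤ x → φ x = (1/k) * x + -ε →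
      1/k < (1 + φ x ^ 2) * (1 - k * φ x / x) := by
    intro x hx hpx
    have hx0 : 0 < x := lt_of_lt_of_le hr2pos hx
    have hx2k : 2*k ≤ x := le_trans hr2b hx
    have hs : 1 - k * φ x / x = k * ε / x := by
      rw [hpx]; field_simp; ring
    have h1le : 1 ≤ x/(2*k) := by
      rw [le_div_iff₀ (by positivity)]; linarith
    have hpge : x/(2*k) ≤ φ x := by
      rw [hpx]
      have h2 : x/k - x/(2*k) = x/(2*k) := by field_simp; ring
      have h3 : (1/k) * x = x/k := one_div_mul_eq_div k x
      linarith
    have hp2 : (x/(2*k))^2 ≤ φ x ^ 2 := pow_le_pow_left₀ (by positivity) hpge 2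
    have hq : (x/(2*k))^2 * (k * ε / x) = x * ε / (4*k) := by
      field_simp; ring
    have h8 : 8 ≤ x * ε := le_trans hr2e (by gcongr)
    have h5 : 2/k ≤ x * ε / (4*k) := by
      rw [div_le_div_iff₀ hk0 (by positivity)]
      nlinarith [mul_nonneg (show (0:ℝ) ≤ x*ε - 8 by linarith) hk0.le]
    have hkex : 0 ≤ k * ε / x := by positivity
    have hA : φ x ^ 2 * (k * ε / x) ≤ (1 + φ x ^ 2) * (k * ε / x) :=
      mul_le_mul_of_nonneg_right (by linarith) hkex
    have hB : (x/(2*k))^2 * (k * ε / x) ≤ φ x ^ 2 * (k * ε / x) :=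
      mul_le_mul_of_nonneg_right hp2 hkex
    have h1k : 1/k < 2/k := by
      rw [div_lt_div_iff₀ hk0 hk0]; nlinarith
    rw [hs]
    linarith
  -- touching the barrier x/(2k) at x ≥ r₂ : upward push
  have keyTouch2k : ∀ x, r₂ ≤ x → φ x = (1/(2*k)) * x + 0 →
      1/(2*k) < (1 + φ x ^ 2) * (1 - k * φ x / x) := by
    intro x hx hpx
    have hx0 : 0 < x := lt_of_lt_of_le hr2pos hx
    have hx2k : 2*k ≤ x := le_trans hr2b hx
    have hs : 1 - k * φ x / x = 1/2 := by
      rw [hpx]; field_simp; ring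
    have h1le : 1 ≤ x/(2*k) := by
      rw [le_div_iff₀ (by positivity)]; linarith
    have hp1 : 1 ≤ φ x := by
      rw [hpx]
      have h3 : (1/(2*k)) * x = x/(2*k) := one_div_mul_eq_div (2*k) x
      linarith
    have hp2 : 1 ≤ φ x ^ 2 := by nlinarith
    have hhalf : 1/(2*k) ≤ 1/2 := by
      rw [div_le_div_iff₀ (by positivity) (by norm_num)]; linarith
    rw [hs]
    nlinarith
  -- in the middle region at x ≥ r₂ : strong upward push
  have keyMid : ∀ x, r₂ ≤ x → x/(2*k) ≤ φ x → φ x < (1/k) * x + -ε →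
      2/k ≤ (1 + φ x ^ 2) * (1 - k * φ x / x) := by
    intro x hx hlow hup
    have hx0 : 0 < x := lt_of_lt_of_le hr2pos hx
    have h1 : (1/k) * x = x/k := one_div_mul_eq_div k x
    have hkp : k * φ x < x - k * ε := by
      have h2 : φ x + ε < x/k := by rw [← h1]; linarith
      rw [lt_div_iff₀ hk0] at h2
      nlinarith
    have e1 : k * ε / x ≤ 1 - k * φ x / x := by
      have h := (div_le_div_iff_of_pos_right hx0).2 hkp.le
      rw [sub_div, div_self hx0.ne'] at h
      linarith
    have hp2 : (x/(2*k))^2 ≤ φ x ^ 2 := pow_le_pow_left₀ (by positivity) hlow 2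
    have hq : (x/(2*k))^2 * (k * ε / x) = x * ε / (4*k) := by
      field_simp; ring
    have h8 : 8 ≤ x * ε := le_trans hr2e (by gcongr)
    have h5 : 2/k ≤ x * ε / (4*k) := by
      rw [div_le_div_iff₀ hk0 (by positivity)]
      nlinarith [mul_nonneg (show (0:ℝ) ≤ x*ε - 8 by linarith) hk0.le]
    have hkex : 0 ≤ k * ε / x := by positivity
    have hA : φ x ^ 2 * (k * ε / x) ≤ (1 + φ x ^ 2) * (k * ε / x) :=
      mul_le_mul_of_nonneg_right (by linarith) hkex
    have hB : (x/(2*k))^2 * (k * ε / x) ≤ φ x ^ 2 * (k * ε / x) :=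
      mul_le_mul_of_nonneg_right hp2 hkex
    have hC : (1 + φ x ^ 2) * (k * ε / x) ≤ (1 + φ x ^ 2) * (1 - k * φ x / x) :=
      mul_le_mul_of_nonneg_left e1 (by positivity)
    linarith
  -- enter the lower region
  obtain ⟨aL, haL2, haLge⟩ : ∃ a, r₂ ≤ a ∧ (1/k) * a + -ε ≤ φ a := by
    by_contra hcon
    push_neg at hcon
    -- step 1 : escape above x/(2k)
    have step1 : ∃ a0, r₂ ≤ a0 ∧ a0/(2*k) < φ a0 := by
      by_contra h2
      push_neg at h2
      have hg : ∀ r, r₂ ≤ r →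
          Real.arctan (φ r₂) - r₂/2 ≤ Real.arctan (φ r) - r/2 := by
        apply mono_aux (g := fun x => Real.arctan (φ x) - x/2)
          (g' := fun x => 1/(1 + φ x ^ 2) * ((1 + φ x ^ 2) * (1 - k * φ x / x)) - 1/2)
        · apply ContinuousOn.sub
          · exact Real.continuous_arctan.comp_continuousOn
              (hcont.mono (Ici_subset_Ici.2 hr2R))
          · exact (continuous_id.div_const 2).continuousOn
        · intro x hx
          have h1 := (Real.hasDerivAt_arctan (φ x)).comp x (hDA x (lt_of_le_of_lt hr2R hx))
          have h2' : HasDerivAt (fun y : ℝ => y/2) (1/2 : ℝ) x := by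
            simpa using (hasDerivAt_id x).div_const 2
          exact h1.sub h2'
        · intro x hx
          have hx0 : 0 < x := lt_of_lt_of_le hr2pos hx.le
          have hple := h2 x hx.le
          have hd : 1/(1 + φ x ^ 2) * ((1 + φ x ^ 2) * (1 - k * φ x / x))
              = 1 - k * φ x / x := by
            have : (1 + φ x ^ 2) ≠ 0 := by positivity
            field_simp
          rw [hd]
          have hkp : k * φ x ≤ x/2 := by
            have h3 := (le_div_iff₀ (show (0:ℝ) < 2*k by positivity)).1 hple
            nlinarith
          have hkx : k * φ x / x ≤ 1/2 := by
            rw [div_le_iff₀ hx0]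
            linarith
          linarith
      have hb := hg (r₂ + 4*Real.pi) (by linarith [Real.pi_pos])
      have h1' := Real.arctan_lt_pi_div_two (φ (r₂ + 4*Real.pi))
      have h2' := Real.neg_pi_div_two_lt_arctan (φ r₂)
      have hπ := Real.pi_pos
      linarith
    obtain ⟨a0, ha02, ha0gt⟩ := step1
    have ha0R : R ≤ a0 := le_trans hr2R ha02
    have ha0pos : 0 < a0 := lt_of_lt_of_le hr2pos ha02
    -- invariance of the barrier x/(2k)
    have inv2k : ∀ r, a0 ≤ r → (1/(2*k)) * r + 0 ≤ φ r := by
      apply barrier_low hR hφ ha0R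
      · have h3 : (1/(2*k)) * a0 = a0/(2*k) := one_div_mul_eq_div (2*k) a0
        linarith
      · intro x hx hxe
        exact keyTouch2k x (le_trans ha02 hx) hxe
    -- linear growth
    have grow : ∀ r, a0 ≤ r → φ a0 - (2/k) * a0 ≤ φ r - (2/k) * r := by
      apply mono_aux (g := fun x => φ x - (2/k) * x)
        (g' := fun x => (1 + φ x ^ 2) * (1 - k * φ x / x) - 2/k)
      · apply ContinuousOn.sub
        · exact hcont.mono (Ici_subset_Ici.2 ha0R)
        · exact (continuous_const.mul continuous_id).continuousOn
      · intro x hx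
        have h1 := hDA x (lt_of_le_of_lt ha0R hx)
        have h2' : HasDerivAt (fun y : ℝ => (2/k) * y) (2/k) x := by
          simpa using (hasDerivAt_id x).const_mul (2/k)
        exact h1.sub h2'
      · intro x hx
        have hx2 : r₂ ≤ x := le_trans ha02 hx.le
        have hl := inv2k x hx.le
        have hl' : x/(2*k) ≤ φ x := by
          have h3 : (1/(2*k)) * x = x/(2*k) := one_div_mul_eq_div (2*k) x
          linarith
        have := keyMid x hx2 hl' (hcon x hx2)
        linarith
    -- contradiction at a large point
    set b : ℝ := 2*a0 + k * (|φ a0| + 1) with hbdef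
    have hb2 : a0 ≤ b := by
      have h3 : 0 < k * (|φ a0| + 1) := by positivity
      rw [hbdef]; linarith
    have hgb := grow b hb2
    have hcb : (1/k) * b - (2/k) * (b - a0) = (2*a0 - b)/k := by
      field_simp; ring
    have hce : (2*a0 - b)/k = -(|φ a0| + 1) := by
      rw [hbdef]; field_simp; ring
    have hbc := hcon b (le_trans ha02 hb2)
    -- φ a0 + (2/k)(b - a0) ≤ φ b < (1/k) b - ε
    have hfin : φ a0 < (2*a0 - b)/k - ε := by
      have h4 : (2/k) * b - (2/k) * a0 = (2/k) * (b - a0) := by ring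
      linarith
    rw [hce] at hfin
    have := le_abs_self (φ a0)
    have := neg_abs_le (φ a0)
    linarith
  -- the lower region is invariant
  have trapL : ∀ r, aL ≤ r → (1/k) * r + -ε ≤ φ r :=
    barrier_low hR hφ (le_trans hr2R haL2) haLge
      (fun x hx hxe => keyTouchLow x (le_trans haL2 hx) hxe)
  -- conclusion
  refine ⟨max aU aL, fun r hr => ?_⟩
  have h1 := trapU r (le_trans (le_max_left _ _) hr)
  have h2 := trapL r (le_trans (le_max_right _ _) hr)
  have hrk : (1/k) * r = r/k := one_div_mul_eq_div k r
  rw [Real.dist_eq, sub_zero]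
  have habs : |φ r - r/k| ≤ ε := abs_le.2 ⟨by linarith, by linarith⟩
  linarith
end
end

section
/- Let n ≥ 2 be an integer, R > 0, and let φ : [R,∞) → ℝ be a solution of φ'(r) = (1+φ(r)²)(1 − (n−1)φ(r)/r). Then r·(φ(r) − r/(n−1)) → −1 as r → ∞. -/
/-!
With `m = n - 1`, the deviation `u r = r * (φ r - r / m)` solves
`u' = (1 - m) u / r - (r / m) (1 + u (1 + m u / r²)²)`, whose dominant term `-(r / m) (1 + u)`
drives `u` towards `-1` at a rate growing linearly in `r`. Everything is proved with traps: a
region is entered because `|u'| ≥ 1` outside it, and never left because the flow points inwards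
on its boundary. Since `arctan ∘ φ` is bounded with derivative `1 - m φ / r`, first
`φ ≥ r / (2m)` eventually, which bounds `1 + m u / r² = m φ / r` from below; then `u` is
trapped in `[-8, 0]`, and finally in every neighbourhood of `-1`.
-/

noncomputable section
open Set Filter
open scoped Topology

section Fencing

variable {u u' : ℝ → ℝ}

theorem tendsto_atBot_of_deriv_le_neg {ε : ℝ} (hε : 0 < ε)
    (hu : ∀ᶠ x in atTop, HasDerivAt u (u' x) x) (h : ∀ᶠ x in atTop, u' x ≤ -ε) :
    Tendsto u atTop atBot := by
  obtain ⟨a, ha⟩ := eventually_atTop.1 (hu.and h)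
  have hlin : ∀ x ∈ Ici a, u x ≤ u a + -ε * (x - a) := fun x hx => by
    have := (convex_Ici a).image_sub_le_mul_sub_of_deriv_le
      (fun y hy => (ha y hy).1.continuousAt.continuousWithinAt)
      (fun y hy => (ha y (interior_subset hy)).1.differentiableAt.differentiableWithinAt)
      (fun y hy => (ha y (interior_subset hy)).1.deriv ▸ (ha y (interior_subset hy)).2)
      a self_mem_Ici x hx hx
    linarith
  refine tendsto_atBot_mono' atTop (eventually_atTop.2 ⟨a, hlin⟩) ?_
  exact tendsto_atBot_add_const_left _ _
    ((tendsto_atTop_add_const_right _ _ tendsto_id).const_mul_atTop_of_neg (neg_neg_of_pos hε))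

theorem le_const_of_deriv_neg_of_eq {a c : ℝ} (hu : ∀ x ∈ Ici a, HasDerivAt u (u' x) x)
    (ha : u a ≤ c) (h : ∀ x ∈ Ici a, u x = c → u' x < 0) : ∀ x ∈ Ici a, u x ≤ c :=
  fun _ hx => image_le_of_deriv_right_lt_deriv_boundary' (B := fun _ => c) (B' := fun _ => 0)
    (fun y hy => (hu y hy.1).continuousAt.continuousWithinAt)
    (fun y hy => (hu y hy.1).hasDerivWithinAt) ha continuousOn_const
    (fun _ _ => hasDerivWithinAt_const _ _ _) (fun y hy => h y hy.1) ⟨hx, le_rfl⟩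

theorem eventually_le_of_deriv_le_neg {c ε : ℝ} (hε : 0 < ε)
    (hu : ∀ᶠ x in atTop, HasDerivAt u (u' x) x) (h : ∀ᶠ x in atTop, c ≤ u x → u' x ≤ -ε) :
    ∀ᶠ x in atTop, u x ≤ c := by
  have hreach : ∃ᶠ x in atTop, u x ≤ c := by
    by_contra hnever
    rw [not_frequently] at hnever
    have hbot := tendsto_atBot_of_deriv_le_neg hε hu <| by
      filter_upwards [h, hnever] with x hx hgt using hx (not_le.1 hgt).le
    obtain ⟨x, hle, hgt⟩ := ((hbot.eventually_le_atBot c).and hnever).exists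
    exact hgt hle
  obtain ⟨a, ha⟩ := eventually_atTop.1 (hu.and h)
  obtain ⟨b, hab, hb⟩ := hreach.forall_exists_of_atTop a
  filter_upwards [eventually_ge_atTop b] with x hx
  refine le_const_of_deriv_neg_of_eq (fun y hy => (ha y (hab.trans hy)).1) hb
    (fun y hy hyc => ?_) x hx
  linarith [(ha y (hab.trans hy)).2 hyc.ge]

theorem eventually_ge_of_deriv_ge {c ε : ℝ} (hε : 0 < ε)
    (hu : ∀ᶠ x in atTop, HasDerivAt u (u' x) x) (h : ∀ᶠ x in atTop, u x ≤ c → ε ≤ u' x) :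
    ∀ᶠ x in atTop, c ≤ u x := by
  have := eventually_le_of_deriv_le_neg (u := fun x => -u x) (u' := fun x => -u' x) (c := -c)
    hε (hu.mono fun _ hx => hx.neg) (h.mono fun _ hx hc => neg_le_neg (hx (by linarith)))
  exact this.mono fun _ hx => by linarith

end Fencing

def EventuallySolvesTranslatorODE (m : ℝ) (φ : ℝ → ℝ) : Prop :=
  ∀ᶠ r in atTop, HasDerivAt φ ((1 + φ r ^ 2) * (1 - m * φ r / r)) r

def deviation (m : ℝ) (φ : ℝ → ℝ) (r : ℝ) : ℝ := r * (φ r - r / m)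

def deviationField (m r u : ℝ) : ℝ := (1 - m) * u / r - r / m * (1 + u * (1 + m * u / r ^ 2) ^ 2)

section DeviationField

variable {m r u : ℝ}

theorem deviationField_le_neg_one_of_nonneg (hm : 1 ≤ m) (hr : m ≤ r) (hu : 0 ≤ u) :
    deviationField m r u ≤ -1 := by
  have hr0 : 0 < r := by linarith
  have herr : (1 - m) * u / r ≤ 0 := div_nonpos_of_nonpos_of_nonneg (by nlinarith) hr0.le
  have hlead : 1 ≤ r / m := (one_le_div (by linarith)).2 hr
  have : 0 ≤ u * (1 + m * u / r ^ 2) ^ 2 := by positivity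
  unfold deviationField
  nlinarith

theorem one_le_deviationField_of_le_neg_eight (hm : 1 ≤ m) (hr : m ≤ r)
    (hw : 1 / 2 ≤ 1 + m * u / r ^ 2) (hu : u ≤ -8) : 1 ≤ deviationField m r u := by
  have hr0 : 0 < r := by linarith
  have herr : 0 ≤ (1 - m) * u / r := div_nonneg (by nlinarith) hr0.le
  have hlead : 1 ≤ r / m := (one_le_div (by linarith)).2 hr
  have : u * (1 + m * u / r ^ 2) ^ 2 ≤ -2 := by nlinarith
  unfold deviationField
  nlinarith

theorem deviationField_le_neg_one {c : ℝ} (hm : 1 ≤ m) (hc : -1 < c) (hr1 : 1 ≤ r)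
    (hr : m ^ 2 / (1 + c) ≤ r) (hw : 0 ≤ 1 + m * u / r ^ 2) (hcu : c ≤ u) (hu : u ≤ 0) :
    deviationField m r u ≤ -1 := by
  have hm0 : 0 < m := by linarith
  have hr0 : 0 < r := by linarith
  have hc0 : 0 < 1 + c := by linarith
  have hw1 : 1 + m * u / r ^ 2 ≤ 1 := by
    have : m * u / r ^ 2 ≤ 0 := div_nonpos_of_nonpos_of_nonneg (by nlinarith) (by positivity)
    linarith
  have herr : (1 - m) * u / r ≤ m - 1 := by
    rw [div_le_iff₀ hr0]; nlinarith
  have hsq : c ≤ u * (1 + m * u / r ^ 2) ^ 2 := by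
    have : (1 + m * u / r ^ 2) ^ 2 ≤ 1 := by nlinarith
    nlinarith [mul_le_mul_of_nonpos_left this hu]
  have hlead : m ≤ r / m * (1 + c) := by
    rw [div_le_iff₀ hc0] at hr
    rw [div_mul_eq_mul_div, le_div_iff₀ hm0]; nlinarith
  unfold deviationField
  nlinarith [mul_le_mul_of_nonneg_left hsq (div_nonneg hr0.le hm0.le)]

theorem one_le_deviationField {c : ℝ} (hm : 1 ≤ m) (hc : c < -1) (hr1 : 1 ≤ r)
    (hr : 129 * m / (-1 - c) ≤ r) (h8 : -8 ≤ u) (hu : u ≤ c) :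
    1 ≤ deviationField m r u := by
  have hm0 : 0 < m := by linarith
  have hr0 : 0 < r := by linarith
  have hu0 : u ≤ 0 := by linarith
  set w := 1 + m * u / r ^ 2 with hw
  have hw1 : w ≤ 1 := by
    have : m * u / r ^ 2 ≤ 0 := div_nonpos_of_nonpos_of_nonneg (by nlinarith) (by positivity)
    linarith
  have hcorr : u * w ^ 2 ≤ u + 128 * m / r := by
    have hsplit : u * w ^ 2 = u + m * u ^ 2 * (w + 1) / r ^ 2 := by
      rw [hw]; field_simp; ring
    have hnum : m * u ^ 2 * (w + 1) ≤ 128 * m := by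
      have hu2 : u ^ 2 ≤ 64 := by nlinarith
      have : m * u ^ 2 * (w + 1) ≤ m * u ^ 2 * 2 :=
        mul_le_mul_of_nonneg_left (by linarith) (by positivity)
      nlinarith
    have hden : 128 * m / r ^ 2 ≤ 128 * m / r :=
      div_le_div_of_nonneg_left (by positivity) hr0 (by nlinarith)
    rw [hsplit]
    linarith [div_le_div_of_nonneg_right hnum (sq_nonneg r)]
  have herr : 0 ≤ (1 - m) * u / r := div_nonneg (by nlinarith) hr0.le
  have hlead : 129 ≤ r / m * (-1 - c) := by
    rw [div_le_iff₀ (by linarith)] at hr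
    rw [div_mul_eq_mul_div, le_div_iff₀ hm0]; linarith
  have hcancel : r / m * (128 * m / r) = 128 := by field_simp
  unfold deviationField
  nlinarith [mul_le_mul_of_nonneg_left hcorr (div_nonneg hr0.le hm0.le)]

end DeviationField

section Translator

variable {m : ℝ} {φ : ℝ → ℝ}

theorem EventuallySolvesTranslatorODE.hasDerivAt_deviation (hφ : EventuallySolvesTranslatorODE m φ)
    (hm : m ≠ 0) :
    ∀ᶠ r in atTop, HasDerivAt (deviation m φ) (deviationField m r (deviation m φ r)) r := by
  filter_upwards [hφ, eventually_gt_atTop 0] with r hr hr0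
  have h : HasDerivAt (deviation m φ)
      (1 * (φ r - r / m) + r * ((1 + φ r ^ 2) * (1 - m * φ r / r) - 1 / m)) r :=
    (hasDerivAt_id' r).mul (hr.sub ((hasDerivAt_id' r).div_const m))
  convert h using 1
  unfold deviationField deviation
  field_simp
  ring

theorem EventuallySolvesTranslatorODE.frequently_div_lt (hφ : EventuallySolvesTranslatorODE m φ)
    (hm : 0 < m) : ∃ᶠ r in atTop, r / (2 * m) < φ r := by
  by_contra hnever
  rw [not_frequently] at hnever
  have hbot : Tendsto (fun r => -Real.arctan (φ r)) atTop atBot := by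
    refine tendsto_atBot_of_deriv_le_neg (u' := fun r => -(1 - m * φ r / r))
      (by norm_num : (0 : ℝ) < 1 / 2) ?_ ?_
    · filter_upwards [hφ] with r hr
      have hslope : 1 / (1 + φ r ^ 2) * ((1 + φ r ^ 2) * (1 - m * φ r / r)) =
          1 - m * φ r / r := by
        field_simp
      exact hslope ▸ hr.arctan.neg
    · filter_upwards [hnever, eventually_gt_atTop 0] with r hle hr0
      have : m * φ r / r ≤ 1 / 2 := by
        rw [div_le_iff₀ hr0]
        have := (le_div_iff₀ (by positivity)).1 (not_lt.1 hle)
        linarith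
      linarith
  obtain ⟨r, hr⟩ := (hbot.eventually_lt_atBot (-(Real.pi / 2))).exists
  linarith [Real.arctan_lt_pi_div_two (φ r)]

theorem EventuallySolvesTranslatorODE.eventually_div_le (hφ : EventuallySolvesTranslatorODE m φ)
    (hm : 1 ≤ m) : ∀ᶠ r in atTop, r / (2 * m) ≤ φ r := by
  have hm0 : 0 < m := by linarith
  obtain ⟨a, ha⟩ := eventually_atTop.1 (hφ.and (eventually_gt_atTop 0))
  obtain ⟨b, hab, hb⟩ := (hφ.frequently_div_lt hm0).forall_exists_of_atTop a
  have hinward : ∀ x ∈ Ici b, x / (2 * m) - φ x = 0 →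
      1 / (2 * m) - (1 + φ x ^ 2) * (1 - m * φ x / x) < 0 := by
    intro x hx hcontact
    have hx0 : 0 < x := (ha x (hab.trans hx)).2
    have hφx : φ x = x / (2 * m) := by linarith
    have hslope : (1 + φ x ^ 2) * (1 - m * φ x / x) = (1 + φ x ^ 2) / 2 := by
      rw [hφx]; field_simp; ring
    have hφpos : 0 < φ x := by rw [hφx]; positivity
    have : 1 / (2 * m) ≤ 1 / 2 := div_le_div_of_nonneg_left zero_le_one two_pos (by linarith)
    rw [hslope]
    nlinarith
  filter_upwards [eventually_ge_atTop b] with r hr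
  have := le_const_of_deriv_neg_of_eq (u := fun x => x / (2 * m) - φ x)
    (fun x hx => ((hasDerivAt_id' x).div_const (2 * m)).sub (ha x (hab.trans hx)).1)
    (by linarith) hinward r hr
  linarith

theorem EventuallySolvesTranslatorODE.eventually_deviation_nonpos
    (hφ : EventuallySolvesTranslatorODE m φ) (hm : 1 ≤ m) :
    ∀ᶠ r in atTop, deviation m φ r ≤ 0 :=
  eventually_le_of_deriv_le_neg one_pos (hφ.hasDerivAt_deviation (by linarith)) <| by
    filter_upwards [eventually_ge_atTop m] with r hr hu
    exact deviationField_le_neg_one_of_nonneg hm hr hu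

theorem EventuallySolvesTranslatorODE.eventually_half_le (hφ : EventuallySolvesTranslatorODE m φ)
    (hm : 1 ≤ m) : ∀ᶠ r in atTop, 1 / 2 ≤ 1 + m * deviation m φ r / r ^ 2 := by
  filter_upwards [hφ.eventually_div_le hm, eventually_gt_atTop 0] with r hr hr0
  have hm0 : 0 < m := by linarith
  have : 1 + m * deviation m φ r / r ^ 2 = m * φ r / r := by
    unfold deviation; field_simp; ring
  rw [this, le_div_iff₀ hr0]
  rw [div_le_iff₀ (by positivity)] at hr
  linarith

theorem EventuallySolvesTranslatorODE.eventually_neg_eight_le_deviation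
    (hφ : EventuallySolvesTranslatorODE m φ) (hm : 1 ≤ m) :
    ∀ᶠ r in atTop, -8 ≤ deviation m φ r :=
  eventually_ge_of_deriv_ge one_pos (hφ.hasDerivAt_deviation (by linarith)) <| by
    filter_upwards [hφ.eventually_half_le hm, eventually_ge_atTop m] with r hw hr hu
    exact one_le_deviationField_of_le_neg_eight hm hr hw hu

theorem EventuallySolvesTranslatorODE.tendsto_deviation (hφ : EventuallySolvesTranslatorODE m φ)
    (hm : 1 ≤ m) : Tendsto (deviation m φ) atTop (𝓝 (-1)) := by
  have hder := hφ.hasDerivAt_deviation (by linarith)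
  refine tendsto_order.2 ⟨fun a ha => ?_, fun a ha => ?_⟩
  · have hc : (a - 1) / 2 < -1 := by linarith
    have hlower := eventually_ge_of_deriv_ge one_pos hder <| by
      filter_upwards [hφ.eventually_neg_eight_le_deviation hm, eventually_ge_atTop 1,
        eventually_ge_atTop (129 * m / (-1 - (a - 1) / 2))] with r h8 hr1 hr hu
      exact one_le_deviationField hm hc hr1 hr h8 hu
    filter_upwards [hlower] with r hr
    linarith
  · have hc : -1 < (a - 1) / 2 := by linarith
    have hupper := eventually_le_of_deriv_le_neg one_pos hder <| by
      filter_upwards [hφ.eventually_half_le hm, hφ.eventually_deviation_nonpos hm,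
        eventually_ge_atTop 1, eventually_ge_atTop (m ^ 2 / (1 + (a - 1) / 2))]
        with r hw hu hr1 hr hcu
      exact deviationField_le_neg_one hm hc hr1 hr (by linarith) hcu hu
    filter_upwards [hupper] with r hr
    linarith

end Translator

theorem translator_ode_second_order_general {n : ℕ} (hn : 2 ≤ n) (R : ℝ)
    (φ : ℝ → ℝ)
    (hφ : ∀ r ∈ Ici R,
      HasDerivWithinAt φ ((1 + φ r ^ 2) * (1 - ((n : ℝ) - 1) * φ r / r)) (Ici R) r) :
    Tendsto (fun r => r * (φ r - r / ((n : ℝ) - 1))) atTop (nhds (-1)) := by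
  have hm : (1 : ℝ) ≤ (n : ℝ) - 1 := by
    have : (2 : ℝ) ≤ n := by exact_mod_cast hn
    linarith
  refine EventuallySolvesTranslatorODE.tendsto_deviation ?_ hm
  filter_upwards [eventually_gt_atTop R] with r hr
  exact (hφ r hr.le).hasDerivAt (Ici_mem_nhds hr)

theorem translator_ode_second_order {n : ℕ} (hn : 2 ≤ n) (R : ℝ) (hR : 0 < R)
    (φ : ℝ → ℝ)
    (hφ : ∀ r ∈ Ici R,
      HasDerivWithinAt φ ((1 + φ r ^ 2) * (1 - ((n : ℝ) - 1) * φ r / r)) (Ici R) r) :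
    Tendsto (fun r => r * (φ r - r / ((n : ℝ) - 1))) atTop (nhds (-1)) :=
  translator_ode_second_order_general hn R φ hφ
end
end

section
/- Let n ≥ 2 be an integer, R > 0, and let φ : [R,∞) → ℝ be a solution of φ'(r) = (1+φ(r)²)(1 − (n−1)φ(r)/r). Then r³·(φ(r) − r/(n−1) + 1/r) → (n−4)(n−1) as r → ∞; equivalently φ(r) = r/(n−1) − 1/r + (n−1)(n−4)/r³ + o(r⁻³). -/
/-!
Write `m = n - 1` and `F(r, p) = (1 + p²)(1 - m p / r)`. The functions
`B_b(r) = r/m - 1/r + b/r³` satisfy `r² (B_b' - F(r, B_b)) → 3 - m + b/m`, so `B_b` is eventually a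
supersolution for `b > m(m - 3)` and a subsolution for `b < m(m - 3)`. On the region
`p ≥ 3r/(4m)`, which `φ` eventually enters, `F` is decreasing in `p` with slope at most `-r/(8m)`;
hence wherever a subsolution lies above a supersolution their difference `ψ` obeys `ψ' ≤ -2ψ`, and
so is `O(e^{-r})`. This traps `φ` between `B_b - C e^{-r}` and `B_{b'} + C e^{-r}` for every
`b < m(m - 3) < b'`, and multiplying by `r³` gives the limit.
-/

noncomputable section
open Set Filter

namespace TranslatorODE

open Real

section Comparison

variable {d d' : ℝ → ℝ}

theorem nonneg_of_deriv_pos_of_eq_zero {a : ℝ} (hd : ∀ r ≥ a, HasDerivAt d (d' r) r)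
    (hpos : ∀ r ≥ a, d r = 0 → 0 < d' r) (ha : 0 ≤ d a) : ∀ r ≥ a, 0 ≤ d r := by
  intro r hr
  have hcont : ContinuousOn d (Icc a r) := fun x hx => (hd x hx.1).continuousAt.continuousWithinAt
  exact image_le_of_deriv_right_lt_deriv_boundary' continuousOn_const
    (fun _ _ => hasDerivWithinAt_const _ _ 0) ha hcont
    (fun x hx => (hd x hx.1).hasDerivWithinAt) (fun x hx h0 => hpos x hx.1 h0.symm)
    ⟨hr, le_rfl⟩

theorem eventually_nonneg_of_deriv_ge {δ : ℝ} (hδ : 0 < δ)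
    (hd : ∀ᶠ r in atTop, HasDerivAt d (d' r) r)
    (hgrow : ∀ᶠ r in atTop, d r ≤ 0 → δ ≤ d' r) : ∀ᶠ r in atTop, 0 ≤ d r := by
  obtain ⟨a, ha⟩ := eventually_atTop.1 (hd.and hgrow)
  obtain ⟨r₀, hr₀a, hr₀⟩ : ∃ r₀ ≥ a, 0 ≤ d r₀ := by
    by_contra! hneg
    -- growing at rate at least `δ`, `d` has to reach `0` by time `a - d a / δ`
    set x := a - d a / δ
    have hax : a < x := by have := div_neg_of_neg_of_pos (hneg a le_rfl) hδ; linarith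
    obtain ⟨c, hc, hslope⟩ := exists_hasDerivAt_eq_slope d d' hax
      (fun y hy => (ha y hy.1).1.continuousAt.continuousWithinAt)
      (fun y hy => (ha y hy.1.le).1)
    have hδc := (ha c hc.1.le).2 (hneg c hc.1.le).le
    rw [hslope, le_div_iff₀ (sub_pos.2 hax)] at hδc
    have : δ * (x - a) = - d a := by simp only [x]; field_simp; ring
    linarith [hneg x hax.le]
  refine eventually_atTop.2 ⟨r₀, nonneg_of_deriv_pos_of_eq_zero
    (fun r hr => (ha r (hr₀a.trans hr)).1) (fun r hr h0 => ?_) hr₀⟩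
  exact hδ.trans_le ((ha r (hr₀a.trans hr)).2 h0.le)

theorem exists_le_mul_exp_neg {ψ ψ' : ℝ → ℝ} (hψ : ∀ᶠ r in atTop, HasDerivAt ψ (ψ' r) r)
    (hdecay : ∀ᶠ r in atTop, 0 ≤ ψ r → ψ' r ≤ -2 * ψ r) :
    ∃ C, ∀ᶠ r in atTop, ψ r ≤ C * exp (-r) := by
  obtain ⟨a, ha⟩ := eventually_atTop.1 (hψ.and hdecay)
  set C := (|ψ a| + 1) * exp a
  have hC : 0 < C := by positivity
  have hCa : C * exp (-a) = |ψ a| + 1 := by simp only [C, mul_assoc, ← exp_add]; simp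
  refine ⟨C, eventually_atTop.2 ⟨a, fun r hr => sub_nonneg.1 ?_⟩⟩
  refine nonneg_of_deriv_pos_of_eq_zero (d := fun r => C * exp (-r) - ψ r)
    (d' := fun r => -(C * exp (-r)) - ψ' r)
    (fun r hr => ?_) (fun r hr h0 => ?_) ?_ r hr
  · exact ((((hasDerivAt_neg' r).exp).const_mul C).sub (ha r hr).1).congr_deriv (by ring)
  · have hψr : ψ r = C * exp (-r) := (sub_eq_zero.1 h0).symm
    have := (ha r hr).2 (hψr ▸ by positivity)
    have : 0 < C * exp (-r) := by positivity
    linarith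
  · linarith [le_abs_self (ψ a)]

end Comparison

def translatorField (m r p : ℝ) : ℝ := (1 + p ^ 2) * (1 - m * p / r)

def barrier (m b r : ℝ) : ℝ := r / m - 1 / r + b / r ^ 3

variable {m : ℝ}

theorem mul_one_sub_le_translatorField {r p θ : ℝ} (hr : 0 < r) (hp : m * p ≤ θ * r) :
    (1 + p ^ 2) * (1 - θ) ≤ translatorField m r p := by
  refine mul_le_mul_of_nonneg_left ?_ (by positivity)
  have : m * p / r ≤ θ := by rwa [div_le_iff₀ hr]
  linarith

theorem translatorField_sub_le {r p q : ℝ} (hm : 0 < m) (hr : 0 < r) (hq : 3 * r / (4 * m) ≤ q)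
    (hqp : q ≤ p) :
    translatorField m r p - translatorField m r q ≤ -(r / (8 * m)) * (p - q) := by
  rw [div_le_iff₀ (by positivity)] at hq
  have hV : 0 ≤ 4 * (m * q) - 3 * r := by linarith
  have hU : 0 ≤ 4 * (m * p) - 3 * r := by nlinarith
  have hslope : p + q - m * (p ^ 2 + p * q + q ^ 2) / r - m / r ≤ -(r / (8 * m)) := by
    rw [← sub_nonneg]
    have e : -(r / (8 * m)) - (p + q - m * (p ^ 2 + p * q + q ^ 2) / r - m / r)
        = (8 * m ^ 2 * (p ^ 2 + p * q + q ^ 2) - 8 * m * r * (p + q) - r ^ 2 + 8 * m ^ 2)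
          / (8 * m * r) := by
      field_simp; ring
    rw [e]
    refine div_nonneg ?_ (by positivity)
    nlinarith [mul_nonneg hU hV, mul_nonneg hU hr.le, mul_nonneg hV hr.le]
  calc translatorField m r p - translatorField m r q
      = (p - q) * (p + q - m * (p ^ 2 + p * q + q ^ 2) / r - m / r) := by
        unfold translatorField; field_simp; ring
    _ ≤ (p - q) * -(r / (8 * m)) := mul_le_mul_of_nonneg_left hslope (sub_nonneg.2 hqp)
    _ = -(r / (8 * m)) * (p - q) := mul_comm _ _

theorem hasDerivAt_barrier (b : ℝ) {r : ℝ} (hr : r ≠ 0) :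
    HasDerivAt (barrier m b) (1 / m + 1 / r ^ 2 - 3 * b / r ^ 4) r := by
  have hinv := (hasDerivAt_inv hr).const_mul 1
  have hcube := ((hasDerivAt_pow 3 r).inv (pow_ne_zero 3 hr)).const_mul b
  refine ((((hasDerivAt_id r).div_const m).sub hinv).add hcube).congr_deriv ?_
    |>.congr_of_eventuallyEq (.of_forall fun x => ?_)
  · field_simp; ring
  · simp [barrier, div_eq_mul_inv]

theorem tendsto_barrier_defect (hm : m ≠ 0) (b : ℝ) :
    Tendsto (fun r => r ^ 2 *
        (1 / m + 1 / r ^ 2 - 3 * b / r ^ 4 - translatorField m r (barrier m b r)))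
      atTop (nhds (3 - m + b / m)) := by
  -- the left-hand side expanded in powers of `1 / r`
  set P : ℝ → ℝ := fun x => 3 - m + b / m + (b * m - 7 * b - m) * x ^ 2
    + (3 * b * m + 2 * b ^ 2) * x ^ 4 - 3 * b ^ 2 * m * x ^ 6 + b ^ 3 * m * x ^ 8
  have hP0 : P 0 = 3 - m + b / m := by simp [P]
  refine (hP0 ▸ ((by fun_prop : Continuous P).tendsto 0).comp tendsto_inv_atTop_zero).congr' ?_
  filter_upwards [eventually_ne_atTop 0] with r hr
  simp only [Function.comp_apply, P, translatorField, barrier]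
  field_simp
  ring

theorem eventually_three_quarters_le_barrier (hm : 0 < m) (b : ℝ) :
    ∀ᶠ r in atTop, 3 * r / (4 * m) ≤ barrier m b r := by
  have hlin : Tendsto (fun r => r / (4 * m)) atTop atTop :=
    tendsto_id.atTop_div_const (by positivity)
  have hsmall : Tendsto ((fun x : ℝ => -x + b * x ^ 3) ∘ fun r => r⁻¹) atTop (nhds 0) := by
    simpa using ((by fun_prop : Continuous fun x : ℝ => -x + b * x ^ 3).tendsto 0).comp
      tendsto_inv_atTop_zero
  filter_upwards [(hlin.atTop_add hsmall).eventually_ge_atTop 0] with r hr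
  have : barrier m b r - 3 * r / (4 * m) = r / (4 * m) + (-r⁻¹ + b * r⁻¹ ^ 3) := by
    simp only [barrier]; field_simp; ring
  simp only [Function.comp_apply] at hr
  linarith

theorem exists_sub_le_mul_exp_neg (hm : 0 < m) {u u' v v' : ℝ → ℝ}
    (hu : ∀ᶠ r in atTop, HasDerivAt u (u' r) r) (hv : ∀ᶠ r in atTop, HasDerivAt v (v' r) r)
    (hsub : ∀ᶠ r in atTop, u' r ≤ translatorField m r (u r))
    (hsuper : ∀ᶠ r in atTop, translatorField m r (v r) ≤ v' r)
    (hv_ge : ∀ᶠ r in atTop, 3 * r / (4 * m) ≤ v r) :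
    ∃ C, ∀ᶠ r in atTop, u r - v r ≤ C * exp (-r) := by
  refine exists_le_mul_exp_neg (ψ' := fun r => u' r - v' r)
    (hu.and hv |>.mono fun r h => h.1.sub h.2) ?_
  filter_upwards [hsub, hsuper, hv_ge, eventually_ge_atTop (16 * m)]
    with r hsub hsuper hv_ge hr h0
  have hr0 : 0 < r := by linarith
  have hmono := translatorField_sub_le hm hr0 hv_ge (sub_nonneg.1 h0)
  have : 2 ≤ r / (8 * m) := by rw [le_div_iff₀ (by positivity)]; linarith
  nlinarith

theorem eventually_translatorField_barrier_le (hm : 0 < m) {b : ℝ} (hb : m * (m - 3) < b) :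
    ∀ᶠ r in atTop, translatorField m r (barrier m b r) ≤ 1 / m + 1 / r ^ 2 - 3 * b / r ^ 4 := by
  have hpos : 0 < 3 - m + b / m := by
    have : 3 - m + b / m = (b - m * (m - 3)) / m := by field_simp; ring
    rw [this]; exact div_pos (by linarith) hm
  filter_upwards [(tendsto_barrier_defect hm.ne' b).eventually_const_lt hpos] with r hr
  nlinarith [sq_nonneg r]

theorem eventually_le_translatorField_barrier (hm : 0 < m) {b : ℝ} (hb : b < m * (m - 3)) :
    ∀ᶠ r in atTop, 1 / m + 1 / r ^ 2 - 3 * b / r ^ 4 ≤ translatorField m r (barrier m b r) := by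
  have hneg : 3 - m + b / m < 0 := by
    have : 3 - m + b / m = (b - m * (m - 3)) / m := by field_simp; ring
    rw [this]; exact div_neg_of_neg_of_pos (by linarith) hm
  filter_upwards [(tendsto_barrier_defect hm.ne' b).eventually_lt_const hneg] with r hr
  nlinarith [sq_nonneg r]

theorem cube_mul_sub_eq {r : ℝ} (hr : r ≠ 0) (b p : ℝ) :
    r ^ 3 * (p - r / m + 1 / r) = b + r ^ 3 * (p - barrier m b r) := by
  simp only [barrier]; field_simp; ring

theorem tendsto_mul_cube_mul_exp_neg (C : ℝ) :
    Tendsto (fun r => C * (r ^ 3 * exp (-r))) atTop (nhds 0) := by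
  simpa using (tendsto_pow_mul_exp_neg_atTop_nhds_zero 3).const_mul C

section Solution

variable {φ : ℝ → ℝ} (hφ : ∀ᶠ r in atTop, HasDerivAt φ (translatorField m r (φ r)) r)
include hφ

theorem eventually_three_quarters_le (hm : 1 ≤ m) : ∀ᶠ r in atTop, 3 * r / (4 * m) ≤ φ r := by
  have hm0 : 0 < m := by linarith
  have hquarter : ∀ᶠ r in atTop, r / (4 * m) ≤ φ r := by
    refine (eventually_nonneg_of_deriv_ge (d := fun r => φ r - r / (4 * m))
      (d' := fun r => translatorField m r (φ r) - 1 / (4 * m))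
      one_half_pos (hφ.mono fun r h => h.sub ((hasDerivAt_id' r).div_const _)) ?_).mono
      fun r h => sub_nonneg.1 h
    filter_upwards [eventually_gt_atTop 0] with r hr hle
    have hF := mul_one_sub_le_translatorField (m := m) (p := φ r) (θ := 1 / 4) hr
      (by rw [sub_nonpos, le_div_iff₀ (by positivity)] at hle; linarith)
    have : 1 / (4 * m) ≤ 1 / 4 := by gcongr; linarith
    nlinarith [sq_nonneg (φ r)]
  refine (eventually_nonneg_of_deriv_ge (d := fun r => φ r - 3 * r / (4 * m))
    (d' := fun r => translatorField m r (φ r) - 3 / (4 * m)) one_pos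
    (hφ.mono fun r h => h.sub (((hasDerivAt_id' r).const_mul 3).div_const _ |>.congr_deriv
      (by ring))) ?_).mono fun r h => sub_nonneg.1 h
  filter_upwards [hquarter, eventually_ge_atTop (16 * m)] with r hquarter hr hle
  have hr0 : 0 < r := by linarith
  have hF := mul_one_sub_le_translatorField (m := m) (p := φ r) (θ := 3 / 4) hr0
    (by rw [sub_nonpos, le_div_iff₀ (by positivity)] at hle; linarith)
  have h2 : 2 ≤ r / (8 * m) := by rw [le_div_iff₀ (by positivity)]; linarith
  have h4 : r / (4 * m) = 2 * (r / (8 * m)) := by field_simp; ring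
  have : 3 / (4 * m) ≤ 3 / 4 := by gcongr; linarith
  nlinarith [sq_nonneg (φ r)]

theorem eventually_cube_mul_lt (hm : 1 ≤ m) {b : ℝ} (hb : m * (m - 3) < b) :
    ∀ᶠ r in atTop, r ^ 3 * (φ r - r / m + 1 / r) < b := by
  have hm0 : 0 < m := by linarith
  obtain ⟨b₀, hb₀, hb₀b⟩ := exists_between hb
  obtain ⟨C, hC⟩ := exists_sub_le_mul_exp_neg hm0 hφ
    ((eventually_ne_atTop 0).mono fun r hr => hasDerivAt_barrier b₀ hr)
    (.of_forall fun _ => le_rfl)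
    (eventually_translatorField_barrier_le hm0 hb₀) (eventually_three_quarters_le_barrier hm0 b₀)
  filter_upwards [hC, (tendsto_mul_cube_mul_exp_neg C).eventually_lt_const (sub_pos.2 hb₀b),
    eventually_gt_atTop 0] with r hC hsmall hr
  calc r ^ 3 * (φ r - r / m + 1 / r) = b₀ + r ^ 3 * (φ r - barrier m b₀ r) :=
        cube_mul_sub_eq hr.ne' _ _
    _ ≤ b₀ + r ^ 3 * (C * exp (-r)) := by gcongr
    _ < b := by linarith

theorem eventually_lt_cube_mul (hm : 1 ≤ m) {b : ℝ} (hb : b < m * (m - 3)) :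
    ∀ᶠ r in atTop, b < r ^ 3 * (φ r - r / m + 1 / r) := by
  have hm0 : 0 < m := by linarith
  obtain ⟨b₀, hbb₀, hb₀⟩ := exists_between hb
  obtain ⟨C, hC⟩ := exists_sub_le_mul_exp_neg hm0
    ((eventually_ne_atTop 0).mono fun r hr => hasDerivAt_barrier b₀ hr) hφ
    (eventually_le_translatorField_barrier hm0 hb₀) (.of_forall fun _ => le_rfl)
    (eventually_three_quarters_le hφ hm)
  filter_upwards [hC, (tendsto_mul_cube_mul_exp_neg C).eventually_lt_const (sub_pos.2 hbb₀),
    eventually_gt_atTop 0] with r hC hsmall hr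
  calc b < b₀ - r ^ 3 * (C * exp (-r)) := by linarith
    _ ≤ b₀ + r ^ 3 * (φ r - barrier m b₀ r) := by nlinarith [pow_pos hr 3]
    _ = r ^ 3 * (φ r - r / m + 1 / r) := (cube_mul_sub_eq hr.ne' _ _).symm

end Solution

end TranslatorODE

theorem translator_ode_third_order_general {n : ℕ} (hn : 2 ≤ n) (R : ℝ)
    (φ : ℝ → ℝ)
    (hφ : ∀ r ∈ Ici R,
      HasDerivWithinAt φ ((1 + φ r ^ 2) * (1 - ((n : ℝ) - 1) * φ r / r)) (Ici R) r) :
    Tendsto (fun r => r ^ 3 * (φ r - r / ((n : ℝ) - 1) + 1 / r)) atTop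
      (nhds (((n : ℝ) - 4) * ((n : ℝ) - 1))) := by
  have hm : 1 ≤ (n : ℝ) - 1 := by
    have : (2 : ℝ) ≤ n := by exact_mod_cast hn
    linarith
  have hφ' : ∀ᶠ r in atTop, HasDerivAt φ (TranslatorODE.translatorField ((n : ℝ) - 1) r (φ r)) r :=
    (eventually_gt_atTop R).mono fun r hr => (hφ r (le_of_lt hr)).hasDerivAt (Ici_mem_nhds hr)
  have hlim : ((n : ℝ) - 4) * ((n : ℝ) - 1) = ((n : ℝ) - 1) * (((n : ℝ) - 1) - 3) := by ring
  rw [hlim]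
  exact tendsto_order.2 ⟨fun b hb => TranslatorODE.eventually_lt_cube_mul hφ' hm hb,
    fun b hb => TranslatorODE.eventually_cube_mul_lt hφ' hm hb⟩

theorem translator_ode_third_order {n : ℕ} (hn : 2 ≤ n) (R : ℝ) (hR : 0 < R)
    (φ : ℝ → ℝ)
    (hφ : ∀ r ∈ Ici R,
      HasDerivWithinAt φ ((1 + φ r ^ 2) * (1 - ((n : ℝ) - 1) * φ r / r)) (Ici R) r) :
    Tendsto (fun r => r ^ 3 * (φ r - r / ((n : ℝ) - 1) + 1 / r)) atTop
      (nhds (((n : ℝ) - 4) * ((n : ℝ) - 1))) :=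
  translator_ode_third_order_general hn R φ hφ
end
end

section
/- Let n ≥ 2 be an integer, R > 0, and let V : [R,∞) → ℝ be a smooth solution of the translator ODE V''(r)/(1+V'(r)²) + (n−1)V'(r)/r = 1. Then there exist a constant C_V ∈ ℝ and constants C > 0, r₀ ≥ R such that |V(r) − (r²/(2(n−1)) − ln r + C_V)| ≤ C/r for all r ≥ r₀; that is, V(r) = r²/(2(n−1)) − ln r + C_V + O(1/r) as r → ∞. -/
noncomputable section
open Set Filter

/-- Once a function with `f' < 0` whenever `f ≥ 0` is nonpositive, it stays nonpositive. -/
lemma persist_nonpos {f f' : ℝ → ℝ} {a t : ℝ} (hat : a ≤ t)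
    (hd : ∀ r ∈ Icc a t, HasDerivAt f (f' r) r)
    (h0 : f a ≤ 0) (hneg : ∀ r ∈ Icc a t, 0 ≤ f r → f' r < 0) : f t ≤ 0 := by
  by_contra hpos
  push_neg at hpos
  set S : Set ℝ := {r ∈ Icc a t | f r ≤ 0} with hS
  have hcont : ContinuousOn f (Icc a t) := fun r hr => ((hd r hr).continuousAt).continuousWithinAt
  have hSne : S.Nonempty := ⟨a, ⟨left_mem_Icc.2 hat, h0⟩⟩
  have hSclosed : IsClosed S := by
    have : S = Icc a t ∩ f ⁻¹' Iic 0 := by ext x; simp [hS, and_comm]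
    rw [this]
    exact hcont.preimage_isClosed_of_isClosed isClosed_Icc isClosed_Iic
  have hScomp : IsCompact S := isCompact_Icc.of_isClosed_subset hSclosed (fun x hx => hx.1)
  set s := sSup S with hsdef
  have hs : s ∈ S := hScomp.sSup_mem hSne
  have hsIcc : s ∈ Icc a t := hs.1
  have hfs : f s ≤ 0 := hs.2
  have hst : s < t := lt_of_le_of_ne hsIcc.2 (by intro h; rw [h] at hfs; linarith)
  have hposmid : ∀ r ∈ Ioc s t, 0 < f r := by
    intro r hr
    by_contra hfr
    push_neg at hfr
    have : r ∈ S := ⟨⟨hsIcc.1.trans hr.1.le, hr.2⟩, hfr⟩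
    exact absurd (le_csSup hScomp.bddAbove this) (not_le.2 hr.1)
  have hanti : StrictAntiOn f (Icc s t) := by
    apply strictAntiOn_of_deriv_neg (convex_Icc s t)
      (hcont.mono (Icc_subset_Icc hsIcc.1 le_rfl))
    intro x hx
    rw [interior_Icc] at hx
    have hxIcc : x ∈ Icc a t := ⟨hsIcc.1.trans hx.1.le, hx.2.le⟩
    rw [(hd x hxIcc).deriv]
    exact hneg x hxIcc (hposmid x ⟨hx.1, hx.2.le⟩).le
  have := hanti ⟨le_rfl, hst.le⟩ ⟨hst.le, le_rfl⟩ hst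
  linarith

/-- If `f' ≤ -δ/r` whenever `f ≥ 0`, then `f` is eventually nonpositive (and stays so). -/
lemma eventually_nonpos {f f' : ℝ → ℝ} {a δ : ℝ} (ha : 0 < a) (hδ : 0 < δ)
    (hd : ∀ r, a ≤ r → HasDerivAt f (f' r) r)
    (hc : ∀ r, a ≤ r → 0 ≤ f r → f' r ≤ -(δ / r)) :
    ∃ t, a ≤ t ∧ ∀ r, t ≤ r → f r ≤ 0 := by
  by_cases hex : ∃ t, a ≤ t ∧ f t ≤ 0
  · obtain ⟨t, hat, hft⟩ := hex
    refine ⟨t, hat, fun r hr => persist_nonpos hr (fun x hx => hd x (hat.trans hx.1)) hft ?_⟩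
    intro x hx h0
    have hxa : a ≤ x := hat.trans hx.1
    have hx0 : 0 < x := ha.trans_le hxa
    have := hc x hxa h0
    have : f' x ≤ -(δ / x) := this
    have hdx : 0 < δ / x := div_pos hδ hx0
    linarith
  · push_neg at hex
    exfalso
    have hfpos : ∀ r, a ≤ r → 0 < f r := hex
    set g : ℝ → ℝ := fun r => f r + δ * Real.log r with hg
    have hgd : ∀ r ∈ Ioi a, HasDerivAt g (f' r + δ * r⁻¹) r := by
      intro r hr
      exact (hd r (le_of_lt hr)).add (((Real.hasDerivAt_log (ne_of_gt (ha.trans hr))).const_mul δ))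
    have hganti : AntitoneOn g (Ici a) := by
      apply antitoneOn_of_deriv_nonpos (convex_Ici a)
      · intro r hr
        by_cases hra : a < r
        · exact ((hgd r hra).continuousAt).continuousWithinAt
        · have : r = a := le_antisymm (not_lt.1 hra) hr
          subst this
          have : ContinuousAt (fun x => f x) r := (hd r le_rfl).continuousAt
          exact (this.add ((Real.continuousAt_log (ne_of_gt ha)).const_mul δ)).continuousWithinAt
      · intro r hr
        rw [interior_Ici] at hr
        exact ((hgd r hr).differentiableAt).differentiableWithinAt
      · intro r hr
        rw [interior_Ici] at hr
        rw [(hgd r hr).deriv]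
        have hra : a ≤ r := hr.le
        have hr0 : 0 < r := ha.trans hr
        have h1 := hc r hra (hfpos r hra).le
        rw [div_eq_mul_inv] at h1
        linarith
    set t := a * Real.exp ((f a + 1) / δ) with ht
    have hta : a ≤ t := by
      rw [ht]
      nth_rewrite 1 [← mul_one a]
      apply mul_le_mul_of_nonneg_left _ ha.le
      apply Real.one_le_exp
      have := (hfpos a le_rfl)
      positivity
    have hgle : g t ≤ g a := hganti (le_refl a |> fun _ => Set.self_mem_Ici) (Set.mem_Ici.2 hta) hta
    have hlt : Real.log t = Real.log a + (f a + 1) / δ := by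
      rw [ht, Real.log_mul (ne_of_gt ha) (Real.exp_ne_zero _), Real.log_exp]
    have hft : f t ≤ f a - δ * ((f a + 1) / δ) := by
      have : f t + δ * Real.log t ≤ f a + δ * Real.log a := hgle
      rw [hlt] at this
      linarith [mul_le_mul_of_nonneg_left (le_refl ((f a + 1)/δ)) hδ.le]
    rw [mul_div_cancel₀ _ (ne_of_gt hδ)] at hft
    have := hfpos t hta
    linarith

lemma eventually_nonneg {f f' : ℝ → ℝ} {a δ : ℝ} (ha : 0 < a) (hδ : 0 < δ)
    (hd : ∀ r, a ≤ r → HasDerivAt f (f' r) r)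
    (hc : ∀ r, a ≤ r → f r ≤ 0 → δ / r ≤ f' r) :
    ∃ t, a ≤ t ∧ ∀ r, t ≤ r → 0 ≤ f r := by
  obtain ⟨t, hat, h⟩ := eventually_nonpos (f := fun r => -f r) (f' := fun r => -(f' r)) ha hδ
    (fun r hr => (hd r hr).neg)
    (fun r hr h0 => by
      have : f r ≤ 0 := by simpa using h0
      have := hc r hr this
      simp only [neg_le_neg_iff]
      linarith)
  exact ⟨t, hat, fun r hr => by have := h r hr; simpa using this⟩


lemma barrier_hasDerivAt (m c d : ℝ) {r : ℝ} (hm : m ≠ 0) (hr : r ≠ 0) :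
    HasDerivAt (fun x : ℝ => x/m + c/x + d/x^2) (1/m - c/r^2 - 2*d/r^3) r := by
  have h1 : HasDerivAt (fun x : ℝ => x/m) (1/m) r := by
    simpa using (hasDerivAt_id r).div_const m
  have h2 : HasDerivAt (fun x : ℝ => c/x) (c * -(r^2)⁻¹) r := by
    simpa [div_eq_mul_inv] using (hasDerivAt_inv hr).const_mul c
  have h3 : HasDerivAt (fun x : ℝ => d/x^2) (d * (-(2*r^1) / (r^2)^2)) r := by
    simpa [div_eq_mul_inv] using ((hasDerivAt_pow 2 r).inv (pow_ne_zero 2 hr)).const_mul d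
  refine ((h1.add h2).add h3).congr_deriv ?_
  field_simp
  ring

set_option maxHeartbeats 4000000 in
theorem translator_profile_asymptotics {n : ℕ} (hn : 2 ≤ n) (R : ℝ) (hR : 0 < R)
    (V : ℝ → ℝ) (hV : ContDiffOn ℝ (⊤ : ℕ∞) V (Ici R))
    (hODE : ∀ r ∈ Ici R,
      derivWithin (derivWithin V (Ici R)) (Ici R) r / (1 + (derivWithin V (Ici R) r) ^ 2)
        + ((n : ℝ) - 1) * derivWithin V (Ici R) r / r = 1) :
    ∃ C_V : ℝ, ∃ C > (0 : ℝ), ∃ r₀ ≥ R, ∀ r ≥ r₀,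
      |V r - (r ^ 2 / (2 * ((n : ℝ) - 1)) - Real.log r + C_V)| ≤ C / r := by
  have hm1 : (1:ℝ) ≤ (n:ℝ) - 1 := by
    have h2 : (2:ℝ) ≤ (n:ℝ) := by exact_mod_cast hn
    linarith
  set m : ℝ := (n:ℝ) - 1 with hmdef
  have hm0 : (0:ℝ) < m := by linarith
  clear_value m
  clear hmdef
  set φ := derivWithin V (Ici R) with hφdef
  set ψ := derivWithin φ (Ici R) with hψdef
  have hφC : ContDiffOn ℝ (⊤ : ℕ∞) φ (Ici R) := hV.derivWithin (uniqueDiffOn_Ici R) (by simp)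
  have hVd : DifferentiableOn ℝ V (Ici R) := hV.differentiableOn (by simp)
  have hφdiff : DifferentiableOn ℝ φ (Ici R) := hφC.differentiableOn (by simp)
  have hVat : ∀ r, R < r → HasDerivAt V (φ r) r := fun r hr =>
    ((hVd r (le_of_lt hr)).hasDerivWithinAt).hasDerivAt (Ici_mem_nhds hr)
  have hφat : ∀ r, R < r → HasDerivAt φ (ψ r) r := fun r hr =>
    ((hφdiff r (le_of_lt hr)).hasDerivWithinAt).hasDerivAt (Ici_mem_nhds hr)
  have hq : ∀ r, R < r → ψ r = (1 + φ r ^ 2) * (1 - m * φ r / r) := by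
    intro r hr
    have h := hODE r (le_of_lt hr)
    have h1 : (0:ℝ) < 1 + φ r ^ 2 := by positivity
    have hr0 : (0:ℝ) < r := hR.trans hr
    field_simp at h ⊢
    nlinarith [h]
  clear_value φ ψ
  clear hφdef hψdef
  -- base point
  set A₀ : ℝ := max (R+1) (1000*(m+1)^2) with hA₀def
  have hA₀R : R < A₀ := lt_of_lt_of_le (by linarith) (le_max_left _ _)
  have hA₀big : 1000*(m+1)^2 ≤ A₀ := le_max_right _ _
  have hA₀pos : (0:ℝ) < A₀ := lt_trans hR hA₀R
  -- Stage 0 : eventually φ r ≥ r/(4m)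
  obtain ⟨t₀, ht₀a, hS0'⟩ := eventually_nonpos (f := fun r => r/(4*m) + 0/r + 0/r^2 - φ r)
      (f' := fun r => (1/(4*m) - 0/r^2 - 2*0/r^3) - ψ r) hA₀pos (half_pos hA₀pos)
      (fun r hr => (barrier_hasDerivAt (4*m) 0 0 (by positivity)
          (ne_of_gt (hR.trans (hA₀R.trans_le hr)))).sub (hφat r (hA₀R.trans_le hr)))
      (by
        intro r hra h0
        have hr0 : (0:ℝ) < r := hA₀pos.trans_le hra
        have hrR : R < r := hA₀R.trans_le hra
        simp only [zero_div, add_zero, sub_zero, zero_mul, mul_zero] at h0 ⊢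
        rw [hq r hrR]
        set p := φ r with hp
        clear_value p
        have hple : p ≤ r/(4*m) := by linarith
        have h4 : m*p/r ≤ 1/4 := by
          rw [div_le_iff₀ hr0]
          have h1 : m*p ≤ m*(r/(4*m)) := mul_le_mul_of_nonneg_left hple hm0.le
          have h2 : m*(r/(4*m)) = r/4 := by field_simp
          linarith
        have hfac : (3:ℝ)/4 ≤ 1 - m*p/r := by linarith
        have hq34 : (3:ℝ)/4 ≤ (1+p^2)*(1-m*p/r) := by
          nlinarith [mul_nonneg (sq_nonneg p) (by linarith : (0:ℝ) ≤ 1 - m*p/r)]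
        have hδr : A₀/2/r ≤ 1/2 := by
          rw [div_le_iff₀ hr0]; linarith
        have hm4 : 1/(4*m) ≤ 1/4 := by
          rw [div_le_div_iff₀ (by positivity) (by norm_num)]; linarith
        linarith)
  have hS0 : ∀ r, t₀ ≤ r → r/(4*m) ≤ φ r := by
    intro r hr; have := hS0' r hr; simp only [zero_div, add_zero] at this; linarith
  have ht₀R : R < t₀ := hA₀R.trans_le ht₀a
  have ht₀0 : (0:ℝ) < t₀ := hR.trans ht₀R
  -- Stage 0.5 : eventually φ r ≤ r/m
  obtain ⟨t₁, ht₁a, hS05'⟩ := eventually_nonpos (f := fun r => φ r - (r/m + 0/r + 0/r^2))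
      (f' := fun r => ψ r - (1/m - 0/r^2 - 2*0/r^3)) ht₀0 (div_pos ht₀0 hm0)
      (fun r hr => (hφat r (ht₀R.trans_le hr)).sub
        (barrier_hasDerivAt m 0 0 hm0.ne' (ne_of_gt (hR.trans (ht₀R.trans_le hr)))))
      (by
        intro r hra h0
        have hr0 : (0:ℝ) < r := ht₀0.trans_le hra
        have hrR : R < r := ht₀R.trans_le hra
        simp only [zero_div, add_zero, sub_zero, zero_mul, mul_zero] at h0 ⊢
        rw [hq r hrR]
        set p := φ r with hp
        clear_value p
        have hple : r/m ≤ p := by linarith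
        have h1 : 1 - m*p/r ≤ 0 := by
          have h2 : r ≤ m*p := by
            have h4 := mul_le_mul_of_nonneg_left hple hm0.le
            have h3 : m*(r/m) = r := by field_simp
            rw [h3] at h4
            linarith
          have h5 : 1 ≤ m*p/r := by rw [le_div_iff₀ hr0]; linarith
          linarith
        have hqle : (1+p^2)*(1-m*p/r) ≤ 0 :=
          mul_nonpos_of_nonneg_of_nonpos (by positivity) h1
        have hδr : t₀/m/r ≤ 1/m := by
          rw [div_div, div_le_div_iff₀ (by positivity) hm0]
          nlinarith
        linarith)
  have hS05 : ∀ r, t₁ ≤ r → φ r ≤ r/m := by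
    intro r hr; have := hS05' r hr; simp only [zero_div, add_zero] at this; linarith
  have ht₁0 : (0:ℝ) < t₁ := ht₀0.trans_le ht₁a
  have ht₁R : R < t₁ := ht₀R.trans_le ht₁a
  have ht₁A : A₀ ≤ t₁ := ht₀a.trans ht₁a
  -- Stage 1 : eventually r/m - 32/r ≤ φ r
  obtain ⟨t₂, ht₂a, hS1'⟩ := eventually_nonpos (f := fun r => (r/m + (-32)/r + 0/r^2) - φ r)
      (f' := fun r => (1/m - (-32)/r^2 - 2*0/r^3) - ψ r) (δ := t₁/(2*m)) ht₁0 (by positivity)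
      (fun r hr => (barrier_hasDerivAt m (-32) 0 hm0.ne'
          (ne_of_gt (hR.trans (ht₁R.trans_le hr)))).sub (hφat r (ht₁R.trans_le hr)))
      (by
        intro r hra h0
        have hr0 : (0:ℝ) < r := ht₁0.trans_le hra
        have hrR : R < r := ht₁R.trans_le hra
        have hrbig : 1000*(m+1)^2 ≤ r := hA₀big.trans (ht₁A.trans hra)
        simp only [zero_div, add_zero, sub_zero, zero_mul, mul_zero, neg_div] at h0 ⊢
        rw [hq r hrR]
        set p := φ r with hp
        clear_value p
        have hple : p ≤ r/m - 32/r := by linarith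
        have hp4 : r/(4*m) ≤ p := by rw [hp]; exact hS0 r (ht₁a.trans hra)
        have hfac2 : 32*m/r^2 ≤ 1 - m*p/r := by
          have h1 : m*p ≤ m*(r/m - 32/r) := mul_le_mul_of_nonneg_left hple hm0.le
          have h2 : m*(r/m - 32/r)/r = 1 - 32*m/r^2 := by field_simp
          have h3 : m*p/r ≤ m*(r/m - 32/r)/r := by gcongr
          rw [h2] at h3
          linarith
        have hppos : (0:ℝ) ≤ r/(4*m) := by positivity
        have hfac1 : r^2/(16*m^2) ≤ 1 + p^2 := by
          have h1 : (r/(4*m))*(r/(4*m)) ≤ p*p :=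
            mul_le_mul hp4 hp4 hppos (hppos.trans hp4)
          have h2 : (r/(4*m))*(r/(4*m)) = r^2/(16*m^2) := by field_simp; ring
          have h4 : p*p = p^2 := by ring
          linarith
        have hQ : 2/m ≤ (1+p^2)*(1-m*p/r) := by
          have h1 : (2:ℝ)/m = (r^2/(16*m^2)) * (32*m/r^2) := by field_simp; ring
          rw [h1]
          exact mul_le_mul hfac1 hfac2 (by positivity) (by positivity)
        have h32 : 32/r^2 ≤ 1/(2*m) := by
          rw [div_le_div_iff₀ (by positivity) (by positivity)]
          nlinarith [mul_le_mul_of_nonneg_left hrbig hr0.le, sq_nonneg m, sq_nonneg (m+1)]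
        have hδr : t₁/(2*m)/r ≤ 1/(2*m) := by
          rw [div_div, div_le_div_iff₀ (by positivity) (by positivity)]
          nlinarith
        have hhalf : 1/(2*m) = 1/m/2 := by rw [div_div, mul_comm]
        have h2m : (2:ℝ)/m = 1/m + 1/m := by ring
        linarith)
  have hS1 : ∀ r, t₂ ≤ r → r/m - 32/r ≤ φ r := by
    intro r hr; have := hS1' r hr
    simp only [zero_div, add_zero, neg_div] at this; linarith
  have ht₂0 : (0:ℝ) < t₂ := ht₁0.trans_le ht₂a
  have ht₂R : R < t₂ := ht₁R.trans_le ht₂a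
  have ht₂A : A₀ ≤ t₂ := ht₁A.trans ht₂a
  have ht₂R : R < t₂ := ht₁R.trans_le ht₂a
  have ht₂A : A₀ ≤ t₂ := ht₁A.trans ht₂a
  -- Stage 2 upper : eventually φ r ≤ r/m - 1/r + 1/r^2
  obtain ⟨t₃, ht₃a, hS2u'⟩ := eventually_nonpos (f := fun r => φ r - (r/m + (-1)/r + 1/r^2))
      (f' := fun r => ψ r - (1/m - (-1)/r^2 - 2*1/r^3)) (δ := 1/(2*m)) ht₂0 (by positivity)
      (fun r hr => (hφat r (ht₂R.trans_le hr)).sub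
        (barrier_hasDerivAt m (-1) 1 hm0.ne' (ne_of_gt (hR.trans (ht₂R.trans_le hr)))))
      (by
        intro r hra h0
        have hr0 : (0:ℝ) < r := ht₂0.trans_le hra
        have hrR : R < r := ht₂R.trans_le hra
        have hrbig : 1000*(m+1)^2 ≤ r := hA₀big.trans (ht₂A.trans hra)
        have hr1 : (1:ℝ) ≤ r := by nlinarith [sq_nonneg (m+1), sq_nonneg m]
        have h0' : (0:ℝ) ≤ φ r - (r/m + (-1)/r + 1/r^2) := h0
        have e1 : (-1:ℝ)/r = -(1/r) := by ring
        have e2 : (-1:ℝ)/r^2 = -(1/r^2) := by ring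
        have e3 : 2*(1:ℝ)/r^3 = 2/r^3 := by ring
        have e4 : 2*(-1:ℝ)/r^3 = -(2/r^3) := by ring
        show ψ r - (1/m - (-1)/r^2 - 2*1/r^3) ≤ -(1/(2*m)/r)
        rw [hq r hrR]
        set p := φ r with hp
        clear_value p
        have hple : r/m - 1/r + 1/r^2 ≤ p := by linarith
        have hub : p ≤ r/m := by rw [hp]; exact hS05 r (ht₂a.trans hra)
        have hppos : (0:ℝ) ≤ p := by
          have hmr : 1/r ≤ r/m := by
            rw [div_le_div_iff₀ hr0 hm0]
            nlinarith [sq_nonneg (m+1)]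
          have : (0:ℝ) ≤ 1/r^2 := by positivity
          linarith
        have hfac2ub : 1 - m*p/r ≤ m/r^2 - m/r^3 := by
          have h1 : m*(r/m - 1/r + 1/r^2) ≤ m*p := mul_le_mul_of_nonneg_left hple hm0.le
          have h3 : m*(r/m - 1/r + 1/r^2)/r ≤ m*p/r := by gcongr
          have h2 : m*(r/m - 1/r + 1/r^2)/r = 1 - m/r^2 + m/r^3 := by field_simp
          rw [h2] at h3
          linarith
        have hfac2lb : (0:ℝ) ≤ 1 - m*p/r := by
          have h1 := mul_le_mul_of_nonneg_left hub hm0.le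
          have h2 : m*(r/m) = r := by field_simp
          rw [h2] at h1
          have h3 : m*p/r ≤ 1 := by rw [div_le_one hr0]; linarith
          linarith
        have hfac1 : 1 + p^2 ≤ 1 + r^2/m^2 := by
          have h1 : p*p ≤ (r/m)*(r/m) := mul_le_mul hub hub hppos (by positivity)
          have h2 : (r/m)*(r/m) = r^2/m^2 := by ring
          have h4 : p*p = p^2 := by ring
          linarith
        have hQub : (1+p^2)*(1-m*p/r) ≤ 1/m + m/r^2 - 1/(m*r) - m/r^3 := by
          have hmid : (1+p^2)*(1-m*p/r) ≤ (1+r^2/m^2)*(1-m*p/r) :=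
            mul_le_mul_of_nonneg_right hfac1 hfac2lb
          have h2 : (1+r^2/m^2)*(1-m*p/r) ≤ (1+r^2/m^2)*(m/r^2 - m/r^3) :=
            mul_le_mul_of_nonneg_left hfac2ub (by positivity)
          have heq : (1+r^2/m^2)*(m/r^2 - m/r^3) = 1/m + m/r^2 - 1/(m*r) - m/r^3 := by
            field_simp; ring
          linarith
        have hδeq : 1/(2*m)/r = 1/(m*r)/2 := by
          rw [div_div, div_div]; ring_nf
        have hk : m/r^2 + 2/r^3 ≤ 1/(m*r)/2 := by
          rw [div_div, div_add_div _ _ (by positivity) (by positivity),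
            div_le_div_iff₀ (by positivity) (by positivity)]
          have hint1 : r^4 * (1000*(m+1)^2) ≤ r^4 * r :=
            mul_le_mul_of_nonneg_left hrbig (by positivity)
          have hint2 : r^3 * 1 ≤ r^3 * r := mul_le_mul_of_nonneg_left hr1 (by positivity)
          nlinarith [sq_nonneg m, hm1, hint1, hint2, pow_pos hr0 3, pow_pos hr0 4]
        have hpos1 : (0:ℝ) ≤ m/r^3 := by positivity
        have hpos2 : (0:ℝ) ≤ 1/r^2 := by positivity
        linarith)
  have hS2u : ∀ r, t₃ ≤ r → φ r ≤ r/m - 1/r + 1/r^2 := by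
    intro r hr
    have h : φ r - (r/m + (-1)/r + 1/r^2) ≤ 0 := hS2u' r hr
    have e1 : (-1:ℝ)/r = -(1/r) := by ring
    linarith
  have ht₃0 : (0:ℝ) < t₃ := ht₂0.trans_le ht₃a
  have ht₃R : R < t₃ := ht₂R.trans_le ht₃a
  have ht₃A : A₀ ≤ t₃ := ht₂A.trans ht₃a
  -- Stage 2 lower : eventually r/m - 1/r - 1/r^2 ≤ φ r
  obtain ⟨t₄, ht₄a, hS2l'⟩ := eventually_nonpos (f := fun r => (r/m + (-1)/r + (-1)/r^2) - φ r)
      (f' := fun r => (1/m - (-1)/r^2 - 2*(-1)/r^3) - ψ r) (δ := 1/(2*m)) ht₃0 (by positivity)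
      (fun r hr => (barrier_hasDerivAt m (-1) (-1) hm0.ne'
          (ne_of_gt (hR.trans (ht₃R.trans_le hr)))).sub (hφat r (ht₃R.trans_le hr)))
      (by
        intro r hra h0
        have hr0 : (0:ℝ) < r := ht₃0.trans_le hra
        have hrR : R < r := ht₃R.trans_le hra
        have hrbig : 1000*(m+1)^2 ≤ r := hA₀big.trans (ht₃A.trans hra)
        have hr1 : (1:ℝ) ≤ r := by nlinarith [sq_nonneg (m+1), sq_nonneg m]
        have h0' : (0:ℝ) ≤ (r/m + (-1)/r + (-1)/r^2) - φ r := h0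
        have e1 : (-1:ℝ)/r = -(1/r) := by ring
        have e2 : (-1:ℝ)/r^2 = -(1/r^2) := by ring
        have e3 : 2*(1:ℝ)/r^3 = 2/r^3 := by ring
        have e4 : 2*(-1:ℝ)/r^3 = -(2/r^3) := by ring
        show (1/m - (-1)/r^2 - 2*(-1)/r^3) - ψ r ≤ -(1/(2*m)/r)
        rw [hq r hrR]
        set p := φ r with hp
        clear_value p
        have hple : p ≤ r/m - 1/r - 1/r^2 := by linarith
        have hlow : r/m - 32/r ≤ p := by rw [hp]; exact hS1 r (ht₃a.trans hra)
        have hplow0 : (0:ℝ) ≤ r/m - 32/r := by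
          rw [sub_nonneg, div_le_div_iff₀ hr0 hm0]
          nlinarith [sq_nonneg (m+1)]
        have hfac2 : m/r^2 + m/r^3 ≤ 1 - m*p/r := by
          have h1 : m*p ≤ m*(r/m - 1/r - 1/r^2) := mul_le_mul_of_nonneg_left hple hm0.le
          have h3 : m*p/r ≤ m*(r/m - 1/r - 1/r^2)/r := by gcongr
          have h2 : m*(r/m - 1/r - 1/r^2)/r = 1 - m/r^2 - m/r^3 := by field_simp
          rw [h2] at h3
          linarith
        have hfac1 : (r/m - 32/r)^2 ≤ 1 + p^2 := by
          have h1 : (r/m - 32/r)*(r/m - 32/r) ≤ p*p :=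
            mul_le_mul hlow hlow hplow0 (hplow0.trans hlow)
          have h2 : (r/m - 32/r)*(r/m - 32/r) = (r/m - 32/r)^2 := by ring
          have h4 : p*p = p^2 := by ring
          linarith
        have hQlb : 1/m + 1/(m*r) - 64/r^2 - 64/r^3 ≤ (1+p^2)*(1-m*p/r) := by
          have hmul : (r/m - 32/r)^2*(m/r^2 + m/r^3) ≤ (1+p^2)*(1-m*p/r) :=
            mul_le_mul hfac1 hfac2 (by positivity) (by positivity)
          have heq : (r/m - 32/r)^2*(m/r^2 + m/r^3)
              = 1/m + 1/(m*r) - 64/r^2 - 64/r^3 + 1024*m/r^4 + 1024*m/r^5 := by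
            field_simp; ring
          have hp4 : (0:ℝ) ≤ 1024*m/r^4 := by positivity
          have hp5 : (0:ℝ) ≤ 1024*m/r^5 := by positivity
          linarith
        have hδeq : 1/(2*m)/r = 1/(m*r)/2 := by
          rw [div_div, div_div]; ring_nf
        have hk : 65/r^2 + 66/r^3 ≤ 1/(m*r)/2 := by
          rw [div_div, div_add_div _ _ (by positivity) (by positivity),
            div_le_div_iff₀ (by positivity) (by positivity)]
          have hint1 : r^4 * (1000*(m+1)^2) ≤ r^4 * r :=
            mul_le_mul_of_nonneg_left hrbig (by positivity)
          have hint2 : r^3 * 1 ≤ r^3 * r := mul_le_mul_of_nonneg_left hr1 (by positivity)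
          nlinarith [sq_nonneg m, hm1, hint1, hint2, pow_pos hr0 3, pow_pos hr0 4]
        have f1 : (64:ℝ)/r^2 = 64*(1/r^2) := by ring
        have f2 : (65:ℝ)/r^2 = 65*(1/r^2) := by ring
        have f3 : (64:ℝ)/r^3 = 64*(1/r^3) := by ring
        have f4 : (66:ℝ)/r^3 = 66*(1/r^3) := by ring
        have f5 : (2:ℝ)/r^3 = 2*(1/r^3) := by ring
        linarith)
  have hS2l : ∀ r, t₄ ≤ r → r/m - 1/r - 1/r^2 ≤ φ r := by
    intro r hr
    have h : (r/m + (-1)/r + (-1)/r^2) - φ r ≤ 0 := hS2l' r hr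
    have e1 : (-1:ℝ)/r = -(1/r) := by ring
    have e2 : (-1:ℝ)/r^2 = -(1/r^2) := by ring
    linarith
  have ht₄0 : (0:ℝ) < t₄ := ht₃0.trans_le ht₄a
  have ht₄R : R < t₄ := ht₃R.trans_le ht₄a
  -- Integration step
  set Bf : ℝ → ℝ := fun x => V x - (x^2/(2*m) - Real.log x) - 1/x with hBfdef
  set Af : ℝ → ℝ := fun x => V x - (x^2/(2*m) - Real.log x) + 1/x with hAfdef
  have hWat : ∀ r, R < r → HasDerivAt (fun x => V x - (x^2/(2*m) - Real.log x))
      (φ r - (r/m - 1/r)) r := by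
    intro r hr
    have hr0 : (0:ℝ) < r := hR.trans hr
    have h1 : HasDerivAt (fun x : ℝ => x^2/(2*m)) (r/m) r := by
      have := (hasDerivAt_pow 2 r).div_const (2*m)
      refine this.congr_deriv ?_
      push_cast
      ring
    have h2 : HasDerivAt Real.log (1/r) r := by
      simpa [one_div] using Real.hasDerivAt_log (ne_of_gt hr0)
    exact (hVat r hr).sub (h1.sub h2)
  have hinv : ∀ r : ℝ, 0 < r → HasDerivAt (fun x : ℝ => 1/x) (-(1/r^2)) r := by
    intro r hr0
    simpa [one_div] using hasDerivAt_inv (ne_of_gt hr0)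
  have hBat : ∀ r, R < r → HasDerivAt Bf (φ r - (r/m - 1/r) + 1/r^2) r := by
    intro r hr
    have := (hWat r hr).sub (hinv r (hR.trans hr))
    exact this.congr_deriv (by ring)
  have hAat : ∀ r, R < r → HasDerivAt Af (φ r - (r/m - 1/r) - 1/r^2) r := by
    intro r hr
    have := (hWat r hr).add (hinv r (hR.trans hr))
    rw [hAfdef]
    refine this.congr_deriv ?_
    try ring
  have hBmono : MonotoneOn Bf (Ici t₄) := by
    apply monotoneOn_of_deriv_nonneg (convex_Ici _)
    · exact fun r hr => ((hBat r (ht₄R.trans_le hr)).continuousAt).continuousWithinAt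
    · intro r hr
      rw [interior_Ici] at hr
      exact ((hBat r (ht₄R.trans hr)).differentiableAt).differentiableWithinAt
    · intro r hr
      rw [interior_Ici] at hr
      rw [(hBat r (ht₄R.trans hr)).deriv]
      have := hS2l r hr.le
      linarith
  have hAanti : AntitoneOn Af (Ici t₄) := by
    apply antitoneOn_of_deriv_nonpos (convex_Ici _)
    · exact fun r hr => ((hAat r (ht₄R.trans_le hr)).continuousAt).continuousWithinAt
    · intro r hr
      rw [interior_Ici] at hr
      exact ((hAat r (ht₄R.trans hr)).differentiableAt).differentiableWithinAt
    · intro r hr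
      rw [interior_Ici] at hr
      rw [(hAat r (ht₄R.trans hr)).deriv]
      have := hS2u r (ht₄a.trans hr.le)
      linarith
  have hBA : ∀ r, r ∈ Ici t₄ → Bf r ≤ Af r := by
    intro r hr
    have hr0 : (0:ℝ) < r := ht₄0.trans_le hr
    have h1 : (0:ℝ) ≤ 1/r := by positivity
    show V r - (r^2/(2*m) - Real.log r) - 1/r ≤ V r - (r^2/(2*m) - Real.log r) + 1/r
    linarith
  have hne : (Bf '' Ici t₄).Nonempty := ⟨Bf t₄, mem_image_of_mem _ self_mem_Ici⟩
  have hbdd : BddAbove (Bf '' Ici t₄) := by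
    refine ⟨Af t₄, ?_⟩
    rintro x ⟨s, hs, rfl⟩
    exact (hBA s hs).trans (hAanti self_mem_Ici hs hs)
  set L := sSup (Bf '' Ici t₄) with hLdef
  refine ⟨L, 1, one_pos, t₄, ht₄R.le, ?_⟩
  intro r hr
  have hr0 : (0:ℝ) < r := ht₄0.trans_le hr
  have hBL : Bf r ≤ L := le_csSup hbdd (mem_image_of_mem _ hr)
  have hLA : L ≤ Af r := by
    apply csSup_le hne
    rintro x ⟨s, hs, rfl⟩
    rcases le_total s r with h | h
    · exact (hBmono hs hr h).trans (hBA r hr)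
    · exact (hBA s hs).trans (hAanti hr hs h)
  have hBL' : V r - (r^2/(2*m) - Real.log r) - 1/r ≤ L := hBL
  have hLA' : L ≤ V r - (r^2/(2*m) - Real.log r) + 1/r := hLA
  rw [abs_le]
  constructor
  · linarith
  · linarith
end
end
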